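/- arXiv:2109.13564 — 8 statements merged into one kernel-verified Lean document; each statement's English description precedes it below -/
import Mathlib

section
/- For integers m ≥ 1 and n ≥ 2, the graph Q(m,n) satisfies ABC(Q(m,n)) = (m(m−1)/(2(m+n−2)))·√(2(m+n−3)) + m(n/2 − 1)·√(2(n−2)) + m(n−1)·√((m+2n−5)/(n² + mn − m − 3n + 2)). -/
open Finset

/-- The atom-bond connectivity index `ABC(G)`. -/
noncomputable def abcIndex {V : Type*} [Fintype V] (G : SimpleGraph V) : ℝ := by
  classical
  exact ∑ e ∈ G.edgeFinset,
    Sym2.lift ⟨fun u v =>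
      Real.sqrt (((G.degree u : ℝ) + (G.degree v : ℝ) - 2) /
        ((G.degree u : ℝ) * (G.degree v : ℝ))),
      fun u v => congrArg Real.sqrt (by ring)⟩ e

/-- `nClose G u v` is the number of vertices reachable from `u` that are strictly
closer to `u` than to `v`. -/
noncomputable def nClose {V : Type*} (G : SimpleGraph V) (u v : V) : ℕ :=
  Nat.card {w : V | G.Reachable u w ∧ G.dist w u < G.dist w v}

/-- The Graovac–Ghorbani index `ABC_GG(G)`. -/
noncomputable def abcggIndex {V : Type*} [Fintype V] (G : SimpleGraph V) : ℝ := by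
  classical
  exact ∑ e ∈ G.edgeFinset,
    Sym2.lift ⟨fun u v =>
      Real.sqrt (((nClose G u v : ℝ) + (nClose G v u : ℝ) - 2) /
        ((nClose G u v : ℝ) * (nClose G v u : ℝ))),
      fun u v => congrArg Real.sqrt (by ring)⟩ e

/-- The degree of a vertex, as a real number. -/
noncomputable def degR {V : Type*} [Fintype V] (G : SimpleGraph V) (v : V) : ℝ := by
  classical
  exact (G.degree v : ℝ)

def QGraph (m n : ℕ) : SimpleGraph (Fin m × Fin n) :=
  SimpleGraph.fromRel (fun p q =>
    (p.1 = q.1 ∧ p.2 ≠ q.2) ∨ (p.2.1 = 0 ∧ q.2.1 = 0 ∧ p.1 ≠ q.1))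

/-! ### Auxiliary material -/

/-- The ABC weight function on real degree values. -/
noncomputable def Wfun (x y : ℝ) : ℝ := Real.sqrt ((x + y - 2) / (x * y))

lemma sum_edges_eq {V : Type*} [Fintype V] [DecidableEq V] (G : SimpleGraph V)
    [DecidableRel G.Adj] [Fintype G.edgeSet]
    (f : Sym2 V → ℝ) (w : V → V → ℝ) (hf : ∀ u v, f s(u, v) = w u v) :
    ∑ e ∈ G.edgeFinset, f e = (∑ u, ∑ v, if G.Adj u v then w u v else 0) / 2 := by
  have hmaps : ∀ p ∈ univ.filter (fun p : V × V => G.Adj p.1 p.2),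
      s(p.1, p.2) ∈ G.edgeFinset := by
    intro p hp
    simp only [mem_filter, mem_univ, true_and] at hp
    simpa [SimpleGraph.mem_edgeFinset] using hp
  have key : ∑ e ∈ G.edgeFinset, (2 : ℝ) * f e
      = ∑ p ∈ univ.filter (fun p : V × V => G.Adj p.1 p.2), f s(p.1, p.2) := by
    rw [← Finset.sum_fiberwise_of_maps_to hmaps (fun p => f s(p.1, p.2))]
    refine Finset.sum_congr rfl fun e he => ?_
    induction e using Sym2.ind with
    | _ x y =>
      have hxy : G.Adj x y := by simpa [SimpleGraph.mem_edgeFinset] using he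
      have hfil : (univ.filter (fun p : V × V => G.Adj p.1 p.2)).filter
          (fun p => s(p.1, p.2) = s(x, y)) = {(x, y), (y, x)} := by
        ext p
        simp only [mem_filter, mem_univ, true_and, mem_insert, mem_singleton,
          Sym2.eq_iff]
        constructor
        · rintro ⟨-, h | h⟩
          · left; simpa [Prod.ext_iff] using h
          · right; obtain ⟨p1, p2⟩ := p; simpa [Prod.ext_iff, and_comm] using h
        · rintro (rfl | rfl)
          · exact ⟨hxy, by simp⟩
          · exact ⟨hxy.symm, by simp⟩
      rw [hfil, Finset.sum_pair (by simp [hxy.ne, Prod.ext_iff] : ((x, y) : V × V) ≠ (y, x))]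
      have : s(y, x) = s(x, y) := Sym2.eq_swap
      rw [this]; ring
  have h2 : (2 : ℝ) * ∑ e ∈ G.edgeFinset, f e
      = ∑ u, ∑ v, if G.Adj u v then w u v else 0 := by
    rw [Finset.mul_sum, key]
    rw [Finset.sum_filter]
    rw [Fintype.sum_prod_type]
    refine Finset.sum_congr rfl fun u _ => Finset.sum_congr rfl fun v _ => ?_
    by_cases h : G.Adj u v <;> simp [h, hf]
  linarith

lemma adjQ {m n : ℕ} (p q : Fin m × Fin n) :
    (QGraph m n).Adj p q ↔
      (p.1 = q.1 ∧ p.2 ≠ q.2) ∨ ((p.2 : ℕ) = 0 ∧ (q.2 : ℕ) = 0 ∧ p.1 ≠ q.1) := by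
  rw [QGraph, SimpleGraph.fromRel_adj]
  constructor
  · rintro ⟨hne, (h | h) | (h | h)⟩
    · exact Or.inl h
    · exact Or.inr h
    · exact Or.inl ⟨h.1.symm, h.2.symm⟩
    · exact Or.inr ⟨h.2.1, h.1, h.2.2.symm⟩
  · intro h
    refine ⟨?_, Or.inl h⟩
    rintro rfl
    rcases h with h | h
    · exact h.2 rfl
    · exact h.2.2 rfl

lemma nbhdQ {m n : ℕ} (p : Fin m × Fin n) [Fintype ((QGraph m n).neighborSet p)] :
    (QGraph m n).neighborFinset p =
      if (p.2 : ℕ) = 0 then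
        (({p.1} : Finset (Fin m)) ×ˢ ({p.2}ᶜ : Finset (Fin n)))
          ∪ (({p.1}ᶜ : Finset (Fin m)) ×ˢ ({p.2} : Finset (Fin n)))
      else ({p.1} : Finset (Fin m)) ×ˢ ({p.2}ᶜ : Finset (Fin n)) := by
  ext q
  rw [SimpleGraph.mem_neighborFinset, adjQ]
  by_cases hp : (p.2 : ℕ) = 0
  · have hq0 : ∀ b : Fin n, (b : ℕ) = 0 ↔ b = p.2 := by
      intro b; rw [Fin.ext_iff, hp]
    simp only [hp, if_pos, Finset.mem_union, Finset.mem_product, Finset.mem_compl,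
      Finset.mem_singleton, true_and, hq0]
    constructor
    · rintro (⟨h1, h2⟩ | ⟨h1, h2⟩)
      · exact Or.inl ⟨h1.symm, fun h => h2 h.symm⟩
      · exact Or.inr ⟨fun h => h2 h.symm, h1⟩
    · rintro (⟨h1, h2⟩ | ⟨h1, h2⟩)
      · exact Or.inl ⟨h1.symm, fun h => h2 h.symm⟩
      · exact Or.inr ⟨h2, fun h => h1 h.symm⟩
  · rw [if_neg hp]
    simp only [Finset.mem_product, Finset.mem_compl, Finset.mem_singleton, hp,
      false_and, or_false]
    constructor
    · rintro ⟨h1, h2⟩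
      exact ⟨h1.symm, fun h => h2 h.symm⟩
    · rintro ⟨h1, h2⟩
      exact ⟨h1.symm, fun h => h2 h.symm⟩

lemma degQ {m n : ℕ} (p : Fin m × Fin n)
    [Fintype ((QGraph m n).neighborSet p)] :
    (QGraph m n).degree p = if (p.2 : ℕ) = 0 then (n - 1) + (m - 1) else n - 1 := by
  rw [SimpleGraph.degree, nbhdQ]
  by_cases hp : (p.2 : ℕ) = 0
  · rw [if_pos hp, if_pos hp, Finset.card_union_of_disjoint]
    · simp [Finset.card_compl]
    · rw [Finset.disjoint_left]
      rintro q hq1 hq2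
      rw [Finset.mem_product] at hq1 hq2
      exact (Finset.mem_compl.mp hq1.2) hq2.2
  · rw [if_neg hp, if_neg hp]
    simp [Finset.card_compl]

theorem abc_QGraph (m n : ℕ) (hm : 1 ≤ m) (hn : 2 ≤ n) :
    abcIndex (QGraph m n) =
      ((m : ℝ) * ((m : ℝ) - 1) / (2 * ((m : ℝ) + (n : ℝ) - 2))) *
          Real.sqrt (2 * ((m : ℝ) + (n : ℝ) - 3)) +
        (m : ℝ) * ((n : ℝ) / 2 - 1) * Real.sqrt (2 * ((n : ℝ) - 2)) +
        (m : ℝ) * ((n : ℝ) - 1) *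
          Real.sqrt (((m : ℝ) + 2 * (n : ℝ) - 5) /
            ((n : ℝ) ^ 2 + (m : ℝ) * (n : ℝ) - (m : ℝ) - 3 * (n : ℝ) + 2)) := by
  classical
  have hn0 : 0 < n := by omega
  set z : Fin n := ⟨0, hn0⟩ with hzdef
  have hmR : (1 : ℝ) ≤ (m : ℝ) := by exact_mod_cast hm
  have hnR : (2 : ℝ) ≤ (n : ℝ) := by exact_mod_cast hn
  -- real degrees
  have hdeg : ∀ q : Fin m × Fin n, ((QGraph m n).degree q : ℝ) =
      if (q.2 : ℕ) = 0 then (m : ℝ) + (n : ℝ) - 2 else (n : ℝ) - 1 := by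
    intro q
    rw [degQ q]
    by_cases hq : (q.2 : ℕ) = 0
    · rw [if_pos hq, if_pos hq]
      push_cast [Nat.cast_sub (by omega : 1 ≤ n), Nat.cast_sub hm]
      ring
    · rw [if_neg hq, if_neg hq]
      push_cast [Nat.cast_sub (by omega : 1 ≤ n)]
      ring
  unfold abcIndex
  rw [sum_edges_eq (QGraph m n) _
    (fun u v => Wfun ((QGraph m n).degree u : ℝ) ((QGraph m n).degree v : ℝ))
    (fun u v => rfl)]
  -- inner sums
  have hinner : ∀ p : Fin m × Fin n,
      (∑ q, if (QGraph m n).Adj p q then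
          Wfun ((QGraph m n).degree p : ℝ) ((QGraph m n).degree q : ℝ) else 0)
      = if (p.2 : ℕ) = 0 then
          ((n : ℝ) - 1) * Wfun ((m : ℝ) + n - 2) ((n : ℝ) - 1)
            + ((m : ℝ) - 1) * Wfun ((m : ℝ) + n - 2) ((m : ℝ) + n - 2)
        else
          Wfun ((n : ℝ) - 1) ((m : ℝ) + n - 2)
            + ((n : ℝ) - 2) * Wfun ((n : ℝ) - 1) ((n : ℝ) - 1) := by
    intro p
    rw [← Finset.sum_filter]
    have hfil : univ.filter ((QGraph m n).Adj p) = (QGraph m n).neighborFinset p := by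
      ext q; simp [SimpleGraph.mem_neighborFinset]
    rw [hfil, nbhdQ]
    by_cases hp : (p.2 : ℕ) = 0
    · rw [if_pos hp, if_pos hp]
      have hdisj : Disjoint (({p.1} : Finset (Fin m)) ×ˢ ({p.2}ᶜ : Finset (Fin n)))
          (({p.1}ᶜ : Finset (Fin m)) ×ˢ ({p.2} : Finset (Fin n))) := by
        rw [Finset.disjoint_left]
        rintro q hq1 hq2
        rw [Finset.mem_product] at hq1 hq2
        exact (Finset.mem_compl.mp hq1.2) hq2.2
      rw [Finset.sum_union hdisj, Finset.sum_product, Finset.sum_singleton,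
        Finset.sum_product]
      have h1 : ∑ y ∈ ({p.2}ᶜ : Finset (Fin n)),
          Wfun ((QGraph m n).degree p : ℝ) ((QGraph m n).degree (p.1, y) : ℝ)
          = ((n : ℝ) - 1) * Wfun ((m : ℝ) + n - 2) ((n : ℝ) - 1) := by
        have hc : ∀ y ∈ ({p.2}ᶜ : Finset (Fin n)),
            Wfun ((QGraph m n).degree p : ℝ) ((QGraph m n).degree (p.1, y) : ℝ)
            = Wfun ((m : ℝ) + n - 2) ((n : ℝ) - 1) := by
          intro y hy
          have hy' : y ≠ p.2 := by simpa using hy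
          have hyv : (y : ℕ) ≠ 0 := fun h => hy' (Fin.ext (by rw [h, hp]))
          rw [hdeg, hdeg]
          simp only [hp, if_pos, hyv, if_neg, not_false_iff]
        rw [Finset.sum_congr rfl hc, Finset.sum_const, Finset.card_compl]
        simp only [Fintype.card_fin, Finset.card_singleton, nsmul_eq_mul]
        rw [Nat.cast_sub (by omega : 1 ≤ n)]
        push_cast; ring
      have h2 : ∑ x ∈ ({p.1}ᶜ : Finset (Fin m)), ∑ y ∈ ({p.2} : Finset (Fin n)),
          Wfun ((QGraph m n).degree p : ℝ) ((QGraph m n).degree (x, y) : ℝ)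
          = ((m : ℝ) - 1) * Wfun ((m : ℝ) + n - 2) ((m : ℝ) + n - 2) := by
        have hc : ∀ x ∈ ({p.1}ᶜ : Finset (Fin m)), (∑ y ∈ ({p.2} : Finset (Fin n)),
            Wfun ((QGraph m n).degree p : ℝ) ((QGraph m n).degree (x, y) : ℝ))
            = Wfun ((m : ℝ) + n - 2) ((m : ℝ) + n - 2) := by
          intro x hx
          rw [Finset.sum_singleton, hdeg, hdeg]
          simp only [hp, if_pos]
        rw [Finset.sum_congr rfl hc, Finset.sum_const, Finset.card_compl]
        simp only [Fintype.card_fin, Finset.card_singleton, nsmul_eq_mul]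
        rw [Nat.cast_sub hm]
        push_cast; ring
      rw [h1, h2]
    · rw [if_neg hp, if_neg hp, Finset.sum_product, Finset.sum_singleton]
      have hzmem : z ∈ ({p.2}ᶜ : Finset (Fin n)) := by
        simp only [Finset.mem_compl, Finset.mem_singleton]
        intro h
        exact hp (by rw [← h])
      rw [← Finset.add_sum_erase _ _ hzmem]
      have h1 : Wfun ((QGraph m n).degree p : ℝ) ((QGraph m n).degree (p.1, z) : ℝ)
          = Wfun ((n : ℝ) - 1) ((m : ℝ) + n - 2) := by
        rw [hdeg, hdeg]
        simp only [hp, if_neg, not_false_iff]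
        norm_num [hzdef]
      have h2 : ∑ y ∈ (({p.2}ᶜ : Finset (Fin n)).erase z),
          Wfun ((QGraph m n).degree p : ℝ) ((QGraph m n).degree (p.1, y) : ℝ)
          = ((n : ℝ) - 2) * Wfun ((n : ℝ) - 1) ((n : ℝ) - 1) := by
        have hc : ∀ y ∈ (({p.2}ᶜ : Finset (Fin n)).erase z),
            Wfun ((QGraph m n).degree p : ℝ) ((QGraph m n).degree (p.1, y) : ℝ)
            = Wfun ((n : ℝ) - 1) ((n : ℝ) - 1) := by
          intro y hy
          have hy1 : y ≠ z := (Finset.mem_erase.mp hy).1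
          have hyv : (y : ℕ) ≠ 0 := fun h => hy1 (Fin.ext (by rw [h]))
          rw [hdeg, hdeg]
          simp only [hp, if_neg, hyv, not_false_iff]
        rw [Finset.sum_congr rfl hc, Finset.sum_const]
        rw [Finset.card_erase_of_mem hzmem, Finset.card_compl]
        simp only [Fintype.card_fin, Finset.card_singleton, nsmul_eq_mul]
        rw [Nat.cast_sub (by omega : 1 ≤ n - 1), Nat.cast_sub (by omega : 1 ≤ n)]
        push_cast; ring
      rw [h1, h2]
  -- assemble the double sum
  have houter : (∑ u : Fin m × Fin n, ∑ v : Fin m × Fin n,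
      if (QGraph m n).Adj u v then
        Wfun ((QGraph m n).degree u : ℝ) ((QGraph m n).degree v : ℝ) else 0)
      = (m : ℝ) * ((((n : ℝ) - 1) * Wfun ((m : ℝ) + n - 2) ((n : ℝ) - 1)
            + ((m : ℝ) - 1) * Wfun ((m : ℝ) + n - 2) ((m : ℝ) + n - 2))
          + ((n : ℝ) - 1) * (Wfun ((n : ℝ) - 1) ((m : ℝ) + n - 2)
            + ((n : ℝ) - 2) * Wfun ((n : ℝ) - 1) ((n : ℝ) - 1))) := by
    rw [Finset.sum_congr rfl (fun u _ => hinner u), Fintype.sum_prod_type]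
    have hcol : ∀ i : Fin m, (∑ c : Fin n, if ((c : Fin n) : ℕ) = 0 then
        (((n : ℝ) - 1) * Wfun ((m : ℝ) + n - 2) ((n : ℝ) - 1)
          + ((m : ℝ) - 1) * Wfun ((m : ℝ) + n - 2) ((m : ℝ) + n - 2))
        else (Wfun ((n : ℝ) - 1) ((m : ℝ) + n - 2)
          + ((n : ℝ) - 2) * Wfun ((n : ℝ) - 1) ((n : ℝ) - 1)))
        = (((n : ℝ) - 1) * Wfun ((m : ℝ) + n - 2) ((n : ℝ) - 1)
            + ((m : ℝ) - 1) * Wfun ((m : ℝ) + n - 2) ((m : ℝ) + n - 2))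
          + ((n : ℝ) - 1) * (Wfun ((n : ℝ) - 1) ((m : ℝ) + n - 2)
            + ((n : ℝ) - 2) * Wfun ((n : ℝ) - 1) ((n : ℝ) - 1)) := by
      intro i
      rw [Finset.sum_ite, Finset.sum_const, Finset.sum_const]
      have hf1 : univ.filter (fun c : Fin n => (c : ℕ) = 0) = {z} := by
        ext c
        simp [Fin.ext_iff, hzdef]
      have hf2 : univ.filter (fun c : Fin n => ¬ (c : ℕ) = 0) = ({z}ᶜ : Finset (Fin n)) := by
        ext c
        simp [Fin.ext_iff, hzdef]
      rw [hf1, hf2, Finset.card_singleton, Finset.card_compl]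
      simp only [Fintype.card_fin, Finset.card_singleton, one_smul, nsmul_eq_mul]
      rw [Nat.cast_sub (by omega : 1 ≤ n)]
      push_cast; ring
    rw [Finset.sum_congr rfl (fun i _ => hcol i), Finset.sum_const]
    simp only [Finset.card_univ, Fintype.card_fin, nsmul_eq_mul]
  rw [houter]
  -- final algebra
  have hA0 : (0 : ℝ) < (m : ℝ) + n - 2 := by linarith
  have hB0 : (0 : ℝ) < (n : ℝ) - 1 := by linarith
  have e1 : Wfun ((m : ℝ) + n - 2) ((m : ℝ) + n - 2)
      = Real.sqrt (2 * ((m : ℝ) + n - 3)) / ((m : ℝ) + n - 2) := by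
    rw [Wfun, show ((m : ℝ) + n - 2 + ((m : ℝ) + n - 2) - 2) / (((m : ℝ) + n - 2) * ((m : ℝ) + n - 2))
        = (2 * ((m : ℝ) + n - 3)) / ((m : ℝ) + n - 2) ^ 2 by ring]
    rw [Real.sqrt_div (by linarith), Real.sqrt_sq hA0.le]
  have e2 : Wfun ((n : ℝ) - 1) ((n : ℝ) - 1)
      = Real.sqrt (2 * ((n : ℝ) - 2)) / ((n : ℝ) - 1) := by
    rw [Wfun, show ((n : ℝ) - 1 + ((n : ℝ) - 1) - 2) / (((n : ℝ) - 1) * ((n : ℝ) - 1))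
        = (2 * ((n : ℝ) - 2)) / ((n : ℝ) - 1) ^ 2 by ring]
    rw [Real.sqrt_div (by linarith), Real.sqrt_sq hB0.le]
  have e3 : Wfun ((m : ℝ) + n - 2) ((n : ℝ) - 1)
      = Real.sqrt (((m : ℝ) + 2 * n - 5) /
          ((n : ℝ) ^ 2 + (m : ℝ) * n - m - 3 * n + 2)) := by
    rw [Wfun, show ((n : ℝ) ^ 2 + (m : ℝ) * n - m - 3 * n + 2)
        = ((m : ℝ) + n - 2) * ((n : ℝ) - 1) by ring,
      show ((m : ℝ) + n - 2 + ((n : ℝ) - 1) - 2) = ((m : ℝ) + 2 * n - 5) by ring]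
  have e4 : Wfun ((n : ℝ) - 1) ((m : ℝ) + n - 2)
      = Wfun ((m : ℝ) + n - 2) ((n : ℝ) - 1) := by
    rw [Wfun, Wfun, show ((n : ℝ) - 1 + ((m : ℝ) + n - 2) - 2) / (((n : ℝ) - 1) * ((m : ℝ) + n - 2))
        = ((m : ℝ) + n - 2 + ((n : ℝ) - 1) - 2) / (((m : ℝ) + n - 2) * ((n : ℝ) - 1)) by ring]
  rw [e1, e2, e4, e3]
  set s1 := Real.sqrt (2 * ((m : ℝ) + n - 3)) with hs1
  set s2 := Real.sqrt (2 * ((n : ℝ) - 2)) with hs2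
  set s3 := Real.sqrt (((m : ℝ) + 2 * n - 5) /
      ((n : ℝ) ^ 2 + (m : ℝ) * n - m - 3 * n + 2)) with hs3
  field_simp
  ring
end

section
/- For integers m ≥ 1 and n ≥ 2, the graph Q(m,n) satisfies ABC_GG(Q(m,n)) = (m(m−1)/(2n))·√(2n−2) + m(n−1)·√(n(m−1)/(n(m−1)+1)). -/
open Finset

/-! ### Auxiliary material -/

/-- The edge weight appearing in the Graovac–Ghorbani index. -/
noncomputable def qF {V : Type*} (G : SimpleGraph V) (u v : V) : ℝ :=
  Real.sqrt (((nClose G u v : ℝ) + (nClose G v u : ℝ) - 2) /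
    ((nClose G u v : ℝ) * (nClose G v u : ℝ)))

lemma qF_symm {V : Type*} (G : SimpleGraph V) : ∀ u v, qF G u v = qF G v u :=
  fun _ _ => congrArg Real.sqrt (by ring)

lemma two_mul_sum_edgeFinset {V : Type*} [Fintype V] (G : SimpleGraph V)
    [Fintype G.edgeSet] [DecidableRel G.Adj] (f : V → V → ℝ) (hf : ∀ u v, f u v = f v u) :
    2 * ∑ e ∈ G.edgeFinset, Sym2.lift ⟨f, hf⟩ e
      = ∑ p ∈ univ.filter (fun p : V × V => G.Adj p.1 p.2), f p.1 p.2 := by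
  classical
  have hmaps : ∀ p ∈ univ.filter (fun p : V × V => G.Adj p.1 p.2),
      s(p.1, p.2) ∈ G.edgeFinset := by
    rintro ⟨a, b⟩ hp
    simp only [mem_filter] at hp
    simpa [SimpleGraph.mem_edgeFinset] using hp.2
  rw [← Finset.sum_fiberwise_of_maps_to hmaps (fun p => f p.1 p.2), Finset.mul_sum]
  refine Finset.sum_congr rfl fun e he => ?_
  induction e with
  | h u v =>
    have hadj : G.Adj u v := by
      rwa [SimpleGraph.mem_edgeFinset, SimpleGraph.mem_edgeSet] at he
    have hfil : ((univ.filter fun p : V × V => G.Adj p.1 p.2).filter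
        fun p => s(p.1, p.2) = s(u, v)) = {(u, v), (v, u)} := by
      ext ⟨a, b⟩
      simp only [mem_filter, mem_univ, true_and, mem_insert, mem_singleton, Prod.mk.injEq]
      constructor
      · rintro ⟨-, hab⟩
        exact Sym2.eq_iff.mp hab
      · rintro (⟨rfl, rfl⟩ | ⟨rfl, rfl⟩)
        · exact ⟨hadj, rfl⟩
        · exact ⟨hadj.symm, Sym2.eq_swap⟩
    rw [hfil, Finset.sum_pair (by simp [hadj.ne] : ((u, v) : V × V) ≠ (v, u))]
    rw [Sym2.lift_mk]
    rw [hf v u]; ring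

lemma abcggIndex_eq_sum {V : Type*} [Fintype V] (G : SimpleGraph V)
    [Fintype G.edgeSet] [DecidableRel G.Adj] :
    2 * abcggIndex G = ∑ p ∈ univ.filter (fun p : V × V => G.Adj p.1 p.2), qF G p.1 p.2 := by
  classical
  have h0 : abcggIndex G = ∑ e ∈ G.edgeFinset, Sym2.lift ⟨qF G, qF_symm G⟩ e := by
    unfold abcggIndex qF
    congr 1
    ext e
    simp [SimpleGraph.mem_edgeFinset]
  rw [h0]
  exact two_mul_sum_edgeFinset G (qF G) (qF_symm G)

lemma qadj_iff {m n : ℕ} (p q : Fin m × Fin n) :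
    (QGraph m n).Adj p q ↔
      (p.1 = q.1 ∧ p.2 ≠ q.2) ∨ (p.2.1 = 0 ∧ q.2.1 = 0 ∧ p.1 ≠ q.1) := by
  rw [QGraph, SimpleGraph.fromRel_adj]
  constructor
  · rintro ⟨hne, (⟨h1, h2⟩ | ⟨h1, h2, h3⟩) | (⟨h1, h2⟩ | ⟨h1, h2, h3⟩)⟩
    · exact Or.inl ⟨h1, h2⟩
    · exact Or.inr ⟨h1, h2, h3⟩
    · exact Or.inl ⟨h1.symm, h2.symm⟩
    · exact Or.inr ⟨h2, h1, h3.symm⟩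
  · rintro (⟨h1, h2⟩ | ⟨h1, h2, h3⟩)
    · exact ⟨fun h => h2 (congrArg Prod.snd h), Or.inl (Or.inl ⟨h1, h2⟩)⟩
    · exact ⟨fun h => h3 (congrArg Prod.fst h), Or.inl (Or.inr ⟨h1, h2, h3⟩)⟩

lemma walk_lip {V : Type*} {G : SimpleGraph V} (g : V → ℕ)
    (hg : ∀ a b, G.Adj a b → g b ≤ g a + 1) :
    ∀ {p q : V} (w : G.Walk p q), g q ≤ g p + w.length := by
  intro p q w
  induction w with
  | nil => simp
  | @cons a b c h w ih =>
      have := hg a b h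
      simp only [SimpleGraph.Walk.length_cons]
      omega

lemma dist_lip {V : Type*} {G : SimpleGraph V} (g : V → ℕ)
    (hg : ∀ a b, G.Adj a b → g b ≤ g a + 1) {p q : V} (hr : G.Reachable p q) :
    g q ≤ g p + G.dist p q := by
  obtain ⟨w, hw⟩ := hr.exists_walk_length_eq_dist
  simpa [hw] using walk_lip g hg w

lemma natcard_set {V : Type*} [Fintype V] (P : V → Prop) [DecidablePred P] :
    Nat.card {w : V | P w} = (univ.filter P).card := by
  rw [Nat.card_coe_set_eq, Set.ncard_eq_toFinset_card', Set.toFinset_setOf]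

section
variable {m n : ℕ}

lemma qreach (hn : 2 ≤ n) (p q : Fin m × Fin n) : (QGraph m n).Reachable p q := by
  have hz : (0:ℕ) < n := by omega
  have step : ∀ r : Fin m × Fin n, (QGraph m n).Reachable r (r.1, ⟨0, hz⟩) := by
    intro r
    by_cases h : r.2 = ⟨0, hz⟩
    · rw [show r = (r.1, (⟨0, hz⟩ : Fin n)) from Prod.ext rfl h]
    · exact ((qadj_iff r (r.1, ⟨0, hz⟩)).mpr (Or.inl ⟨rfl, h⟩)).reachable
  have hub : (QGraph m n).Reachable (p.1, (⟨0, hz⟩ : Fin n)) (q.1, ⟨0, hz⟩) := by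
    by_cases h : p.1 = q.1
    · rw [h]
    · exact ((qadj_iff (p.1, ⟨0, hz⟩) (q.1, ⟨0, hz⟩)).mpr (Or.inr ⟨rfl, rfl, h⟩)).reachable
  exact ((step p).trans hub).trans (step q).symm

/-- The distance formula for `QGraph`. -/
lemma qdist (hn : 2 ≤ n) (p q : Fin m × Fin n) :
    (QGraph m n).dist p q =
      if p = q then 0 else if p.1 = q.1 then 1
      else if p.2.1 = 0 then (if q.2.1 = 0 then 1 else 2)
      else if q.2.1 = 0 then 2 else 3 := by
  have hz : (0:ℕ) < n := by omega
  by_cases hpq : p = q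
  · simp [hpq, SimpleGraph.dist_self]
  rw [if_neg hpq]
  by_cases hcol : p.1 = q.1
  · rw [if_pos hcol]
    have hadj : (QGraph m n).Adj p q := (qadj_iff p q).mpr
      (Or.inl ⟨hcol, fun h => hpq (Prod.ext hcol h)⟩)
    exact SimpleGraph.dist_eq_one_iff_adj.mpr hadj
  rw [if_neg hcol]
  by_cases hp0 : p.2.1 = 0
  · rw [if_pos hp0]
    by_cases hq0 : q.2.1 = 0
    · rw [if_pos hq0]
      exact SimpleGraph.dist_eq_one_iff_adj.mpr ((qadj_iff p q).mpr (Or.inr ⟨hp0, hq0, hcol⟩))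
    · rw [if_neg hq0]
      have h1 : (QGraph m n).Adj p (q.1, ⟨0, hz⟩) :=
        (qadj_iff p (q.1, ⟨0, hz⟩)).mpr (Or.inr ⟨hp0, rfl, hcol⟩)
      have h2 : (QGraph m n).Adj (q.1, (⟨0, hz⟩ : Fin n)) q :=
        (qadj_iff (q.1, ⟨0, hz⟩) q).mpr (Or.inl ⟨rfl, fun h => hq0 (by rw [← h])⟩)
      have hub : (QGraph m n).dist p q ≤ 2 := by
        have := SimpleGraph.dist_le (SimpleGraph.Walk.cons h1 h2.toWalk)
        simpa using this
      have hlb : (QGraph m n).dist p q ≠ 1 := by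
        intro h
        rcases (qadj_iff p q).mp (SimpleGraph.dist_eq_one_iff_adj.mp h) with ⟨h1, _⟩ | ⟨_, h2, _⟩
        · exact hcol h1
        · exact hq0 h2
      have h0 : (QGraph m n).dist p q ≠ 0 := by
        rw [SimpleGraph.dist_ne_zero_iff_ne_and_reachable]
        exact ⟨hpq, qreach hn p q⟩
      omega
  · rw [if_neg hp0]
    by_cases hq0 : q.2.1 = 0
    · rw [if_pos hq0]
      have h1 : (QGraph m n).Adj p (p.1, ⟨0, hz⟩) :=
        (qadj_iff p (p.1, ⟨0, hz⟩)).mpr (Or.inl ⟨rfl, fun h => hp0 (by rw [h])⟩)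
      have h2 : (QGraph m n).Adj (p.1, (⟨0, hz⟩ : Fin n)) q :=
        (qadj_iff (p.1, ⟨0, hz⟩) q).mpr (Or.inr ⟨rfl, hq0, hcol⟩)
      have hub : (QGraph m n).dist p q ≤ 2 := by
        have := SimpleGraph.dist_le (SimpleGraph.Walk.cons h1 h2.toWalk)
        simpa using this
      have hlb : (QGraph m n).dist p q ≠ 1 := by
        intro h
        rcases (qadj_iff p q).mp (SimpleGraph.dist_eq_one_iff_adj.mp h) with ⟨h1, _⟩ | ⟨h2, _, _⟩
        · exact hcol h1
        · exact hp0 h2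
      have h0 : (QGraph m n).dist p q ≠ 0 := by
        rw [SimpleGraph.dist_ne_zero_iff_ne_and_reachable]
        exact ⟨hpq, qreach hn p q⟩
      omega
    · rw [if_neg hq0]
      have h1 : (QGraph m n).Adj p (p.1, ⟨0, hz⟩) :=
        (qadj_iff p (p.1, ⟨0, hz⟩)).mpr (Or.inl ⟨rfl, fun h => hp0 (by rw [h])⟩)
      have h2 : (QGraph m n).Adj (p.1, (⟨0, hz⟩ : Fin n)) (q.1, ⟨0, hz⟩) :=
        (qadj_iff (p.1, ⟨0, hz⟩) (q.1, ⟨0, hz⟩)).mpr (Or.inr ⟨rfl, rfl, hcol⟩)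
      have h3 : (QGraph m n).Adj (q.1, (⟨0, hz⟩ : Fin n)) q :=
        (qadj_iff (q.1, ⟨0, hz⟩) q).mpr (Or.inl ⟨rfl, fun h => hq0 (by rw [← h])⟩)
      have hub : (QGraph m n).dist p q ≤ 3 := by
        have := SimpleGraph.dist_le (SimpleGraph.Walk.cons h1 (SimpleGraph.Walk.cons h2 h3.toWalk))
        simpa using this
      set g : Fin m × Fin n → ℕ := fun w =>
        if w.1 = q.1 then (if w.2 = q.2 then 3 else 2) else (if w.2.1 = 0 then 1 else 0) with hg
      have hlip : ∀ a b, (QGraph m n).Adj a b → g b ≤ g a + 1 := by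
        intro a b hab
        rcases (qadj_iff a b).mp hab with ⟨h1, h2⟩ | ⟨ha0, hb0, h1⟩
        · by_cases hj : a.1 = q.1
          · have hbj : b.1 = q.1 := h1 ▸ hj
            simp only [hg, if_pos hj, if_pos hbj]
            split_ifs <;> omega
          · have hbj : ¬ b.1 = q.1 := fun h => hj (h1 ▸ h)
            simp only [hg, if_neg hj, if_neg hbj]
            split_ifs <;> omega
        · have hbq : b.2 ≠ q.2 := fun h => hq0 (by rw [← h]; exact hb0)
          simp only [hg]
          by_cases hbj : b.1 = q.1 <;> by_cases haj : a.1 = q.1 <;>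
            simp only [if_pos, if_neg, hbj, haj, if_neg hbq, hb0, ha0] <;> split_ifs <;> omega
      have hlb : 3 ≤ (QGraph m n).dist p q := by
        have := dist_lip g hlip (qreach hn p q)
        have hgp : g p = 0 := by
          simp only [hg, if_neg hcol, if_neg hp0]
        have hgq : g q = 3 := by simp [hg]
        omega
      omega

variable (hn : 2 ≤ n)
include hn

lemma hzn : (0:ℕ) < n := by omega

lemma nClose_AA (i j : Fin m) (hij : i ≠ j) :
    nClose (QGraph m n) (i, (⟨0, hzn hn⟩ : Fin n)) (j, ⟨0, hzn hn⟩) = n := by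
  classical
  rw [nClose]
  have key : ∀ w : Fin m × Fin n,
      ((QGraph m n).Reachable (i, (⟨0, hzn hn⟩ : Fin n)) w ∧
        (QGraph m n).dist w (i, ⟨0, hzn hn⟩) < (QGraph m n).dist w (j, ⟨0, hzn hn⟩))
      ↔ w.1 = i := by
    intro w
    rw [qdist hn w (i, ⟨0, hzn hn⟩), qdist hn w (j, ⟨0, hzn hn⟩)]
    simp only [iff_true_intro (qreach hn (i, (⟨0, hzn hn⟩ : Fin n)) w), true_and]
    by_cases h1 : w = (i, (⟨0, hzn hn⟩ : Fin n)) <;>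
      by_cases h2 : w = (j, (⟨0, hzn hn⟩ : Fin n)) <;>
      by_cases h3 : w.1 = i <;> by_cases h4 : w.1 = j <;> by_cases h5 : w.2.1 = 0 <;>
      simp_all [Prod.ext_iff, Fin.ext_iff] <;> omega
  simp only [key]
  rw [natcard_set]
  have : (univ.filter fun w : Fin m × Fin n => w.1 = i) = {i} ×ˢ univ := by
    ext w
    simp only [Finset.mem_filter, Finset.mem_univ, true_and, Finset.mem_product,
      Finset.mem_singleton, and_true]
  rw [this, Finset.card_product]
  simp

lemma nClose_BB (i : Fin m) (a : Fin n) (ha : a.1 ≠ 0) :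
    nClose (QGraph m n) (i, (⟨0, hzn hn⟩ : Fin n)) (i, a) = (m - 1) * n + 1 := by
  classical
  rw [nClose]
  have key : ∀ w : Fin m × Fin n,
      ((QGraph m n).Reachable (i, (⟨0, hzn hn⟩ : Fin n)) w ∧
        (QGraph m n).dist w (i, ⟨0, hzn hn⟩) < (QGraph m n).dist w (i, a))
      ↔ (w = (i, (⟨0, hzn hn⟩ : Fin n)) ∨ ¬ w.1 = i) := by
    intro w
    rw [qdist hn w (i, ⟨0, hzn hn⟩), qdist hn w (i, a)]
    simp only [iff_true_intro (qreach hn (i, (⟨0, hzn hn⟩ : Fin n)) w), true_and]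
    by_cases h1 : w = (i, (⟨0, hzn hn⟩ : Fin n)) <;>
      by_cases h2 : w = (i, a) <;>
      by_cases h3 : w.1 = i <;> by_cases h5 : w.2.1 = 0 <;>
      simp_all [Prod.ext_iff, Fin.ext_iff] <;> omega
  simp only [key]
  rw [natcard_set]
  have : (univ.filter fun w : Fin m × Fin n => w = (i, (⟨0, hzn hn⟩ : Fin n)) ∨ ¬ w.1 = i)
      = insert (i, (⟨0, hzn hn⟩ : Fin n)) ((univ.erase i) ×ˢ univ) := by
    ext w
    simp only [Finset.mem_filter, Finset.mem_univ, true_and, Finset.mem_insert,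
      Finset.mem_product, Finset.mem_erase, and_true]
  rw [this, Finset.card_insert_of_notMem (by simp), Finset.card_product]
  simp [Finset.card_erase_of_mem]

lemma nClose_BB' (i : Fin m) (a : Fin n) (ha : a.1 ≠ 0) :
    nClose (QGraph m n) (i, a) (i, (⟨0, hzn hn⟩ : Fin n)) = 1 := by
  classical
  rw [nClose]
  have key : ∀ w : Fin m × Fin n,
      ((QGraph m n).Reachable (i, a) w ∧
        (QGraph m n).dist w (i, a) < (QGraph m n).dist w (i, ⟨0, hzn hn⟩))
      ↔ w = (i, a) := by
    intro w
    rw [qdist hn w (i, a), qdist hn w (i, ⟨0, hzn hn⟩)]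
    simp only [iff_true_intro (qreach hn (i, a) w), true_and]
    by_cases h1 : w = (i, (⟨0, hzn hn⟩ : Fin n)) <;>
      by_cases h2 : w = (i, a) <;>
      by_cases h3 : w.1 = i <;> by_cases h5 : w.2.1 = 0 <;>
      simp_all [Prod.ext_iff, Fin.ext_iff]
  simp only [key]
  rw [natcard_set]
  have : (univ.filter fun w : Fin m × Fin n => w = (i, a)) = {(i, a)} := by
    ext w; simp
  rw [this]; simp

lemma nClose_CC (i : Fin m) (a b : Fin n) (ha : a.1 ≠ 0) (hb : b.1 ≠ 0) (hab : a ≠ b) :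
    nClose (QGraph m n) (i, a) (i, b) = 1 := by
  classical
  rw [nClose]
  have key : ∀ w : Fin m × Fin n,
      ((QGraph m n).Reachable (i, a) w ∧
        (QGraph m n).dist w (i, a) < (QGraph m n).dist w (i, b))
      ↔ w = (i, a) := by
    intro w
    rw [qdist hn w (i, a), qdist hn w (i, b)]
    simp only [iff_true_intro (qreach hn (i, a) w), true_and]
    by_cases h1 : w = (i, a) <;> by_cases h2 : w = (i, b) <;>
      by_cases h3 : w.1 = i <;> by_cases h5 : w.2.1 = 0 <;>
      simp_all [Prod.ext_iff, Fin.ext_iff]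
  simp only [key]
  rw [natcard_set]
  have : (univ.filter fun w : Fin m × Fin n => w = (i, a)) = {(i, a)} := by
    ext w; simp
  rw [this]; simp

end

theorem abcgg_QGraph (m n : ℕ) (hm : 1 ≤ m) (hn : 2 ≤ n) :
    abcggIndex (QGraph m n) =
      ((m : ℝ) * ((m : ℝ) - 1) / (2 * (n : ℝ))) * Real.sqrt (2 * (n : ℝ) - 2) +
        (m : ℝ) * ((n : ℝ) - 1) *
          Real.sqrt ((n : ℝ) * ((m : ℝ) - 1) / ((n : ℝ) * ((m : ℝ) - 1) + 1)) := by
  classical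
  have hz : (0:ℕ) < n := by omega
  set G := QGraph m n with hG
  set s1 : ℝ := Real.sqrt (2 * (n : ℝ) - 2) with hs1
  set s2 : ℝ := Real.sqrt ((n : ℝ) * ((m : ℝ) - 1) / ((n : ℝ) * ((m : ℝ) - 1) + 1)) with hs2
  have hmR : (1:ℝ) ≤ (m:ℝ) := by exact_mod_cast hm
  have hnR : (2:ℝ) ≤ (n:ℝ) := by exact_mod_cast hn
  have hprod : (0:ℝ) ≤ ((m:ℝ) - 1) * (n:ℝ) := mul_nonneg (by linarith) (by linarith)
  have key := abcggIndex_eq_sum G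
  set V2 := (Fin m × Fin n) × (Fin m × Fin n) with hV2
  set P : Finset V2 := univ.filter (fun p : V2 => G.Adj p.1 p.2) with hP
  -- split off the different-column (hub-hub) pairs
  rw [← Finset.sum_filter_add_sum_filter_not P (fun p : V2 => p.1.1 = p.2.1)] at key
  -- split same-column pairs by whether the first vertex is the hub
  rw [← Finset.sum_filter_add_sum_filter_not (P.filter (fun p : V2 => p.1.1 = p.2.1))
      (fun p : V2 => p.1.2.1 = 0)] at key
  rw [← Finset.sum_filter_add_sum_filter_not ((P.filter (fun p : V2 => p.1.1 = p.2.1)).filter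
      (fun p : V2 => ¬ p.1.2.1 = 0)) (fun p : V2 => p.2.2.1 = 0)] at key
  -- the hub-hub class
  have hA : ∀ p ∈ P.filter (fun p : V2 => ¬ p.1.1 = p.2.1),
      qF G p.1 p.2 = Real.sqrt (((n:ℝ) + (n:ℝ) - 2) / ((n:ℝ) * (n:ℝ))) := by
    intro p hp
    rw [Finset.mem_filter, hP, Finset.mem_filter] at hp
    obtain ⟨⟨-, hadj⟩, hne⟩ := hp
    rcases (qadj_iff p.1 p.2).mp hadj with ⟨h1, -⟩ | ⟨h10, h20, -⟩
    · exact absurd h1 hne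
    · have e1 : p.1 = (p.1.1, (⟨0, hz⟩ : Fin n)) := Prod.ext rfl (Fin.ext h10)
      have e2 : p.2 = (p.2.1, (⟨0, hz⟩ : Fin n)) := Prod.ext rfl (Fin.ext h20)
      rw [qF, e1, e2, nClose_AA hn p.1.1 p.2.1 hne, nClose_AA hn p.2.1 p.1.1 (Ne.symm hne)]
  have hcardA : (P.filter (fun p : V2 => ¬ p.1.1 = p.2.1)).card = m * m - m := by
    have hb := Finset.card_bij' (s := P.filter (fun p : V2 => ¬ p.1.1 = p.2.1))
      (t := (univ : Finset (Fin m)).offDiag)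
      (i := fun p _ => (p.1.1, p.2.1))
      (j := fun q _ => ((q.1, (⟨0, hz⟩ : Fin n)), (q.2, (⟨0, hz⟩ : Fin n))))
      (hi := ?_) (hj := ?_) (left_inv := ?_) (right_inv := ?_)
    · rw [hb, Finset.offDiag_card, Finset.card_univ, Fintype.card_fin]
    · intro p hp
      rw [Finset.mem_filter] at hp
      exact Finset.mem_offDiag.mpr ⟨Finset.mem_univ _, Finset.mem_univ _, hp.2⟩
    · intro q hq
      obtain ⟨-, -, hne⟩ := Finset.mem_offDiag.mp hq
      rw [Finset.mem_filter, hP, Finset.mem_filter]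
      exact ⟨⟨Finset.mem_univ _,
        (qadj_iff ((q.1, (⟨0, hz⟩ : Fin n))) ((q.2, (⟨0, hz⟩ : Fin n)))).mpr
          (Or.inr ⟨rfl, rfl, hne⟩)⟩, hne⟩
    · intro p hp
      rw [Finset.mem_filter, hP, Finset.mem_filter] at hp
      obtain ⟨⟨-, hadj⟩, hne⟩ := hp
      rcases (qadj_iff p.1 p.2).mp hadj with ⟨h1, -⟩ | ⟨h10, h20, -⟩
      · exact absurd h1 hne
      · have e1 : p.1 = (p.1.1, (⟨0, hz⟩ : Fin n)) := Prod.ext rfl (Fin.ext h10)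
        have e2 : p.2 = (p.2.1, (⟨0, hz⟩ : Fin n)) := Prod.ext rfl (Fin.ext h20)
        dsimp only
        exact (Prod.ext e1 e2).symm
    · intro q hq
      rfl
  -- the class with first vertex the hub
  have hB1 : ∀ p ∈ (P.filter (fun p : V2 => p.1.1 = p.2.1)).filter (fun p : V2 => p.1.2.1 = 0),
      qF G p.1 p.2 = s2 := by
    intro p hp
    rw [Finset.mem_filter, Finset.mem_filter, hP, Finset.mem_filter] at hp
    obtain ⟨⟨⟨-, hadj⟩, hcol⟩, h10⟩ := hp
    have h2ne0 : p.2.2.1 ≠ 0 := by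
      rcases (qadj_iff p.1 p.2).mp hadj with ⟨-, hsnd⟩ | ⟨-, -, hne⟩
      · intro h
        exact hsnd (Fin.ext (h10.trans h.symm))
      · exact absurd hcol hne
    have e1 : p.1 = (p.1.1, (⟨0, hz⟩ : Fin n)) := Prod.ext rfl (Fin.ext h10)
    have e2 : p.2 = (p.1.1, p.2.2) := Prod.ext hcol.symm rfl
    rw [qF, e1, e2, nClose_BB hn p.1.1 p.2.2 h2ne0, nClose_BB' hn p.1.1 p.2.2 h2ne0, hs2]
    refine congrArg Real.sqrt ?_
    have hc : ((((m : ℕ) - 1) * n + 1 : ℕ) : ℝ) = ((m:ℝ) - 1) * (n:ℝ) + 1 := by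
      push_cast [Nat.cast_sub hm]
      ring
    rw [hc]
    rw [div_eq_div_iff (by push_cast; nlinarith [hprod]) (by nlinarith [hprod])]
    push_cast
    ring
  have hcardB1 : ((P.filter (fun p : V2 => p.1.1 = p.2.1)).filter
      (fun p : V2 => p.1.2.1 = 0)).card = m * (n - 1) := by
    have hb := Finset.card_bij' (s := (P.filter (fun p : V2 => p.1.1 = p.2.1)).filter
        (fun p : V2 => p.1.2.1 = 0))
      (t := (univ : Finset (Fin m)) ×ˢ (univ.filter (fun b : Fin n => b.1 ≠ 0)))
      (i := fun p _ => (p.1.1, p.2.2))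
      (j := fun q _ => ((q.1, (⟨0, hz⟩ : Fin n)), (q.1, q.2)))
      (hi := ?_) (hj := ?_) (left_inv := ?_) (right_inv := ?_)
    · rw [hb, Finset.card_product, Finset.card_univ, Fintype.card_fin]
      congr 1
      have : (univ.filter (fun b : Fin n => b.1 ≠ 0)) = univ.erase (⟨0, hz⟩ : Fin n) := by
        ext b
        simp [Fin.ext_iff]
      rw [this, Finset.card_erase_of_mem (Finset.mem_univ _), Finset.card_univ, Fintype.card_fin]
    · intro p hp
      rw [Finset.mem_filter, Finset.mem_filter, hP, Finset.mem_filter] at hp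
      obtain ⟨⟨⟨-, hadj⟩, hcol⟩, h10⟩ := hp
      have h2ne0 : p.2.2.1 ≠ 0 := by
        rcases (qadj_iff p.1 p.2).mp hadj with ⟨-, hsnd⟩ | ⟨-, -, hne⟩
        · intro h
          exact hsnd (Fin.ext (h10.trans h.symm))
        · exact absurd hcol hne
      exact Finset.mem_product.mpr ⟨Finset.mem_univ _, Finset.mem_filter.mpr ⟨Finset.mem_univ _, h2ne0⟩⟩
    · intro q hq
      obtain ⟨-, hq2⟩ := Finset.mem_product.mp hq
      have hbne : q.2.1 ≠ 0 := (Finset.mem_filter.mp hq2).2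
      rw [Finset.mem_filter, Finset.mem_filter, hP, Finset.mem_filter]
      refine ⟨⟨⟨Finset.mem_univ _, ?_⟩, rfl⟩, rfl⟩
      exact (qadj_iff ((q.1, (⟨0, hz⟩ : Fin n))) ((q.1, q.2))).mpr
        (Or.inl ⟨rfl, fun h => hbne (by rw [← h])⟩)
    · intro p hp
      rw [Finset.mem_filter, Finset.mem_filter, hP, Finset.mem_filter] at hp
      obtain ⟨⟨⟨-, hadj⟩, hcol⟩, h10⟩ := hp
      have e1 : p.1 = (p.1.1, (⟨0, hz⟩ : Fin n)) := Prod.ext rfl (Fin.ext h10)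
      have e2 : p.2 = (p.1.1, p.2.2) := Prod.ext hcol.symm rfl
      dsimp only
      exact (Prod.ext e1 e2).symm
    · intro q hq
      rfl
  -- the class with second vertex the hub
  have hB2 : ∀ p ∈ ((P.filter (fun p : V2 => p.1.1 = p.2.1)).filter
      (fun p : V2 => ¬ p.1.2.1 = 0)).filter (fun p : V2 => p.2.2.1 = 0),
      qF G p.1 p.2 = s2 := by
    intro p hp
    rw [Finset.mem_filter, Finset.mem_filter, Finset.mem_filter, hP, Finset.mem_filter] at hp
    obtain ⟨⟨⟨⟨-, hadj⟩, hcol⟩, h1ne⟩, h20⟩ := hp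
    have e1 : p.1 = (p.1.1, p.1.2) := rfl
    have e2 : p.2 = (p.1.1, (⟨0, hz⟩ : Fin n)) := Prod.ext hcol.symm (Fin.ext h20)
    rw [qF_symm, qF, e1, e2, nClose_BB hn p.1.1 p.1.2 h1ne, nClose_BB' hn p.1.1 p.1.2 h1ne, hs2]
    refine congrArg Real.sqrt ?_
    have hc : ((((m : ℕ) - 1) * n + 1 : ℕ) : ℝ) = ((m:ℝ) - 1) * (n:ℝ) + 1 := by
      push_cast [Nat.cast_sub hm]
      ring
    rw [hc]
    rw [div_eq_div_iff (by push_cast; nlinarith [hprod]) (by nlinarith [hprod])]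
    push_cast
    ring
  have hcardB2 : (((P.filter (fun p : V2 => p.1.1 = p.2.1)).filter
      (fun p : V2 => ¬ p.1.2.1 = 0)).filter (fun p : V2 => p.2.2.1 = 0)).card = m * (n - 1) := by
    have hb := Finset.card_bij' (s := ((P.filter (fun p : V2 => p.1.1 = p.2.1)).filter
        (fun p : V2 => ¬ p.1.2.1 = 0)).filter (fun p : V2 => p.2.2.1 = 0))
      (t := (univ : Finset (Fin m)) ×ˢ (univ.filter (fun b : Fin n => b.1 ≠ 0)))
      (i := fun p _ => (p.1.1, p.1.2))
      (j := fun q _ => ((q.1, q.2), (q.1, (⟨0, hz⟩ : Fin n))))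
      (hi := ?_) (hj := ?_) (left_inv := ?_) (right_inv := ?_)
    · rw [hb, Finset.card_product, Finset.card_univ, Fintype.card_fin]
      congr 1
      have : (univ.filter (fun b : Fin n => b.1 ≠ 0)) = univ.erase (⟨0, hz⟩ : Fin n) := by
        ext b
        simp [Fin.ext_iff]
      rw [this, Finset.card_erase_of_mem (Finset.mem_univ _), Finset.card_univ, Fintype.card_fin]
    · intro p hp
      rw [Finset.mem_filter, Finset.mem_filter, Finset.mem_filter, hP, Finset.mem_filter] at hp
      obtain ⟨⟨⟨⟨-, hadj⟩, hcol⟩, h1ne⟩, h20⟩ := hp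
      exact Finset.mem_product.mpr ⟨Finset.mem_univ _, Finset.mem_filter.mpr ⟨Finset.mem_univ _, h1ne⟩⟩
    · intro q hq
      obtain ⟨-, hq2⟩ := Finset.mem_product.mp hq
      have hbne : q.2.1 ≠ 0 := (Finset.mem_filter.mp hq2).2
      rw [Finset.mem_filter, Finset.mem_filter, Finset.mem_filter, hP, Finset.mem_filter]
      refine ⟨⟨⟨⟨Finset.mem_univ _, ?_⟩, rfl⟩, hbne⟩, rfl⟩
      exact (qadj_iff ((q.1, q.2)) ((q.1, (⟨0, hz⟩ : Fin n)))).mpr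
        (Or.inl ⟨rfl, fun h => hbne (by rw [h])⟩)
    · intro p hp
      rw [Finset.mem_filter, Finset.mem_filter, Finset.mem_filter, hP, Finset.mem_filter] at hp
      obtain ⟨⟨⟨⟨-, hadj⟩, hcol⟩, h1ne⟩, h20⟩ := hp
      have e2 : p.2 = (p.1.1, (⟨0, hz⟩ : Fin n)) := Prod.ext hcol.symm (Fin.ext h20)
      dsimp only
      rw [← e2]
    · intro q hq
      rfl
  -- the non-hub class contributes zero
  have hC : ∀ p ∈ ((P.filter (fun p : V2 => p.1.1 = p.2.1)).filter
      (fun p : V2 => ¬ p.1.2.1 = 0)).filter (fun p : V2 => ¬ p.2.2.1 = 0),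
      qF G p.1 p.2 = 0 := by
    intro p hp
    rw [Finset.mem_filter, Finset.mem_filter, Finset.mem_filter, hP, Finset.mem_filter] at hp
    obtain ⟨⟨⟨⟨-, hadj⟩, hcol⟩, h1ne⟩, h2ne⟩ := hp
    have hab : p.1.2 ≠ p.2.2 := by
      rcases (qadj_iff p.1 p.2).mp hadj with ⟨-, hsnd⟩ | ⟨h10, -, -⟩
      · exact hsnd
      · exact absurd h10 h1ne
    have e1 : p.1 = (p.1.1, p.1.2) := rfl
    have e2 : p.2 = (p.1.1, p.2.2) := Prod.ext hcol.symm rfl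
    rw [qF, e1, e2, nClose_CC hn p.1.1 p.1.2 p.2.2 h1ne h2ne hab,
      nClose_CC hn p.1.1 p.2.2 p.1.2 h2ne h1ne (Ne.symm hab)]
    norm_num
  -- assemble
  rw [Finset.sum_congr rfl hA, Finset.sum_congr rfl hB1, Finset.sum_congr rfl hB2,
    Finset.sum_congr rfl hC, Finset.sum_const, Finset.sum_const, Finset.sum_const,
    Finset.sum_const, hcardA, hcardB1, hcardB2] at key
  simp only [nsmul_eq_mul, smul_zero, add_zero] at key
  -- simplify the hub-hub constant
  have hn2 : (2:ℝ) ≤ (n:ℝ) := by exact_mod_cast hn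
  have hc1 : Real.sqrt (((n:ℝ) + (n:ℝ) - 2) / ((n:ℝ) * (n:ℝ))) = s1 / (n:ℝ) := by
    rw [show ((n:ℝ) + (n:ℝ) - 2) = 2 * (n:ℝ) - 2 by ring,
      Real.sqrt_div (by linarith) ((n:ℝ) * (n:ℝ)),
      Real.sqrt_mul_self (by linarith), hs1]
  rw [hc1] at key
  have hmm : ((m * m - m : ℕ) : ℝ) = (m:ℝ) * (m:ℝ) - (m:ℝ) := by
    rw [Nat.cast_sub (Nat.le_mul_of_pos_left m (by omega))]
    push_cast
    ring
  have hmn : ((m * (n - 1) : ℕ) : ℝ) = (m:ℝ) * ((n:ℝ) - 1) := by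
    rw [Nat.cast_mul, Nat.cast_sub (by omega : 1 ≤ n)]
    push_cast
    ring
  rw [hmm, hmn] at key
  have hn0 : (n:ℝ) ≠ 0 := by positivity
  have : abcggIndex G = (((m:ℝ) * (m:ℝ) - (m:ℝ)) * (s1 / (n:ℝ))
      + ((m:ℝ) * ((n:ℝ) - 1) * s2 + (m:ℝ) * ((n:ℝ) - 1) * s2)) / 2 := by
    linarith [key]
  rw [this]
  field_simp
  ring
end

section
/- Let n ≥ 2 and let G_1,…,G_n be connected finite simple graphs on pairwise disjoint vertex sets, each with at least two vertices, with chosen vertices x_i, y_i ∈ V(G_i), and let G be the link of G_1,…,G_n with respect to the pairs {x_i, y_i}. Then ABC_GG(G) < (|E(G)| − (n−1)) + Σ_{i=1}^{n} ABC_GG(G_i) + Σ_{i=1}^{n−1} √((|V(G)| − 2) / ((Σ_{t=1}^{i} |V(G_t)|)·(Σ_{t=i+1}^{n} |V(G_t)|))). -/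
open Finset

/-- The link of the graphs `G i` with respect to the vertex pairs `x i, y i`:
the disjoint union of the `G i` together with the edges `y i — x (i+1)`. -/
def linkGraph {k : ℕ} {V : Fin k → Type*} (G : ∀ i, SimpleGraph (V i)) (x y : ∀ i, V i) :
    SimpleGraph (Σ i, V i) :=
  SimpleGraph.fromRel (fun p q =>
    (∃ (i : Fin k) (a b : V i), p = ⟨i, a⟩ ∧ q = ⟨i, b⟩ ∧ (G i).Adj a b) ∨
    (∃ (i : Fin k) (h : i.1 + 1 < k),
      p = ⟨i, y i⟩ ∧ q = ⟨⟨i.1 + 1, h⟩, x ⟨i.1 + 1, h⟩⟩))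

def idxLow {k : ℕ} (j : Fin (k - 1)) : Fin k := ⟨j.1, by have := j.2; omega⟩
def idxHigh {k : ℕ} (j : Fin (k - 1)) : Fin k := ⟨j.1 + 1, by have := j.2; omega⟩


section AuxLink

variable {n : ℕ} {V : Fin n → Type*}
  (G : ∀ i, SimpleGraph (V i)) (x y : ∀ i, V i)

/-- vertex `y` of the `j`-th link edge -/
abbrev linkY (j : Fin (n-1)) : Σ i, V i := ⟨idxLow j, y (idxLow j)⟩
/-- vertex `x` of the `j`-th link edge -/
abbrev linkX (j : Fin (n-1)) : Σ i, V i := ⟨idxHigh j, x (idxHigh j)⟩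

lemma link_reach_copy (i : Fin n) {a b : V i} (h : (G i).Reachable a b) :
    (linkGraph G x y).Reachable ⟨i, a⟩ ⟨i, b⟩ := by
  let f : G i →g linkGraph G x y :=
    ⟨fun v => ⟨i, v⟩, by
      intro a b hab
      rw [linkGraph, SimpleGraph.fromRel_adj]
      refine ⟨by simp [hab.ne], Or.inl (Or.inl ⟨i, a, b, rfl, rfl, hab⟩)⟩⟩
  exact h.map f

lemma link_connected (hn : 2 ≤ n) (hconn : ∀ i, (G i).Connected) :
    (linkGraph G x y).Connected := by
  have hn0 : 0 < n := by omega
  have key : ∀ m (h : m < n),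
      (linkGraph G x y).Reachable ⟨⟨0, hn0⟩, x ⟨0, hn0⟩⟩ ⟨⟨m, h⟩, x ⟨m, h⟩⟩ := by
    intro m
    induction m with
    | zero => intro h; exact SimpleGraph.Reachable.refl _
    | succ m ih =>
      intro h
      have hm : m < n := by omega
      have r1 := ih hm
      have r2 : (linkGraph G x y).Reachable ⟨⟨m, hm⟩, x ⟨m, hm⟩⟩ ⟨⟨m, hm⟩, y ⟨m, hm⟩⟩ :=
        link_reach_copy G x y _ ((hconn _).preconnected _ _)
      have r3 : (linkGraph G x y).Adj ⟨⟨m, hm⟩, y ⟨m, hm⟩⟩ ⟨⟨m+1, h⟩, x ⟨m+1, h⟩⟩ := by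
        rw [linkGraph, SimpleGraph.fromRel_adj]
        refine ⟨?_, Or.inl (Or.inr ⟨⟨m, hm⟩, h, rfl, rfl⟩)⟩
        intro hEq
        have := congrArg (fun p => (Sigma.fst p).1) hEq
        simp at this
      exact r1.trans (r2.trans r3.reachable)
  have base : ∀ p : Σ i, V i, (linkGraph G x y).Reachable ⟨⟨0, hn0⟩, x ⟨0, hn0⟩⟩ p := by
    rintro ⟨i, a⟩
    have h1 := key i.1 i.2
    have h2 : (linkGraph G x y).Reachable ⟨⟨i.1, i.2⟩, x ⟨i.1, i.2⟩⟩ ⟨i, a⟩ :=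
      link_reach_copy G x y i ((hconn i).preconnected _ _)
    exact h1.trans h2
  haveI : Nonempty (Σ i, V i) := ⟨⟨⟨0, hn0⟩, x ⟨0, hn0⟩⟩⟩
  exact ⟨fun p q => (base p).symm.trans (base q)⟩

lemma link_cross_adj {j : Fin (n-1)} {p q : Σ i, V i} (h : (linkGraph G x y).Adj p q)
    (hp : p.1.1 ≤ j.1) (hq : ¬ q.1.1 ≤ j.1) :
    p = linkY y j ∧ q = linkX x j := by
  rw [linkGraph, SimpleGraph.fromRel_adj] at h
  obtain ⟨hne, h | h⟩ := h
  · rcases h with ⟨i, a, b, rfl, rfl, hab⟩ | ⟨i, hi, rfl, rfl⟩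
    · exact absurd hp hq
    · have hij : i.1 = j.1 := by simp only at hp hq; omega
      have : i = idxLow j := Fin.ext hij
      subst this
      exact ⟨rfl, rfl⟩
  · rcases h with ⟨i, a, b, rfl, rfl, hab⟩ | ⟨i, hi, rfl, rfl⟩
    · exact absurd hp hq
    · simp only at hp hq; omega

lemma link_walk_cross (hc : (linkGraph G x y).Connected) {j : Fin (n-1)} :
    ∀ {p q : Σ i, V i} (W : (linkGraph G x y).Walk p q),
      p.1.1 ≤ j.1 → ¬ q.1.1 ≤ j.1 →
      (linkGraph G x y).dist p (linkY y j) + 1 ≤ W.length := by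
  intro p q W
  induction W with
  | nil => exact fun hp hq => absurd hp hq
  | @cons a b c h W ih =>
    intro hp hq
    by_cases hb : b.1.1 ≤ j.1
    · have h1 := ih hb hq
      obtain ⟨Wb, hWb⟩ :=
        (hc.preconnected b (linkY y j)).exists_walk_length_eq_dist
      have h2 : (linkGraph G x y).dist a (linkY y j) ≤ (linkGraph G x y).dist b (linkY y j) + 1 := by
        have := SimpleGraph.dist_le (SimpleGraph.Walk.cons h Wb)
        simpa [SimpleGraph.Walk.length_cons, hWb] using this
      simp only [SimpleGraph.Walk.length_cons]
      omega
    · obtain ⟨ha, -⟩ := link_cross_adj G x y h hp hb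
      have h0 : (linkGraph G x y).dist a (linkY y j) = 0 := by
        rw [ha]; exact SimpleGraph.dist_self
      simp only [SimpleGraph.Walk.length_cons, h0]
      omega

lemma link_walk_cross' (hc : (linkGraph G x y).Connected) {j : Fin (n-1)} :
    ∀ {p q : Σ i, V i} (W : (linkGraph G x y).Walk p q),
      ¬ p.1.1 ≤ j.1 → q.1.1 ≤ j.1 →
      (linkGraph G x y).dist p (linkX x j) + 1 ≤ W.length := by
  intro p q W
  induction W with
  | nil => exact fun hp hq => absurd hq hp
  | @cons a b c h W ih =>
    intro hp hq
    by_cases hb : b.1.1 ≤ j.1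
    · obtain ⟨-, ha⟩ := link_cross_adj G x y h.symm hb hp
      have h0 : (linkGraph G x y).dist a (linkX x j) = 0 := by
        rw [ha]; exact SimpleGraph.dist_self
      simp only [SimpleGraph.Walk.length_cons, h0]
      omega
    · have h1 := ih hb hq
      obtain ⟨Wb, hWb⟩ :=
        (hc.preconnected b (linkX x j)).exists_walk_length_eq_dist
      have h2 : (linkGraph G x y).dist a (linkX x j) ≤ (linkGraph G x y).dist b (linkX x j) + 1 := by
        have := SimpleGraph.dist_le (SimpleGraph.Walk.cons h Wb)
        simpa [SimpleGraph.Walk.length_cons, hWb] using this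
      simp only [SimpleGraph.Walk.length_cons]
      omega

lemma link_nClose_left (hn : 2 ≤ n) (hconn : ∀ i, (G i).Connected) (j : Fin (n-1)) :
    nClose (linkGraph G x y) (linkY y j) (linkX x j)
      = Nat.card {w : Σ i, V i | w.1.1 ≤ j.1} := by
  have hc := link_connected G x y hn hconn
  have hset : {w : Σ i, V i |
        (linkGraph G x y).Reachable (linkY y j) w ∧
        (linkGraph G x y).dist w (linkY y j) < (linkGraph G x y).dist w (linkX x j)}
      = {w : Σ i, V i | w.1.1 ≤ j.1} := by
    ext w
    simp only [Set.mem_setOf_eq]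
    constructor
    · rintro ⟨hr, hd⟩
      by_contra hw
      obtain ⟨W, hW⟩ := hr.symm.exists_walk_length_eq_dist
      have := link_walk_cross' G x y hc W hw (by simp [linkY, idxLow])
      rw [hW] at this
      omega
    · intro hw
      refine ⟨hc.preconnected _ _, ?_⟩
      obtain ⟨W, hW⟩ := (hc.preconnected w (linkX x j)).exists_walk_length_eq_dist
      have := link_walk_cross G x y hc W hw (by simp [linkX, idxHigh])
      rw [hW] at this
      omega
  rw [nClose, hset]

lemma link_nClose_right (hn : 2 ≤ n) (hconn : ∀ i, (G i).Connected) (j : Fin (n-1)) :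
    nClose (linkGraph G x y) (linkX x j) (linkY y j)
      = Nat.card {w : Σ i, V i | ¬ w.1.1 ≤ j.1} := by
  have hc := link_connected G x y hn hconn
  have hset : {w : Σ i, V i |
        (linkGraph G x y).Reachable (linkX x j) w ∧
        (linkGraph G x y).dist w (linkX x j) < (linkGraph G x y).dist w (linkY y j)}
      = {w : Σ i, V i | ¬ w.1.1 ≤ j.1} := by
    ext w
    simp only [Set.mem_setOf_eq]
    constructor
    · rintro ⟨hr, hd⟩
      intro hw
      obtain ⟨W, hW⟩ := hr.symm.exists_walk_length_eq_dist
      have := link_walk_cross G x y hc W hw (by simp [linkX, idxHigh])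
      rw [hW] at this
      omega
    · intro hw
      refine ⟨hc.preconnected _ _, ?_⟩
      obtain ⟨W, hW⟩ := (hc.preconnected w (linkY y j)).exists_walk_length_eq_dist
      have := link_walk_cross' G x y hc W hw (by simp [linkY, idxLow])
      rw [hW] at this
      omega
  rw [nClose, hset]

lemma card_sideL [∀ i, Fintype (V i)] (j : Fin (n-1)) :
    Nat.card {w : Σ i, V i | w.1.1 ≤ j.1}
      = ∑ t ∈ Finset.univ.filter (fun t : Fin n => t.1 ≤ j.1), Fintype.card (V t) := by
  classical
  have e := Equiv.subtypeSigmaEquiv V (fun i : Fin n => i.1 ≤ j.1)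
  refine Eq.trans (Nat.card_congr e) ?_
  rw [Nat.card_eq_fintype_card, Fintype.card_sigma]
  exact (Finset.sum_subtype (Finset.univ.filter fun t : Fin n => t.1 ≤ j.1)
    (fun t => by simp) (fun t => Fintype.card (V t))).symm

lemma card_sideR [∀ i, Fintype (V i)] (j : Fin (n-1)) :
    Nat.card {w : Σ i, V i | ¬ w.1.1 ≤ j.1}
      = ∑ t ∈ Finset.univ.filter (fun t : Fin n => j.1 < t.1), Fintype.card (V t) := by
  classical
  have e := Equiv.subtypeSigmaEquiv V (fun i : Fin n => ¬ i.1 ≤ j.1)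
  refine Eq.trans (Nat.card_congr e) ?_
  rw [Nat.card_eq_fintype_card, Fintype.card_sigma]
  rw [show (Finset.univ.filter (fun t : Fin n => j.1 < t.1))
      = Finset.univ.filter (fun t : Fin n => ¬ t.1 ≤ j.1) by
    apply Finset.filter_congr; intro t _; omega]
  exact (Finset.sum_subtype (Finset.univ.filter fun t : Fin n => ¬ t.1 ≤ j.1)
    (fun t => by simp) (fun t => Fintype.card (V t))).symm

lemma sum_sides [∀ i, Fintype (V i)] (j : Fin (n-1)) :
    (∑ t ∈ Finset.univ.filter (fun t : Fin n => t.1 ≤ j.1), Fintype.card (V t)) +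
    (∑ t ∈ Finset.univ.filter (fun t : Fin n => j.1 < t.1), Fintype.card (V t))
      = Fintype.card (Σ i, V i) := by
  classical
  rw [Fintype.card_sigma]
  rw [show Finset.univ.filter (fun t : Fin n => j.1 < t.1)
      = Finset.univ.filter (fun t : Fin n => ¬ t.1 ≤ j.1) from
    Finset.filter_congr (fun t _ => by simp)]
  exact Finset.sum_filter_add_sum_filter_not _ _ _

lemma link_edge_adj (j : Fin (n-1)) : (linkGraph G x y).Adj (linkY y j) (linkX x j) := by
  have hj : j.1 + 1 < n := by have := j.2; omega
  rw [linkGraph, SimpleGraph.fromRel_adj]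
  refine ⟨?_, Or.inl (Or.inr ⟨idxLow j, hj, rfl, rfl⟩)⟩
  intro hEq
  have := congrArg (fun p => (Sigma.fst p).1) hEq
  simp [idxLow, idxHigh] at this

end AuxLink

lemma one_le_nClose {V : Type*} [Fintype V] {G : SimpleGraph V} {u v : V} (h : G.Adj u v) :
    1 ≤ nClose G u v := by
  rw [nClose]
  have hmem : u ∈ {w : V | G.Reachable u w ∧ G.dist w u < G.dist w v} :=
    ⟨SimpleGraph.Reachable.refl u, by
      rw [SimpleGraph.dist_self]
      exact h.reachable.pos_dist_of_ne h.ne⟩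
  haveI : Nonempty {w : V | G.Reachable u w ∧ G.dist w u < G.dist w v} := ⟨⟨u, hmem⟩⟩
  exact Nat.card_pos

lemma lift_term_lt_one {V : Type*} [Fintype V] {G : SimpleGraph V} {u v : V} (h : G.Adj u v) :
    Real.sqrt (((nClose G u v : ℝ) + (nClose G v u : ℝ) - 2) /
      ((nClose G u v : ℝ) * (nClose G v u : ℝ))) < 1 := by
  have ha' : (1:ℝ) ≤ (nClose G u v : ℝ) := by exact_mod_cast one_le_nClose h
  have hb' : (1:ℝ) ≤ (nClose G v u : ℝ) := by exact_mod_cast one_le_nClose h.symm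
  refine (Real.sqrt_lt' zero_lt_one).2 ?_
  rw [one_pow, div_lt_one (by nlinarith)]
  nlinarith

lemma abcggIndex_eq_sum_s11 {V : Type*} [Fintype V] (G : SimpleGraph V) [Fintype G.edgeSet] :
    abcggIndex G = ∑ e ∈ G.edgeFinset,
      Sym2.lift ⟨fun u v =>
        Real.sqrt (((nClose G u v : ℝ) + (nClose G v u : ℝ) - 2) /
          ((nClose G u v : ℝ) * (nClose G v u : ℝ))),
        fun u v => congrArg Real.sqrt (by ring)⟩ e := by
  unfold abcggIndex
  congr!

lemma abcggIndex_nonneg {V : Type*} [Fintype V] (G : SimpleGraph V) : 0 ≤ abcggIndex G := by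
  unfold abcggIndex
  apply Finset.sum_nonneg
  intro e he
  induction e using Sym2.ind with
  | _ u v => rw [Sym2.lift_mk]; exact Real.sqrt_nonneg _

theorem abcgg_linkGraph_upper {n : ℕ} (hn : 2 ≤ n) {V : Fin n → Type*} [∀ i, Fintype (V i)]
    (G : ∀ i, SimpleGraph (V i)) (x y : ∀ i, V i)
    (hconn : ∀ i, (G i).Connected) (hcard : ∀ i, 2 ≤ Fintype.card (V i)) :
    abcggIndex (linkGraph G x y) <
      ((Nat.card (linkGraph G x y).edgeSet : ℝ) - ((n : ℝ) - 1)) +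
      (∑ i, abcggIndex (G i)) +
      ∑ j : Fin (n - 1),
        Real.sqrt (((Fintype.card (Σ i, V i) : ℝ) - 2) /
          ((∑ t ∈ Finset.univ.filter (fun t : Fin n => t.1 ≤ j.1), (Fintype.card (V t) : ℝ)) *
           (∑ t ∈ Finset.univ.filter (fun t : Fin n => j.1 < t.1), (Fintype.card (V t) : ℝ)))) := by
  classical
  have hn1 : (1:ℕ) ≤ n := by omega
  set Lk := linkGraph G x y with hLk
  have hc : Lk.Connected := link_connected G x y hn hconn
  set F : Sym2 (Σ i, V i) → ℝ := fun e => Sym2.lift ⟨fun u v =>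
      Real.sqrt (((nClose Lk u v : ℝ) + (nClose Lk v u : ℝ) - 2) /
        ((nClose Lk u v : ℝ) * (nClose Lk v u : ℝ))),
      fun u v => congrArg Real.sqrt (by ring)⟩ e with hF
  have hLHS : abcggIndex Lk = ∑ e ∈ Lk.edgeFinset, F e := abcggIndex_eq_sum_s11 Lk
  set LE : Finset (Sym2 (Σ i, V i)) :=
    Finset.univ.image (fun j : Fin (n-1) => s(linkY y j, linkX x j)) with hLE
  have hadj : ∀ j : Fin (n-1), Lk.Adj (linkY y j) (linkX x j) := fun j => link_edge_adj G x y j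
  have hsub : LE ⊆ Lk.edgeFinset := by
    intro e he
    rw [hLE, Finset.mem_image] at he
    obtain ⟨j, -, rfl⟩ := he
    rw [SimpleGraph.mem_edgeFinset]
    exact (hadj j)
  have hinj : ∀ a ∈ (Finset.univ : Finset (Fin (n-1))), ∀ b ∈ (Finset.univ : Finset (Fin (n-1))),
      s(linkY y a, linkX x a) = s(linkY y b, linkX x b) → a = b := by
    intro j _ j' _ hjj
    rw [Sym2.eq_iff] at hjj
    rcases hjj with ⟨h1, h2⟩ | ⟨h1, h2⟩
    · have := congrArg (fun p => (Sigma.fst p).1) h1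
      simp only [linkY, idxLow] at this
      exact Fin.ext this
    · have e1 := congrArg (fun p => (Sigma.fst p).1) h1
      have e2 := congrArg (fun p => (Sigma.fst p).1) h2
      simp only [linkY, linkX, idxLow, idxHigh] at e1 e2
      omega
  have hcardLE : LE.card = n - 1 := by
    rw [hLE, Finset.card_image_of_injOn fun a ha b hb h => hinj a ha b hb h,
      Finset.card_univ, Fintype.card_fin]
  have hsumLE : ∑ e ∈ LE, F e = ∑ j : Fin (n-1),
      Real.sqrt (((Fintype.card (Σ i, V i) : ℝ) - 2) /
        ((∑ t ∈ Finset.univ.filter (fun t : Fin n => t.1 ≤ j.1), (Fintype.card (V t) : ℝ)) *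
         (∑ t ∈ Finset.univ.filter (fun t : Fin n => j.1 < t.1), (Fintype.card (V t) : ℝ)))) := by
    rw [hLE, Finset.sum_image hinj]
    refine Finset.sum_congr rfl (fun j _ => ?_)
    rw [hF]
    simp only [Sym2.lift_mk]
    rw [link_nClose_left G x y hn hconn j, card_sideL j,
      link_nClose_right G x y hn hconn j, card_sideR j]
    have hAB := sum_sides (V := V) j
    congr 1
    rw [show ((Fintype.card (Σ i, V i) : ℝ) - 2)
        = ((∑ t ∈ Finset.univ.filter (fun t : Fin n => t.1 ≤ j.1), Fintype.card (V t) : ℕ) : ℝ)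
          + ((∑ t ∈ Finset.univ.filter (fun t : Fin n => j.1 < t.1), Fintype.card (V t) : ℕ) : ℝ)
          - 2 by rw [← hAB]; push_cast; ring]
    rw [show (∑ t ∈ Finset.univ.filter (fun t : Fin n => t.1 ≤ j.1), (Fintype.card (V t) : ℝ))
        = ((∑ t ∈ Finset.univ.filter (fun t : Fin n => t.1 ≤ j.1), Fintype.card (V t) : ℕ) : ℝ)
        by push_cast; rfl]
    rw [show (∑ t ∈ Finset.univ.filter (fun t : Fin n => j.1 < t.1), (Fintype.card (V t) : ℝ))
        = ((∑ t ∈ Finset.univ.filter (fun t : Fin n => j.1 < t.1), Fintype.card (V t) : ℕ) : ℝ)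
        by push_cast; rfl]
  have hne_rest : (Lk.edgeFinset \ LE).Nonempty := by
    have h0n : 0 < n := by omega
    obtain ⟨a, b, hab⟩ : ∃ a b : V ⟨0, h0n⟩, (G ⟨0, h0n⟩).Adj a b := by
      obtain ⟨a, b, hne⟩ := Fintype.exists_pair_of_one_lt_card
        (lt_of_lt_of_le one_lt_two (hcard ⟨0, h0n⟩))
      obtain ⟨W⟩ := (hconn ⟨0, h0n⟩).preconnected a b
      cases W with
      | nil => exact absurd rfl hne
      | cons h _ => exact ⟨_, _, h⟩
    refine ⟨s(⟨⟨0, h0n⟩, a⟩, ⟨⟨0, h0n⟩, b⟩), Finset.mem_sdiff.2 ⟨?_, ?_⟩⟩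
    · rw [SimpleGraph.mem_edgeFinset]
      show Lk.Adj _ _
      rw [hLk, linkGraph, SimpleGraph.fromRel_adj]
      exact ⟨by simp [hab.ne], Or.inl (Or.inl ⟨_, a, b, rfl, rfl, hab⟩)⟩
    · rw [hLE]
      simp only [Finset.mem_image, not_exists]
      rintro j ⟨-, hj⟩
      rw [Sym2.eq_iff] at hj
      rcases hj with ⟨h1, h2⟩ | ⟨h1, h2⟩
      · have := congrArg (fun p => (Sigma.fst p).1) h2
        simp only [linkX, idxHigh] at this
        omega
      · have := congrArg (fun p => (Sigma.fst p).1) h2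
        simp only [linkX, idxHigh] at this
        omega
  have hrest : ∑ e ∈ Lk.edgeFinset \ LE, F e < ((Lk.edgeFinset.card : ℝ) - ((n:ℝ) - 1)) := by
    have hlt : ∀ e ∈ Lk.edgeFinset \ LE, F e < 1 := by
      intro e he
      have he' := (Finset.mem_sdiff.1 he).1
      revert he'
      induction e using Sym2.ind with
      | _ u v =>
        intro he'
        rw [SimpleGraph.mem_edgeFinset, SimpleGraph.mem_edgeSet] at he'
        rw [hF]
        simp only [Sym2.lift_mk]
        exact lift_term_lt_one he'
    have hlt2 := Finset.sum_lt_sum_of_nonempty hne_rest (g := fun _ => (1:ℝ)) hlt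
    rw [Finset.sum_const, nsmul_eq_mul, mul_one] at hlt2
    have h1 : n - 1 ≤ Lk.edgeFinset.card := hcardLE ▸ Finset.card_le_card hsub
    have hcards : (((Lk.edgeFinset \ LE).card : ℕ) : ℝ)
        = (Lk.edgeFinset.card : ℝ) - ((n:ℝ) - 1) := by
      rw [Finset.card_sdiff_of_subset hsub, hcardLE, Nat.cast_sub h1, Nat.cast_sub hn1, Nat.cast_one]
    rw [hcards] at hlt2
    exact hlt2
  have hEcast : ((Nat.card Lk.edgeSet : ℕ) : ℝ) = (Lk.edgeFinset.card : ℝ) := by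
    rw [Nat.card_eq_fintype_card, ← SimpleGraph.edgeFinset_card]
  have hnonneg : 0 ≤ ∑ i, abcggIndex (G i) :=
    Finset.sum_nonneg fun i _ => abcggIndex_nonneg _
  rw [hLHS, ← Finset.sum_sdiff hsub, hEcast]
  linarith [hrest, hsumLE]
end

section
/- For integers q ≥ 4, k ≥ 1 and 2 ≤ h ≤ q − 2, the spiro-chain S_{q,h,k} satisfies ABC(S_{q,h,k}) = qk/√2. -/
open Finset

/-- The `i`-th contact vertex of the spiro-chain: `c 0 = 0`, `c i = (i-1)(q-1)+h`. -/
def spiroContact (q h i : ℕ) : ℕ := if i = 0 then 0 else (i - 1) * (q - 1) + h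

/-- The spiro-chain `S_{q,h,k}`: a chain of `k` cycles `C_q`, consecutive cycles
sharing a contact vertex, contact vertices on the same cycle `h` steps apart. -/
def spiroGraph (q h k : ℕ) : SimpleGraph (Fin (k * (q - 1) + 1)) :=
  SimpleGraph.fromRel (fun p r =>
    ∃ i < k,
      (p.1 = spiroContact q h i ∧ r.1 = i * (q - 1) + 1) ∨
      (∃ j, 1 ≤ j ∧ j ≤ q - 2 ∧ p.1 = i * (q - 1) + j ∧ r.1 = i * (q - 1) + j + 1) ∨
      (p.1 = i * (q - 1) + (q - 1) ∧ r.1 = spiroContact q h i))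

namespace SpiroAux

lemma idx_lt {N i i' j j' : ℕ} (hj : j ≤ N) (hj' : 1 ≤ j') (hii : i < i') :
    i * N + j < i' * N + j' := by
  have h1 : (i + 1) * N = i * N + N := by ring
  have h2 : (i + 1) * N ≤ i' * N := Nat.mul_le_mul_right N hii
  omega

lemma idx_inj {N i i' j j' : ℕ} (hj1 : 1 ≤ j) (hj2 : j ≤ N) (hj1' : 1 ≤ j')
    (hj2' : j' ≤ N) (e : i * N + j = i' * N + j') : i = i' ∧ j = j' := by
  rcases lt_trichotomy i i' with hlt | rfl | hgt
  · exact absurd e (Nat.ne_of_lt (idx_lt hj2 hj1' hlt))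
  · exact ⟨rfl, Nat.add_left_cancel e⟩
  · exact absurd e.symm (Nat.ne_of_lt (idx_lt hj2' hj1 hgt))

lemma decomp {k N : ℕ} (hN : 0 < N) : ∀ {a : ℕ}, 1 ≤ a → a ≤ k * N →
    ∃ i j, i < k ∧ 1 ≤ j ∧ j ≤ N ∧ a = i * N + j := by
  induction k with
  | zero => intro a ha ha'; simp at ha'; omega
  | succ k ih =>
    intro a ha ha'
    have hs : (k + 1) * N = k * N + N := by ring
    rcases le_or_gt a (k * N) with hle | hgt
    · obtain ⟨i, j, hi, hj1, hj2, he⟩ := ih ha hle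
      exact ⟨i, j, by omega, hj1, hj2, he⟩
    · exact ⟨k, a - k * N, by omega, by omega, by omega, by omega⟩

lemma bound_helper {q k i t : ℕ} (hik : i < k) (ht : t ≤ q - 1) :
    i * (q - 1) + t < k * (q - 1) + 1 := by
  have h1 : (i + 1) * (q - 1) ≤ k * (q - 1) := Nat.mul_le_mul_right _ (by omega)
  have h2 : (i + 1) * (q - 1) = i * (q - 1) + (q - 1) := by ring
  omega

end SpiroAux

namespace SpiroAux

def SRel (q h k a b : ℕ) : Prop :=
  ∃ i < k,
    (a = spiroContact q h i ∧ b = i * (q - 1) + 1) ∨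
    (∃ j, 1 ≤ j ∧ j ≤ q - 2 ∧ a = i * (q - 1) + j ∧ b = i * (q - 1) + j + 1) ∨
    (a = i * (q - 1) + (q - 1) ∧ b = spiroContact q h i)

lemma contact_succ (q h i : ℕ) : spiroContact q h (i + 1) = i * (q - 1) + h := by
  simp [spiroContact]

lemma srel_ne {q h k a b : ℕ} (hq : 4 ≤ q) (hh₁ : 2 ≤ h) (hh₂ : h ≤ q - 2)
    (hr : SRel q h k a b) : a ≠ b := by
  obtain ⟨i, hi, hc⟩ := hr
  rcases hc with ⟨ha, hb⟩ | ⟨j, hj1, hj2, ha, hb⟩ | ⟨ha, hb⟩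
  · cases i with
    | zero => simp [spiroContact] at ha; omega
    | succ i =>
      rw [contact_succ] at ha
      have e : (i + 1) * (q - 1) = i * (q - 1) + (q - 1) := by ring
      omega
  · omega
  · cases i with
    | zero => simp [spiroContact] at hb; omega
    | succ i =>
      rw [contact_succ] at hb
      have e : (i + 1) * (q - 1) = i * (q - 1) + (q - 1) := by ring
      omega

lemma adj_iff (q h k : ℕ) (hq : 4 ≤ q) (hh₁ : 2 ≤ h) (hh₂ : h ≤ q - 2)
    (u v : Fin (k * (q - 1) + 1)) :
    (spiroGraph q h k).Adj u v ↔ SRel q h k u.1 v.1 ∨ SRel q h k v.1 u.1 := by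
  rw [spiroGraph, SimpleGraph.fromRel_adj]
  constructor
  · rintro ⟨-, hr⟩; exact hr
  · intro hr
    refine ⟨fun he => ?_, hr⟩
    rcases hr with hr | hr
    · exact srel_ne hq hh₁ hh₂ hr (by rw [he])
    · exact srel_ne hq hh₁ hh₂ hr (by rw [he])

lemma srel_zero_left {q h k b : ℕ} (hq : 4 ≤ q) (hh₁ : 2 ≤ h)
    (hr : SRel q h k 0 b) : b = 1 := by
  obtain ⟨i, hi, hc⟩ := hr
  rcases hc with ⟨ha, hb⟩ | ⟨j, hj1, hj2, ha, hb⟩ | ⟨ha, hb⟩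
  · cases i with
    | zero => omega
    | succ i => rw [contact_succ] at ha; omega
  · omega
  · omega

lemma srel_zero_right {q h k a : ℕ} (hq : 4 ≤ q) (hh₁ : 2 ≤ h)
    (hr : SRel q h k a 0) : a = q - 1 := by
  obtain ⟨i, hi, hc⟩ := hr
  rcases hc with ⟨ha, hb⟩ | ⟨j, hj1, hj2, ha, hb⟩ | ⟨ha, hb⟩
  · omega
  · omega
  · cases i with
    | zero => simp [spiroContact] at hb; omega
    | succ i => rw [contact_succ] at hb; omega

lemma srel_left {q h k i₀ j₀ b : ℕ} (hq : 4 ≤ q) (hh₁ : 2 ≤ h) (hh₂ : h ≤ q - 2)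
    (hj₀1 : 1 ≤ j₀) (hj₀2 : j₀ ≤ q - 1)
    (hr : SRel q h k (i₀ * (q - 1) + j₀) b) :
    (j₀ = h ∧ i₀ + 1 < k ∧ b = (i₀ + 1) * (q - 1) + 1) ∨
    (j₀ ≤ q - 2 ∧ b = i₀ * (q - 1) + j₀ + 1) ∨
    (j₀ = q - 1 ∧ b = spiroContact q h i₀) := by
  obtain ⟨i, hi, hc⟩ := hr
  rcases hc with ⟨ha, hb⟩ | ⟨j, hj1, hj2, ha, hb⟩ | ⟨ha, hb⟩
  · cases i with
    | zero => simp [spiroContact] at ha; omega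
    | succ i =>
      rw [contact_succ] at ha
      obtain ⟨rfl, rfl⟩ := idx_inj hj₀1 hj₀2 (by omega) (by omega) ha
      exact Or.inl ⟨rfl, hi, hb⟩
  · obtain ⟨rfl, rfl⟩ := idx_inj hj₀1 hj₀2 hj1 (by omega) ha
    exact Or.inr (Or.inl ⟨hj2, hb⟩)
  · obtain ⟨rfl, rfl⟩ := idx_inj hj₀1 hj₀2 (by omega) le_rfl ha
    exact Or.inr (Or.inr ⟨rfl, hb⟩)

lemma srel_right {q h k i₀ j₀ a : ℕ} (hq : 4 ≤ q) (hh₁ : 2 ≤ h) (hh₂ : h ≤ q - 2)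
    (hj₀1 : 1 ≤ j₀) (hj₀2 : j₀ ≤ q - 1)
    (hr : SRel q h k a (i₀ * (q - 1) + j₀)) :
    (j₀ = 1 ∧ a = spiroContact q h i₀) ∨
    (2 ≤ j₀ ∧ a = i₀ * (q - 1) + (j₀ - 1)) ∨
    (j₀ = h ∧ i₀ + 1 < k ∧ a = (i₀ + 1) * (q - 1) + (q - 1)) := by
  obtain ⟨i, hi, hc⟩ := hr
  rcases hc with ⟨ha, hb⟩ | ⟨j, hj1, hj2, ha, hb⟩ | ⟨ha, hb⟩
  · obtain ⟨rfl, rfl⟩ := idx_inj (by omega) (by omega) hj₀1 hj₀2 hb.symm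
    exact Or.inl ⟨rfl, ha⟩
  · have hb' : i * (q - 1) + (j + 1) = i₀ * (q - 1) + j₀ := by omega
    obtain ⟨rfl, hj'⟩ := idx_inj (by omega) (by omega) hj₀1 hj₀2 hb'
    exact Or.inr (Or.inl ⟨by omega, by omega⟩)
  · cases i with
    | zero => simp [spiroContact] at hb; omega
    | succ i =>
      rw [contact_succ] at hb
      obtain ⟨rfl, rfl⟩ := idx_inj (by omega) (by omega) hj₀1 hj₀2 hb.symm
      exact Or.inr (Or.inr ⟨rfl, hi, ha⟩)

end SpiroAux

namespace SpiroAux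

lemma contact_lt {q h k i : ℕ} (hq : 4 ≤ q) (hh₂ : h ≤ q - 2) (hi : i < k) :
    spiroContact q h i < k * (q - 1) + 1 := by
  cases i with
  | zero => simp [spiroContact]
  | succ i => rw [contact_succ]; exact bound_helper (by omega) (by omega)

lemma contact_lt_self {q h i j : ℕ} (hq : 4 ≤ q) (hh₂ : h ≤ q - 2) (hh₁ : 2 ≤ h)
    (hj : 1 ≤ j) : spiroContact q h i < i * (q - 1) + j := by
  cases i with
  | zero =>
    have : (0:ℕ) * (q-1) = 0 := by ring
    simp [spiroContact]; omega
  | succ i => rw [contact_succ]; exact idx_lt (by omega) hj (by omega)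

lemma degree_contact (q h k : ℕ) (hq : 4 ≤ q) (hh₁ : 2 ≤ h) (hh₂ : h ≤ q - 2)
    [DecidableRel (spiroGraph q h k).Adj]
    {i₀ : ℕ} (hi₀ : i₀ + 1 < k) (v : Fin (k * (q - 1) + 1)) (hv : v.1 = i₀ * (q - 1) + h) :
    (spiroGraph q h k).degree v = 4 := by
  have e1 : (i₀ + 1) * (q - 1) = i₀ * (q - 1) + (q - 1) := by ring
  rw [← SimpleGraph.card_neighborFinset_eq_degree,
    ← Finset.card_image_of_injective _ Fin.val_injective]
  have himg : ((spiroGraph q h k).neighborFinset v).image Fin.val =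
      {i₀ * (q - 1) + (h - 1), i₀ * (q - 1) + (h + 1),
       (i₀ + 1) * (q - 1) + 1, (i₀ + 1) * (q - 1) + (q - 1)} := by
    ext x
    simp only [Finset.mem_image, SimpleGraph.mem_neighborFinset, Finset.mem_insert,
      Finset.mem_singleton]
    constructor
    · rintro ⟨w, hw, rfl⟩
      rw [adj_iff q h k hq hh₁ hh₂] at hw
      rcases hw with hr | hr
      · rw [hv] at hr
        rcases srel_left hq hh₁ hh₂ (by omega) (by omega) hr with
          ⟨-, -, hb⟩ | ⟨-, hb⟩ | ⟨hj, -⟩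
        · exact Or.inr (Or.inr (Or.inl hb))
        · exact Or.inr (Or.inl (by omega))
        · omega
      · rw [hv] at hr
        rcases srel_right hq hh₁ hh₂ (by omega) (by omega) hr with
          ⟨hj, -⟩ | ⟨-, ha⟩ | ⟨-, -, ha⟩
        · omega
        · exact Or.inl (by omega)
        · exact Or.inr (Or.inr (Or.inr ha))
    · intro hx
      have hb1 : i₀ * (q-1) + (h-1) < k*(q-1)+1 := bound_helper (by omega) (by omega)
      have hb2 : i₀ * (q-1) + (h+1) < k*(q-1)+1 := bound_helper (by omega) (by omega)
      have hb3 : (i₀+1) * (q-1) + 1 < k*(q-1)+1 := bound_helper (by omega) (by omega)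
      have hb4 : (i₀+1) * (q-1) + (q-1) < k*(q-1)+1 := bound_helper (by omega) (by omega)
      rcases hx with rfl | rfl | rfl | rfl
      · refine ⟨⟨_, hb1⟩, ?_, rfl⟩
        rw [adj_iff q h k hq hh₁ hh₂]
        exact Or.inr ⟨i₀, by omega, Or.inr (Or.inl ⟨h-1, by omega, by omega, rfl, by omega⟩)⟩
      · refine ⟨⟨_, hb2⟩, ?_, rfl⟩
        rw [adj_iff q h k hq hh₁ hh₂]
        exact Or.inl ⟨i₀, by omega, Or.inr (Or.inl ⟨h, by omega, by omega, hv,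
          show i₀ * (q-1) + (h+1) = i₀ * (q-1) + h + 1 by omega⟩)⟩
      · refine ⟨⟨_, hb3⟩, ?_, rfl⟩
        rw [adj_iff q h k hq hh₁ hh₂]
        refine Or.inl ⟨i₀+1, by omega, Or.inl ⟨?_, rfl⟩⟩
        rw [contact_succ]; omega
      · refine ⟨⟨_, hb4⟩, ?_, rfl⟩
        rw [adj_iff q h k hq hh₁ hh₂]
        refine Or.inr ⟨i₀+1, by omega, Or.inr (Or.inr ⟨rfl, ?_⟩)⟩
        rw [contact_succ]; omega
  rw [himg,
    Finset.card_insert_of_notMem (by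
      simp only [Finset.mem_insert, Finset.mem_singleton]; omega),
    Finset.card_insert_of_notMem (by
      simp only [Finset.mem_insert, Finset.mem_singleton]; omega),
    Finset.card_insert_of_notMem (by simp only [Finset.mem_singleton]; omega),
    Finset.card_singleton]

lemma degree_noncontact (q h k : ℕ) (hq : 4 ≤ q) (hk : 1 ≤ k) (hh₁ : 2 ≤ h) (hh₂ : h ≤ q - 2)
    [DecidableRel (spiroGraph q h k).Adj]
    (v : Fin (k * (q - 1) + 1)) (hv : ∀ i₀, i₀ + 1 < k → v.1 ≠ i₀ * (q - 1) + h) :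
    (spiroGraph q h k).degree v = 2 := by
  rw [← SimpleGraph.card_neighborFinset_eq_degree,
    ← Finset.card_image_of_injective _ Fin.val_injective]
  by_cases h0 : v.1 = 0
  · have himg : ((spiroGraph q h k).neighborFinset v).image Fin.val = {1, q-1} := by
      ext x
      simp only [Finset.mem_image, SimpleGraph.mem_neighborFinset, Finset.mem_insert,
        Finset.mem_singleton]
      constructor
      · rintro ⟨w, hw, rfl⟩
        rw [adj_iff q h k hq hh₁ hh₂] at hw
        rw [h0] at hw
        rcases hw with hr | hr
        · exact Or.inl (srel_zero_left hq hh₁ hr)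
        · exact Or.inr (srel_zero_right hq hh₁ hr)
      · have hone : (1:ℕ) * (q-1) ≤ k * (q-1) := Nat.mul_le_mul_right _ hk
        have hone' : (1:ℕ) * (q-1) = q-1 := by ring
        rintro (rfl | rfl)
        · refine ⟨⟨1, by omega⟩, ?_, rfl⟩
          rw [adj_iff q h k hq hh₁ hh₂]
          exact Or.inl ⟨0, by omega, Or.inl ⟨by simpa [spiroContact] using h0,
            show (1:ℕ) = 0 * (q-1) + 1 by omega⟩⟩
        · refine ⟨⟨q-1, by omega⟩, ?_, rfl⟩
          rw [adj_iff q h k hq hh₁ hh₂]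
          exact Or.inr ⟨0, by omega, Or.inr (Or.inr
            ⟨show q-1 = 0 * (q-1) + (q-1) by omega, by simpa [spiroContact] using h0⟩)⟩
    rw [himg, Finset.card_insert_of_notMem (by simp; omega), Finset.card_singleton]
  · obtain ⟨i₀, j₀, hi₀, hj1, hj2, hval⟩ :=
      decomp (k := k) (N := q-1) (by omega) (a := v.1) (by omega) (by have := v.2; omega)
    have hnc : ¬(j₀ = h ∧ i₀ + 1 < k) := by
      rintro ⟨rfl, hik⟩; exact hv i₀ hik hval
    by_cases hj₀1 : j₀ = 1
    · subst hj₀1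
      have himg : ((spiroGraph q h k).neighborFinset v).image Fin.val =
          {spiroContact q h i₀, i₀ * (q-1) + 2} := by
        ext x
        simp only [Finset.mem_image, SimpleGraph.mem_neighborFinset, Finset.mem_insert,
          Finset.mem_singleton]
        constructor
        · rintro ⟨w, hw, rfl⟩
          rw [adj_iff q h k hq hh₁ hh₂, hval] at hw
          rcases hw with hr | hr
          · rcases srel_left hq hh₁ hh₂ (by omega) (by omega) hr with
              ⟨hj, -, -⟩ | ⟨-, hb⟩ | ⟨hj, -⟩
            · omega
            · exact Or.inr (by omega)
            · omega
          · rcases srel_right hq hh₁ hh₂ (by omega) (by omega) hr with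
              ⟨-, ha⟩ | ⟨hj, -⟩ | ⟨hj, -, -⟩
            · exact Or.inl ha
            · omega
            · omega
        · rintro (rfl | rfl)
          · refine ⟨⟨_, contact_lt hq hh₂ hi₀⟩, ?_, rfl⟩
            rw [adj_iff q h k hq hh₁ hh₂]
            exact Or.inr ⟨i₀, hi₀, Or.inl ⟨rfl, hval⟩⟩
          · refine ⟨⟨_, bound_helper hi₀ (by omega)⟩, ?_, rfl⟩
            rw [adj_iff q h k hq hh₁ hh₂]
            exact Or.inl ⟨i₀, hi₀, Or.inr (Or.inl ⟨1, by omega, by omega, hval,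
              show i₀ * (q-1) + 2 = i₀ * (q-1) + 1 + 1 by omega⟩)⟩
      have hlt : spiroContact q h i₀ < i₀ * (q-1) + 2 :=
        contact_lt_self hq hh₂ hh₁ (by omega)
      rw [himg, Finset.card_insert_of_notMem (by
          simp only [Finset.mem_singleton]; omega),
        Finset.card_singleton]
    by_cases hj₀q : j₀ = q - 1
    · have himg : ((spiroGraph q h k).neighborFinset v).image Fin.val =
          {i₀ * (q-1) + (q-2), spiroContact q h i₀} := by
        ext x
        simp only [Finset.mem_image, SimpleGraph.mem_neighborFinset, Finset.mem_insert,
          Finset.mem_singleton]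
        constructor
        · rintro ⟨w, hw, rfl⟩
          rw [adj_iff q h k hq hh₁ hh₂, hval] at hw
          rcases hw with hr | hr
          · rcases srel_left hq hh₁ hh₂ (by omega) (by omega) hr with
              ⟨hj, -, -⟩ | ⟨hj, -⟩ | ⟨-, hb⟩
            · omega
            · omega
            · exact Or.inr hb
          · rcases srel_right hq hh₁ hh₂ (by omega) (by omega) hr with
              ⟨hj, -⟩ | ⟨-, ha⟩ | ⟨hj, -, -⟩
            · omega
            · exact Or.inl (by omega)
            · omega
        · rintro (rfl | rfl)
          · refine ⟨⟨_, bound_helper hi₀ (by omega)⟩, ?_, rfl⟩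
            rw [adj_iff q h k hq hh₁ hh₂]
            exact Or.inr ⟨i₀, hi₀, Or.inr (Or.inl ⟨q-2, by omega, by omega, rfl, by omega⟩)⟩
          · refine ⟨⟨_, contact_lt hq hh₂ hi₀⟩, ?_, rfl⟩
            rw [adj_iff q h k hq hh₁ hh₂]
            exact Or.inl ⟨i₀, hi₀, Or.inr (Or.inr ⟨by omega, rfl⟩)⟩
      have hlt : spiroContact q h i₀ < i₀ * (q-1) + (q-2) :=
        contact_lt_self hq hh₂ hh₁ (by omega)
      rw [himg, Finset.card_insert_of_notMem (by
          simp only [Finset.mem_singleton]; omega),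
        Finset.card_singleton]
    · have himg : ((spiroGraph q h k).neighborFinset v).image Fin.val =
          {i₀ * (q-1) + (j₀-1), i₀ * (q-1) + (j₀+1)} := by
        ext x
        simp only [Finset.mem_image, SimpleGraph.mem_neighborFinset, Finset.mem_insert,
          Finset.mem_singleton]
        constructor
        · rintro ⟨w, hw, rfl⟩
          rw [adj_iff q h k hq hh₁ hh₂, hval] at hw
          rcases hw with hr | hr
          · rcases srel_left hq hh₁ hh₂ (by omega) (by omega) hr with
              ⟨hj, hik, -⟩ | ⟨-, hb⟩ | ⟨hj, -⟩
            · exact absurd ⟨hj, hik⟩ hnc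
            · exact Or.inr (by omega)
            · omega
          · rcases srel_right hq hh₁ hh₂ (by omega) (by omega) hr with
              ⟨hj, -⟩ | ⟨-, ha⟩ | ⟨hj, hik, -⟩
            · omega
            · exact Or.inl ha
            · exact absurd ⟨hj, hik⟩ hnc
        · rintro (rfl | rfl)
          · refine ⟨⟨_, bound_helper hi₀ (by omega)⟩, ?_, rfl⟩
            rw [adj_iff q h k hq hh₁ hh₂]
            exact Or.inr ⟨i₀, hi₀, Or.inr (Or.inl ⟨j₀-1, by omega, by omega, rfl, by omega⟩)⟩
          · refine ⟨⟨_, bound_helper hi₀ (by omega)⟩, ?_, rfl⟩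
            rw [adj_iff q h k hq hh₁ hh₂]
            exact Or.inl ⟨i₀, hi₀, Or.inr (Or.inl ⟨j₀, by omega, by omega, hval, rfl⟩)⟩
      rw [himg, Finset.card_insert_of_notMem (by
          simp only [Finset.mem_singleton]; omega),
        Finset.card_singleton]

end SpiroAux

namespace SpiroAux

lemma not_both_contacts (q h k : ℕ) (hq : 4 ≤ q) (hh₁ : 2 ≤ h) (hh₂ : h ≤ q - 2)
    {u v : Fin (k * (q - 1) + 1)} (huv : (spiroGraph q h k).Adj u v)
    (hu : ∃ i₀, i₀ + 1 < k ∧ u.1 = i₀ * (q - 1) + h)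
    (hv : ∃ i₀, i₀ + 1 < k ∧ v.1 = i₀ * (q - 1) + h) : False := by
  obtain ⟨i₀, hi₀, hu⟩ := hu
  obtain ⟨i₁, hi₁, hv⟩ := hv
  rw [adj_iff q h k hq hh₁ hh₂] at huv
  have key : ∀ a b : ℕ, SRel q h k (a * (q - 1) + h) (b * (q - 1) + h) → False := by
    intro a b hr
    rcases srel_left hq hh₁ hh₂ (by omega) (by omega) hr with
      ⟨-, -, hb⟩ | ⟨-, hb⟩ | ⟨hj, -⟩
    · have := idx_inj (N := q - 1) (by omega : 1 ≤ h) (by omega : h ≤ q - 1)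
        (by omega : (1:ℕ) ≤ 1) (by omega : (1:ℕ) ≤ q - 1) hb
      omega
    · have hb' : b * (q - 1) + h = a * (q - 1) + (h + 1) := by omega
      have := idx_inj (by omega : 1 ≤ h) (by omega : h ≤ q - 1)
        (by omega : 1 ≤ h + 1) (by omega : h + 1 ≤ q - 1) hb'
      omega
    · omega
  rcases huv with hr | hr
  · rw [hu, hv] at hr; exact key i₀ i₁ hr
  · rw [hu, hv] at hr; exact key i₁ i₀ hr

end SpiroAux


open SpiroAux

theorem abc_spiroGraph (q h k : ℕ) (hq : 4 ≤ q) (hk : 1 ≤ k) (hh₁ : 2 ≤ h) (hh₂ : h ≤ q - 2) :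
    abcIndex (spiroGraph q h k) = (q : ℝ) * (k : ℝ) / Real.sqrt 2 := by
  classical
  have hdeg : ∀ v : Fin (k * (q - 1) + 1), (spiroGraph q h k).degree v =
      if ∃ i₀, i₀ + 1 < k ∧ v.1 = i₀ * (q - 1) + h then 4 else 2 := by
    intro v
    split_ifs with hc
    · obtain ⟨i₀, hik, hv⟩ := hc
      exact degree_contact q h k hq hh₁ hh₂ hik v hv
    · push_neg at hc
      exact degree_noncontact q h k hq hk hh₁ hh₂ v hc
  have hcard : (Finset.univ.filter
      (fun v : Fin (k * (q - 1) + 1) => ∃ i₀, i₀ + 1 < k ∧ v.1 = i₀ * (q - 1) + h)).card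
      = k - 1 := by
    rw [← Finset.card_image_of_injective _ Fin.val_injective]
    have himg : (Finset.univ.filter
        (fun v : Fin (k * (q - 1) + 1) => ∃ i₀, i₀ + 1 < k ∧ v.1 = i₀ * (q - 1) + h)).image
        Fin.val = (Finset.range (k - 1)).image (fun i₀ => i₀ * (q - 1) + h) := by
      ext x
      simp only [Finset.mem_image, Finset.mem_filter, Finset.mem_univ, true_and,
        Finset.mem_range]
      constructor
      · rintro ⟨v, ⟨i₀, hik, hv⟩, rfl⟩
        exact ⟨i₀, by omega, hv.symm⟩
      · rintro ⟨i₀, hik, rfl⟩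
        exact ⟨⟨i₀ * (q - 1) + h, bound_helper (by omega) (by omega)⟩,
          ⟨i₀, by omega, rfl⟩, rfl⟩
    rw [himg, Finset.card_image_of_injOn, Finset.card_range]
    intro a _ b _ e
    exact (idx_inj (by omega) (by omega) (by omega) (by omega) e).1
  have hsum : ∑ v : Fin (k * (q - 1) + 1), (spiroGraph q h k).degree v = 2 * (k * q) := by
    have h1 : ∑ v : Fin (k * (q - 1) + 1), (spiroGraph q h k).degree v
        = ∑ v : Fin (k * (q - 1) + 1),
            (if ∃ i₀, i₀ + 1 < k ∧ v.1 = i₀ * (q - 1) + h then 4 else 2) :=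
      Finset.sum_congr rfl (fun v _ => hdeg v)
    rw [h1, Finset.sum_ite, Finset.sum_const, Finset.sum_const, smul_eq_mul, smul_eq_mul]
    have h2 := Finset.card_filter_add_card_filter_not
      (s := (Finset.univ : Finset (Fin (k * (q - 1) + 1))))
      (p := fun v => ∃ i₀, i₀ + 1 < k ∧ v.1 = i₀ * (q - 1) + h)
    have h3 : k * q = k * (q - 1) + k := by
      have hq1 : (q - 1) + 1 = q := by omega
      calc k * q = k * ((q - 1) + 1) := by rw [hq1]
        _ = k * (q - 1) + k := by ring
    have h4 : (Finset.univ : Finset (Fin (k * (q - 1) + 1))).card = k * (q - 1) + 1 := by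
      simp
    omega
  have hedge : (spiroGraph q h k).edgeFinset.card = k * q := by
    have h5 := SimpleGraph.sum_degrees_eq_twice_card_edges (spiroGraph q h k)
    omega
  have habc : abcIndex (spiroGraph q h k)
      = ∑ _e ∈ (spiroGraph q h k).edgeFinset, Real.sqrt 2⁻¹ := by
    unfold abcIndex
    refine Finset.sum_congr rfl fun e => ?_
    induction e using Sym2.ind with
    | _ u v =>
      intro he
      rw [SimpleGraph.mem_edgeFinset, SimpleGraph.mem_edgeSet] at he
      rw [Sym2.lift_mk]
      dsimp only
      congr 1
      have h2 : ¬((∃ i₀, i₀ + 1 < k ∧ u.1 = i₀ * (q - 1) + h) ∧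
          (∃ i₀, i₀ + 1 < k ∧ v.1 = i₀ * (q - 1) + h)) :=
        fun ⟨a, b⟩ => not_both_contacts q h k hq hh₁ hh₂ he a b
      rw [hdeg u, hdeg v]
      split_ifs with p1 p2 p2
      · exact absurd ⟨p1, p2⟩ h2
      · push_cast; norm_num
      · push_cast; norm_num
      · push_cast; norm_num
  rw [habc, Finset.sum_const, hedge, nsmul_eq_mul, Real.sqrt_inv, div_eq_mul_inv]
  push_cast
  ring
end

section
/- For integers q ≥ 3 and k ≥ 2, the spiro-chain S_{q,1,k} satisfies ABC(S_{q,1,k}) = (qk − k + 2)/√2 + (k − 2)·√6/4. -/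
open Finset

/-!
Every vertex of `S_{q,1,k}` has degree 2, except the `k - 1` contact vertices, which have
degree 4. An edge with an endpoint of degree 2 contributes `√(d/(2d)) = 1/√2` to the index
whatever the other degree `d`, and an edge joining two vertices of degree 4 contributes `√6/4`.
For `h = 1` consecutive contact vertices are adjacent, so exactly `k - 2` of the `qk` edges are
of the latter kind.

The degrees need not be computed exactly: exhibiting two (resp. four) neighbours of each vertex
gives lower bounds summing to `2qk`, while the edges are covered by the `qk` edges of the cycles,
so by the handshake lemma every lower bound is attained and there are exactly `qk` edges.
-/

namespace SimpleGraph

variable {V : Type*} [Fintype V] (G : SimpleGraph V) [DecidableRel G.Adj]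

theorem degree_eq_and_card_edgeFinset_eq_of_le {f : V → ℕ} {m : ℕ}
    (hf : ∀ v, f v ≤ G.degree v) (hE : #G.edgeFinset ≤ m) (hm : 2 * m ≤ ∑ v, f v) :
    (∀ v, G.degree v = f v) ∧ #G.edgeFinset = m := by
  have hle : ∑ v, f v ≤ ∑ v, G.degree v := sum_le_sum fun v _ => hf v
  rw [sum_degrees_eq_twice_card_edges] at hle
  have hsum : ∑ v, f v = ∑ v, G.degree v := by
    rw [sum_degrees_eq_twice_card_edges]; omega
  refine ⟨fun v => ?_, by omega⟩
  exact ((sum_eq_sum_iff_of_le fun v _ => hf v).1 hsum v (mem_univ v)).symm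

theorem card_le_degree_of_forall_exists_adj {α : Type*} [DecidableEq α] (f : V → α)
    {v : V} {s : Finset α} (hs : ∀ a ∈ s, ∃ w, G.Adj v w ∧ f w = a) : #s ≤ G.degree v := by
  rw [← card_neighborFinset_eq_degree]
  refine (card_le_card (t := (G.neighborFinset v).image f) fun a ha => ?_).trans card_image_le
  obtain ⟨w, hvw, rfl⟩ := hs a ha
  exact mem_image_of_mem f ((mem_neighborFinset G v w).2 hvw)

theorem abcIndex_eq_of_degree_eq_ite [DecidableEq V] (D : Finset V)
    (hdeg : ∀ v, G.degree v = if v ∈ D then 4 else 2) :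
    abcIndex G = ((#G.edgeFinset : ℝ) - #(G.edgeFinset ∩ D.sym2)) / √2 +
      #(G.edgeFinset ∩ D.sym2) * √6 / 4 := by
  have hweight : ∀ u v, Real.sqrt (((G.degree u : ℝ) + G.degree v - 2) /
      (G.degree u * G.degree v)) = if u ∈ D ∧ v ∈ D then √6 / 4 else (√2)⁻¹ := by
    intro u v
    rw [hdeg u, hdeg v]
    by_cases hu : u ∈ D <;> by_cases hv : v ∈ D <;>
      simp only [hu, hv, if_true, if_false, and_self, and_false, false_and, Nat.cast_ofNat]
    · rw [Real.sqrt_eq_iff_mul_self_eq_of_pos (by positivity), div_mul_div_comm,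
        Real.mul_self_sqrt (by norm_num)]
      norm_num
    all_goals rw [← Real.sqrt_inv]; norm_num
  have hsum : abcIndex G = ∑ e ∈ G.edgeFinset, if e ∈ D.sym2 then √6 / 4 else (√2)⁻¹ := by
    unfold abcIndex
    refine sum_congr (by convert rfl) fun e _ => ?_
    induction e using Sym2.ind with
    | _ u v => simp only [Sym2.lift_mk, mk_mem_sym2_iff]; convert hweight u v
  have hcard := card_sdiff_add_card_inter G.edgeFinset D.sym2
  rw [hsum, ← sum_inter_add_sum_sdiff _ D.sym2,
    sum_congr rfl fun e he => if_pos (mem_inter.1 he).2,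
    sum_congr rfl fun e he => if_neg (mem_sdiff.1 he).2, sum_const, sum_const, nsmul_eq_mul,
    nsmul_eq_mul, ← hcard, Nat.cast_add]
  ring

end SimpleGraph

theorem Nat.eq_and_eq_of_mul_add_eq {Q i i' r r' : ℕ} (hr : r < Q) (hr' : r' < Q)
    (h : i * Q + r = i' * Q + r') : i = i' ∧ r = r' := by
  have h₁ := (Nat.div_mod_unique (a := i' * Q + r') (d := i) (c := r) (by omega)).2
    ⟨by rw [← h]; ring, hr⟩
  have h₂ := (Nat.div_mod_unique (a := i' * Q + r') (d := i') (c := r') (by omega)).2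
    ⟨by ring, hr'⟩
  exact ⟨h₁.1.symm.trans h₂.1, h₁.2.symm.trans h₂.2⟩

theorem Nat.mul_add_le_mul_of_lt {Q i k : ℕ} (h : i < k) : i * Q + Q ≤ k * Q := by
  simpa [add_one_mul] using Nat.mul_le_mul_right Q (Nat.succ_le_of_lt h)

theorem Nat.exists_eq_mul_add_of_le {Q k n : ℕ} (hn : 1 ≤ n) (hnk : n ≤ k * Q) :
    ∃ i < k, ∃ j, 1 ≤ j ∧ j ≤ Q ∧ n = i * Q + j := by
  have hQ : 0 < Q := Nat.pos_of_ne_zero (by rintro rfl; simp at hnk; omega)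
  refine ⟨(n - 1) / Q, ?_, (n - 1) % Q + 1, by omega, Nat.mod_lt _ hQ, ?_⟩
  · exact Nat.div_lt_of_lt_mul (by rw [mul_comm]; omega)
  · have := Nat.div_add_mod' (n - 1) Q
    omega

/-- `S_{Q+1,1,k}`, on the vertex type `Fin (k * Q + 1)` to avoid the truncated `q - 1`. -/
def spiroOne (Q k : ℕ) : SimpleGraph (Fin (k * Q + 1)) := spiroGraph (Q + 1) 1 k

/-- The relation defining `spiroGraph (Q + 1) 1 k`, with `q - 1` and `q - 2` written as `Q` and
`Q - 1`. -/
def SpiroStep (Q k a b : ℕ) : Prop := ∃ i < k,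
  (a = spiroContact (Q + 1) 1 i ∧ b = i * Q + 1) ∨
  (∃ j, 1 ≤ j ∧ j ≤ Q - 1 ∧ a = i * Q + j ∧ b = i * Q + j + 1) ∨
  (a = i * Q + Q ∧ b = spiroContact (Q + 1) 1 i)

section SpiroOne

variable {Q k : ℕ}

theorem spiroOne_adj {u v : Fin (k * Q + 1)} :
    (spiroOne Q k).Adj u v ↔ u ≠ v ∧ (SpiroStep Q k u v ∨ SpiroStep Q k v u) :=
  Iff.rfl

theorem spiroContact_one_zero (Q : ℕ) : spiroContact (Q + 1) 1 0 = 0 := rfl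

theorem spiroContact_one_succ (Q i : ℕ) : spiroContact (Q + 1) 1 (i + 1) = i * Q + 1 := rfl

theorem spiroContact_one_le (Q i : ℕ) : spiroContact (Q + 1) 1 i ≤ i * Q + 1 - Q := by
  cases i with
  | zero => exact Nat.zero_le _
  | succ i => rw [spiroContact_one_succ, add_one_mul]; omega

theorem spiroStep_contact {i : ℕ} (hi : i < k) :
    SpiroStep Q k (spiroContact (Q + 1) 1 i) (i * Q + 1) :=
  ⟨i, hi, .inl ⟨rfl, rfl⟩⟩

theorem spiroStep_succ {i j : ℕ} (hi : i < k) (hj : 1 ≤ j) (hjQ : j < Q) :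
    SpiroStep Q k (i * Q + j) (i * Q + j + 1) :=
  ⟨i, hi, .inr (.inl ⟨j, hj, by omega, rfl, rfl⟩)⟩

theorem spiroStep_close {i : ℕ} (hi : i < k) :
    SpiroStep Q k (i * Q + Q) (spiroContact (Q + 1) 1 i) :=
  ⟨i, hi, .inr (.inr ⟨rfl, rfl⟩)⟩

theorem eq_add_one_of_spiroStep (hQ : 2 ≤ Q) {i₁ i₂ : ℕ}
    (h : SpiroStep Q k (i₁ * Q + 1) (i₂ * Q + 1)) : i₂ = i₁ + 1 := by
  obtain ⟨i, -, ⟨ha, hb⟩ | ⟨j, hj, hjQ, ha, hb⟩ | ⟨ha, -⟩⟩ := h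
  · cases i with
    | zero => rw [spiroContact_one_zero] at ha; omega
    | succ i =>
      rw [spiroContact_one_succ] at ha
      have h₁ := Nat.eq_of_mul_eq_mul_right (by omega) (show i₁ * Q = i * Q by omega)
      have h₂ := Nat.eq_of_mul_eq_mul_right (by omega) (show i₂ * Q = (i + 1) * Q by omega)
      omega
  · obtain ⟨rfl, rfl⟩ := Nat.eq_and_eq_of_mul_add_eq (by omega) (by omega) ha.symm
    have := Nat.eq_and_eq_of_mul_add_eq (r := 0) (r' := 1) (by omega) (by omega)
      (show i₂ * Q + 0 = i * Q + 1 by omega)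
    omega
  · have := Nat.eq_and_eq_of_mul_add_eq (r := 0) (r' := 1) (by omega) (by omega)
      (show (i + 1) * Q + 0 = i₁ * Q + 1 by rw [add_one_mul]; omega)
    omega

/-- The contact vertices `c_1, …, c_{k-1}`. -/
def spiroHubs (Q k : ℕ) : Finset (Fin (k * Q + 1)) := {v | ∃ i < k - 1, (v : ℕ) = i * Q + 1}

theorem mem_spiroHubs {v : Fin (k * Q + 1)} :
    v ∈ spiroHubs Q k ↔ ∃ i < k - 1, (v : ℕ) = i * Q + 1 := by
  simp [spiroHubs]

theorem card_spiroHubs (hQ : 0 < Q) : #(spiroHubs Q k) = k - 1 := by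
  have hbound : ∀ i ∈ range (k - 1), i * Q + 1 < k * Q + 1 := fun i hi => by
    have := Nat.mul_add_le_mul_of_lt (Q := Q) (show i < k by rw [mem_range] at hi; omega)
    omega
  rw [← card_range (k - 1)]
  refine (card_bij (fun i hi => ⟨i * Q + 1, hbound i hi⟩) (fun i hi => ?_)
    (fun i _ i' _ h => Nat.eq_of_mul_eq_mul_right hQ (by simpa using h)) (fun v hv => ?_)).symm
  · exact mem_spiroHubs.2 ⟨i, mem_range.1 hi, rfl⟩
  · obtain ⟨i, hi, hv⟩ := mem_spiroHubs.1 hv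
    exact ⟨i, mem_range.2 hi, Fin.ext hv.symm⟩

variable [DecidableRel (spiroOne Q k).Adj]

theorem card_le_degree_spiroOne {v : Fin (k * Q + 1)} {s : Finset ℕ}
    (hs : ∀ a ∈ s, a ≤ k * Q ∧ a ≠ v ∧ (SpiroStep Q k v a ∨ SpiroStep Q k a v)) :
    #s ≤ (spiroOne Q k).degree v := by
  refine (spiroOne Q k).card_le_degree_of_forall_exists_adj Fin.val fun a ha => ?_
  obtain ⟨hak, hav, hstep⟩ := hs a ha
  exact ⟨⟨a, by omega⟩, spiroOne_adj.2 ⟨fun h => hav (congrArg Fin.val h).symm, hstep⟩, rfl⟩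

theorem two_le_degree_spiroOne (hQ : 2 ≤ Q) (hk : 0 < k) (v : Fin (k * Q + 1)) :
    2 ≤ (spiroOne Q k).degree v := by
  suffices ∃ a b, a ≠ b ∧ ∀ c ∈ ({a, b} : Finset ℕ),
      c ≤ k * Q ∧ c ≠ v ∧ (SpiroStep Q k v c ∨ SpiroStep Q k c v) by
    obtain ⟨a, b, hab, hs⟩ := this
    exact (card_pair hab).symm.le.trans (card_le_degree_spiroOne hs)
  simp only [mem_insert, mem_singleton, forall_eq_or_imp, forall_eq]
  obtain hv | hv := Nat.eq_zero_or_pos v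
  · have hQk := Nat.mul_add_le_mul_of_lt (Q := Q) hk
    rw [zero_mul, zero_add] at hQk
    refine ⟨1, Q, by omega, ⟨by omega, by omega, .inl ?_⟩, by omega, by omega, .inr ?_⟩
    · simpa [hv, spiroContact_one_zero] using spiroStep_contact (Q := Q) hk
    · simpa [hv, spiroContact_one_zero] using spiroStep_close (Q := Q) hk
  obtain ⟨i, hi, j, hj, hjQ, hv⟩ := Nat.exists_eq_mul_add_of_le hv (Nat.lt_succ_iff.1 v.2)
  have hiQ := Nat.mul_add_le_mul_of_lt (Q := Q) hi
  have hc := spiroContact_one_le Q i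
  rw [hv]
  rcases (show j = 1 ∨ j = Q ∨ 1 < j ∧ j < Q by omega) with hj1 | hjQ | ⟨hj1, hjQ⟩
  · subst j
    exact ⟨spiroContact (Q + 1) 1 i, i * Q + 1 + 1, by omega,
      ⟨by omega, by omega, .inr (spiroStep_contact hi)⟩,
      by omega, by omega, .inl (spiroStep_succ hi le_rfl (by omega))⟩
  · subst j
    refine ⟨i * Q + (Q - 1), spiroContact (Q + 1) 1 i, by omega, ⟨by omega, by omega, .inr ?_⟩,
      by omega, by omega, .inl (spiroStep_close hi)⟩
    have := spiroStep_succ (Q := Q) (k := k) hi (j := Q - 1) (by omega) (by omega)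
    rwa [show i * Q + (Q - 1) + 1 = i * Q + Q by omega] at this
  · refine ⟨i * Q + (j - 1), i * Q + j + 1, by omega, ⟨by omega, by omega, .inr ?_⟩,
      by omega, by omega, .inl (spiroStep_succ hi (by omega) hjQ)⟩
    have := spiroStep_succ (Q := Q) (k := k) hi (j := j - 1) (by omega) (by omega)
    rwa [show i * Q + (j - 1) + 1 = i * Q + j by omega] at this

theorem four_le_degree_spiroOne (hQ : 2 ≤ Q) {v : Fin (k * Q + 1)} (hv : v ∈ spiroHubs Q k) :
    4 ≤ (spiroOne Q k).degree v := by
  obtain ⟨i, hi, hv⟩ := mem_spiroHubs.1 hv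
  have hiQ := Nat.mul_add_le_mul_of_lt (Q := Q) (show i + 1 < k by omega)
  have hc := spiroContact_one_le Q i
  have hsucc := add_one_mul i Q
  set s : Finset ℕ := {spiroContact (Q + 1) 1 i, i * Q + 1 + 1, (i + 1) * Q + 1, (i + 1) * Q + Q}
  have hs : #s = 4 := by
    refine card_eq_four.2 ⟨_, _, _, _, ?_, ?_, ?_, ?_, ?_, ?_, rfl⟩ <;> omega
  refine hs ▸ card_le_degree_spiroOne fun a ha => ?_
  simp only [s, mem_insert, mem_singleton] at ha
  rw [hv]
  rcases ha with rfl | rfl | rfl | rfl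
  · exact ⟨by omega, by omega, .inr (spiroStep_contact (by omega))⟩
  · exact ⟨by omega, by omega, .inl (spiroStep_succ (by omega) le_rfl (by omega))⟩
  · refine ⟨by omega, by omega, .inl ?_⟩
    rw [← spiroContact_one_succ]
    exact spiroStep_contact (by omega)
  · refine ⟨by omega, by omega, .inr ?_⟩
    rw [← spiroContact_one_succ]
    exact spiroStep_close (by omega)

theorem card_edgeFinset_spiroOne_le (hQ : 0 < Q) : #(spiroOne Q k).edgeFinset ≤ k * Q + k := by
  set S : Finset (Sym2 ℕ) := ((range k).image fun i => s(spiroContact (Q + 1) 1 i, i * Q + 1)) ∪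
      ((range k ×ˢ Ico 1 Q).image fun p => s(p.1 * Q + p.2, p.1 * Q + p.2 + 1)) ∪
      (range k).image fun i => s(i * Q + Q, spiroContact (Q + 1) 1 i)
  have hstep : ∀ a b, SpiroStep Q k a b → s(a, b) ∈ S := by
    rintro a b ⟨i, hi, ⟨rfl, rfl⟩ | ⟨j, hj, hjQ, rfl, rfl⟩ | ⟨rfl, rfl⟩⟩
    · exact mem_union_left _ (mem_union_left _ (mem_image_of_mem _ (mem_range.2 hi)))
    · refine mem_union_left _ (mem_union_right _ (mem_image.2 ⟨(i, j), ?_, rfl⟩))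
      simp only [mem_product, mem_range, mem_Ico]
      omega
    · exact mem_union_right _ (mem_image_of_mem _ (mem_range.2 hi))
  have hcover : (spiroOne Q k).edgeFinset.image (Sym2.map Fin.val) ⊆ S := by
    rw [image_subset_iff]
    intro e he
    induction e using Sym2.ind with
    | _ u v =>
      rw [SimpleGraph.mem_edgeFinset, SimpleGraph.mem_edgeSet, spiroOne_adj] at he
      obtain ⟨-, h | h⟩ := he
      · exact hstep _ _ h
      · rw [Sym2.map_mk, Sym2.eq_swap]
        exact hstep _ _ h
  calc #(spiroOne Q k).edgeFinset
      = #((spiroOne Q k).edgeFinset.image (Sym2.map Fin.val)) :=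
        (card_image_of_injective _ (Sym2.map.injective Fin.val_injective)).symm
    _ ≤ #S := card_le_card hcover
    _ ≤ #(range k) + #(range k ×ˢ Ico 1 Q) + #(range k) :=
        (card_union_le _ _).trans (add_le_add ((card_union_le _ _).trans
          (add_le_add card_image_le card_image_le)) card_image_le)
    _ = k * Q + k := by
        rw [card_product, card_range, Nat.card_Ico]
        obtain ⟨Q, rfl⟩ := Nat.exists_eq_add_of_lt hQ
        simp only [zero_add, Nat.add_sub_cancel]
        ring

theorem degree_spiroOne_and_card_edgeFinset (hQ : 2 ≤ Q) (hk : 0 < k) :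
    (∀ v, (spiroOne Q k).degree v = if v ∈ spiroHubs Q k then 4 else 2) ∧
      #(spiroOne Q k).edgeFinset = k * Q + k := by
  refine (spiroOne Q k).degree_eq_and_card_edgeFinset_eq_of_le (fun v => ?_)
    (card_edgeFinset_spiroOne_le (by omega)) ?_
  · split_ifs with hv
    · exact four_le_degree_spiroOne hQ hv
    · exact two_le_degree_spiroOne hQ hk v
  · have hcard := card_sdiff_add_card_inter univ (spiroHubs Q k)
    rw [univ_inter, card_univ, Fintype.card_fin, card_spiroHubs (by omega)] at hcard
    rw [sum_ite, filter_mem_eq_inter, univ_inter, filter_notMem_eq_sdiff, sum_const, sum_const,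
      card_spiroHubs (by omega), smul_eq_mul, smul_eq_mul]
    omega

theorem card_edgeFinset_inter_sym2_spiroHubs (hQ : 2 ≤ Q) :
    #((spiroOne Q k).edgeFinset ∩ (spiroHubs Q k).sym2) = k - 2 := by
  have hbound : ∀ i, i < k - 1 → i * Q + 1 < k * Q + 1 := fun i hi => by
    have := Nat.mul_add_le_mul_of_lt (Q := Q) (show i < k by omega)
    omega
  rw [← card_range (k - 2)]
  refine (card_bij (fun i hi => s(⟨i * Q + 1, hbound i (by rw [mem_range] at hi; omega)⟩,
    ⟨(i + 1) * Q + 1, hbound (i + 1) (by rw [mem_range] at hi; omega)⟩))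
    (fun i hi => ?_) (fun i _ i' _ h => ?_) (fun e he => ?_)).symm
  · rw [mem_range] at hi
    rw [mem_inter, SimpleGraph.mem_edgeFinset, SimpleGraph.mem_edgeSet, spiroOne_adj,
      mk_mem_sym2_iff, mem_spiroHubs, mem_spiroHubs]
    refine ⟨⟨fun h => ?_, .inl (spiroStep_contact (i := i + 1) (by omega))⟩,
      ⟨i, by omega, rfl⟩, ⟨i + 1, by omega, rfl⟩⟩
    have := congrArg Fin.val h
    simp only [add_one_mul] at this
    omega
  · rcases Sym2.eq_iff.1 h with ⟨h₁, -⟩ | ⟨h₁, h₂⟩ <;> simp only [Fin.mk.injEq] at h₁ ⊢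
    · exact Nat.eq_of_mul_eq_mul_right (show 0 < Q by omega) (show i * Q = i' * Q by omega)
    · have := Nat.eq_of_mul_eq_mul_right (show 0 < Q by omega) (show i * Q = (i' + 1) * Q by omega)
      simp only [Fin.mk.injEq] at h₂
      have := Nat.eq_of_mul_eq_mul_right (show 0 < Q by omega) (show (i + 1) * Q = i' * Q by omega)
      omega
  · induction e using Sym2.ind with
    | _ u v =>
      rw [mem_inter, SimpleGraph.mem_edgeFinset, SimpleGraph.mem_edgeSet, spiroOne_adj,
        mk_mem_sym2_iff, mem_spiroHubs, mem_spiroHubs] at he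
      obtain ⟨⟨-, h | h⟩, ⟨i₁, hi₁, hu⟩, ⟨i₂, hi₂, hv⟩⟩ := he <;> rw [hu, hv] at h
      · obtain rfl := eq_add_one_of_spiroStep hQ h
        exact ⟨i₁, mem_range.2 (by omega), Sym2.eq_iff.2 (.inl ⟨Fin.ext hu.symm, Fin.ext hv.symm⟩)⟩
      · obtain rfl := eq_add_one_of_spiroStep hQ h
        exact ⟨i₂, mem_range.2 (by omega), Sym2.eq_iff.2 (.inr ⟨Fin.ext hv.symm, Fin.ext hu.symm⟩)⟩

end SpiroOne

theorem abc_spiroGraph_one (q k : ℕ) (hq : 3 ≤ q) (hk : 2 ≤ k) :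
    abcIndex (spiroGraph q 1 k) =
      ((q : ℝ) * (k : ℝ) - (k : ℝ) + 2) / Real.sqrt 2 + ((k : ℝ) - 2) * Real.sqrt 6 / 4 := by
  classical
  obtain ⟨Q, rfl⟩ : ∃ Q, q = Q + 1 := ⟨q - 1, by omega⟩
  obtain ⟨hdeg, hcard⟩ :=
    degree_spiroOne_and_card_edgeFinset (Q := Q) (k := k) (by omega) (by omega)
  change abcIndex (spiroOne Q k) = _
  rw [(spiroOne Q k).abcIndex_eq_of_degree_eq_ite _ hdeg, hcard,
    card_edgeFinset_inter_sym2_spiroHubs (by omega)]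
  push_cast [Nat.cast_sub hk]
  ring
end

section
/- For integers q ≥ 4, k ≥ 1 and 2 ≤ h ≤ q − 2, the polyphenylene chain L_{q,h,k} satisfies ABC(L_{q,h,k}) = 2(k−1)/3 + qk/√2. -/
open Finset

/-- The polyphenylene chain `L_{q,h,k}`: the link of `k` cycles `C_q`, the two contact
vertices in the same cycle being `h` steps apart. -/
def polyGraph (q h k : ℕ) : SimpleGraph (Fin k × Fin q) :=
  SimpleGraph.fromRel (fun p r =>
    (p.1 = r.1 ∧ r.2.1 = (p.2.1 + 1) % q) ∨
    (p.2.1 = h ∧ r.2.1 = 0 ∧ r.1.1 = p.1.1 + 1))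

/-!
Every vertex of `L_{q,h,k}` has degree 2, except the `2(k - 1)` endpoints of the bridges, which
have degree 3. Since `2 ≤ h ≤ q - 2`, the two contact vertices `0` and `h` of a cycle are not
adjacent, so each of the `qk` cycle edges has an endpoint of degree 2 and contributes
`√(d / 2d) = 1/√2`, while each of the `k - 1` bridges joins two vertices of degree 3 and
contributes `√(4/9) = 2/3`.
-/

namespace SimpleGraph

variable {V : Type*} {G H : SimpleGraph V}

theorem degree_sup_of_disjoint (hGH : Disjoint G H) (v : V) [Fintype (G.neighborSet v)]
    [Fintype (H.neighborSet v)] [Fintype ((G ⊔ H).neighborSet v)] :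
    (G ⊔ H).degree v = G.degree v + H.degree v := by
  rw [degree, degree, degree, neighborFinset_sup_of_disjoint v hGH, card_disjUnion]

theorem cycleGraph_adj_iff_val {n : ℕ} {a b : Fin (n + 2)} :
    (cycleGraph (n + 2)).Adj a b ↔
      b.val = (a.val + 1) % (n + 2) ∨ a.val = (b.val + 1) % (n + 2) := by
  rw [cycleGraph_adj, sub_eq_iff_eq_add', sub_eq_iff_eq_add', Fin.ext_iff, Fin.ext_iff, Fin.val_add,
    Fin.val_add, Fin.val_one, or_comm]

theorem cycleGraph_not_adj_of_val_mem {n h : ℕ} (hh₁ : 2 ≤ h) (hh₂ : h ≤ n)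
    {a b : Fin (n + 2)} (ha : a.val = 0 ∨ a.val = h) (hb : b.val = 0 ∨ b.val = h) :
    ¬(cycleGraph (n + 2)).Adj a b := by
  have h₀ : (0 + 1) % (n + 2) = 1 := Nat.mod_eq_of_lt (by omega)
  have h₁ : (h + 1) % (n + 2) = h + 1 := Nat.mod_eq_of_lt (by omega)
  rw [cycleGraph_adj_iff_val]
  rcases ha with ha | ha <;> rcases hb with hb | hb <;> rw [ha, hb] <;> omega

theorem card_edgeFinset_boxProd_bot_cycleGraph {n k : ℕ}
    [Fintype ((⊥ : SimpleGraph (Fin k)) □ cycleGraph (n + 3)).edgeSet] :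
    #((⊥ : SimpleGraph (Fin k)) □ cycleGraph (n + 3)).edgeFinset = k * (n + 3) := by
  classical
  have handshake := sum_degrees_eq_twice_card_edges ((⊥ : SimpleGraph (Fin k)) □ cycleGraph (n + 3))
  simp only [degree_boxProd, bot_degree, cycleGraph_degree_three_le, zero_add, sum_const, card_univ,
    Fintype.card_prod, Fintype.card_fin, smul_eq_mul] at handshake
  convert Nat.eq_of_mul_eq_mul_left two_pos (handshake.symm.trans (mul_comm _ 2))

end SimpleGraph

open SimpleGraph

lemma sqrt_two_add_sub_two_div {d : ℝ} (hd : d ≠ 0) :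
    √((2 + d - 2) / (2 * d)) = (√2)⁻¹ := by
  rw [add_sub_cancel_left, div_mul_cancel_right₀ hd, Real.sqrt_inv]

theorem abcIndex_eq_sum {V : Type*} [Fintype V] (G : SimpleGraph V) [DecidableRel G.Adj] :
    abcIndex G = ∑ e ∈ G.edgeFinset, Sym2.lift ⟨fun u v =>
      √(((G.degree u : ℝ) + G.degree v - 2) / (G.degree u * G.degree v)),
      fun u v => congrArg Real.sqrt (by ring)⟩ e := by
  unfold abcIndex
  convert rfl

theorem abcIndex_eq_of_eq_sup {V : Type*} [Fintype V] [DecidableEq V] {G H K : SimpleGraph V}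
    [DecidableRel G.Adj] [DecidableRel H.Adj] [DecidableRel K.Adj] (hK : K = G ⊔ H)
    (hGH : Disjoint G H) (hG : ∀ u v, G.Adj u v → K.degree u = 2 ∨ K.degree v = 2)
    (hH : ∀ u v, H.Adj u v → K.degree u = 3 ∧ K.degree v = 3) :
    abcIndex K = #G.edgeFinset / √2 + 2 * #H.edgeFinset / 3 := by
  subst hK
  have degree_ne_zero {u v : V} (huv : (G ⊔ H).Adj u v) : ((G ⊔ H).degree v : ℝ) ≠ 0 :=
    Nat.cast_ne_zero.2 ((degree_pos_iff_exists_adj _ v).2 ⟨u, huv.symm⟩).ne'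
  rw [abcIndex_eq_sum]
  simp only [edgeFinset_sup]
  rw [sum_union (disjoint_edgeFinset.2 hGH), sum_eq_card_nsmul (b := (√2)⁻¹) fun e he => ?G_edge,
    sum_eq_card_nsmul (b := (2 / 3 : ℝ)) fun e he => ?H_edge, nsmul_eq_mul, nsmul_eq_mul]
  · ring
  case G_edge =>
    induction e using Sym2.ind with | h u v => ?_
    have huv : G.Adj u v := mem_edgeFinset.1 he
    simp only [Sym2.lift_mk]
    rcases hG u v huv with hu | hv
    · rw [hu, Nat.cast_ofNat, sqrt_two_add_sub_two_div (degree_ne_zero (Or.inl huv))]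
    · rw [hv, Nat.cast_ofNat, add_comm, mul_comm,
        sqrt_two_add_sub_two_div (degree_ne_zero (Or.inl huv.symm))]
  case H_edge =>
    induction e using Sym2.ind with | h u v => ?_
    have huv : H.Adj u v := mem_edgeFinset.1 he
    simp only [Sym2.lift_mk]
    rw [(hH u v huv).1, (hH u v huv).2, Nat.cast_ofNat,
      show ((3 + 3 - 2) / (3 * 3) : ℝ) = (2 / 3) ^ 2 by norm_num, Real.sqrt_sq (by norm_num)]

def polyBridges (q h k : ℕ) : SimpleGraph (Fin k × Fin q) :=
  SimpleGraph.fromRel fun p r => p.2.1 = h ∧ r.2.1 = 0 ∧ r.1.1 = p.1.1 + 1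

section polyBridges

variable {q h k : ℕ}

theorem polyBridges_adj {u v : Fin k × Fin q} :
    (polyBridges q h k).Adj u v ↔
      (u.2.1 = h ∧ v.2.1 = 0 ∧ v.1.1 = u.1.1 + 1) ∨
        (v.2.1 = h ∧ u.2.1 = 0 ∧ u.1.1 = v.1.1 + 1) := by
  refine ⟨And.right, fun huv => ⟨?_, huv⟩⟩
  rintro rfl
  omega

theorem degree_polyBridges_eq_zero {u : Fin k × Fin q} [Fintype ((polyBridges q h k).neighborSet u)]
    (hu₀ : u.2.1 ≠ 0) (huh : u.2.1 ≠ h) : (polyBridges q h k).degree u = 0 := by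
  rw [← card_neighborFinset_eq_degree, card_eq_zero, neighborFinset_eq_empty]
  intro v huv
  rw [polyBridges_adj] at huv
  omega

theorem degree_polyBridges_eq_one (hh : h ≠ 0) {u v : Fin k × Fin q}
    [Fintype ((polyBridges q h k).neighborSet u)] (huv : (polyBridges q h k).Adj u v) :
    (polyBridges q h k).degree u = 1 := by
  rw [← card_neighborFinset_eq_degree, card_eq_one]
  refine ⟨v, eq_singleton_iff_unique_mem.2 ⟨(mem_neighborFinset _ _ _).2 huv, fun w huw => ?_⟩⟩
  rw [mem_neighborFinset, polyBridges_adj] at huw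
  rw [polyBridges_adj] at huv
  ext <;> omega

theorem card_edgeFinset_polyBridges (hh : h < q) {m : ℕ}
    [Fintype (polyBridges q h (m + 1)).edgeSet] : #(polyBridges q h (m + 1)).edgeFinset = m := by
  let bridge (i : Fin m) : Sym2 (Fin (m + 1) × Fin q) :=
    s((i.castSucc, ⟨h, hh⟩), (i.succ, ⟨0, by omega⟩))
  have bridge_injective : bridge.Injective := by
    intro i j hij
    simp only [bridge, Sym2.eq_iff, Prod.ext_iff, Fin.ext_iff, Fin.val_castSucc,
      Fin.val_succ] at hij
    ext
    omega
  have : (polyBridges q h (m + 1)).edgeFinset = univ.image bridge := by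
    ext e
    induction e using Sym2.ind with | h u v => ?_
    simp only [mem_edgeFinset, mem_edgeSet, polyBridges_adj, mem_image, mem_univ, true_and, bridge,
      Sym2.eq_iff, Prod.ext_iff, Fin.ext_iff, Fin.val_castSucc, Fin.val_succ]
    constructor
    · rintro (huv | huv)
      · exact ⟨⟨u.1, by omega⟩, by dsimp only; omega⟩
      · exact ⟨⟨v.1, by omega⟩, by dsimp only; omega⟩
    · rintro ⟨i, hi⟩
      omega
  rw [this, card_image_of_injective _ bridge_injective, card_univ, Fintype.card_fin]

end polyBridges

theorem polyGraph_eq_sup {n h k : ℕ} :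
    polyGraph (n + 2) h k =
      ((⊥ : SimpleGraph (Fin k)) □ cycleGraph (n + 2)) ⊔ polyBridges (n + 2) h k := by
  ext u v
  have cycle_ne : (cycleGraph (n + 2)).Adj u.2 v.2 → u ≠ v := fun huv h =>
    huv.ne (congrArg Prod.snd h)
  rw [cycleGraph_adj_iff_val] at cycle_ne
  rw [sup_adj, boxProd_adj, polyBridges, polyGraph, fromRel_adj, fromRel_adj, bot_adj,
    cycleGraph_adj_iff_val]
  grind

theorem disjoint_boxProd_bot_polyBridges {q h k : ℕ} :
    Disjoint ((⊥ : SimpleGraph (Fin k)) □ cycleGraph q) (polyBridges q h k) := by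
  refine disjoint_left.2 fun u v huv hb => ?_
  rw [boxProd_adj, bot_adj, false_and, false_or] at huv
  rw [polyBridges_adj, huv.2] at hb
  omega

theorem degree_polyGraph {n h k : ℕ} (u : Fin k × Fin (n + 3))
    [Fintype ((polyGraph (n + 3) h k).neighborSet u)]
    [Fintype ((polyBridges (n + 3) h k).neighborSet u)] :
    (polyGraph (n + 3) h k).degree u = 2 + (polyBridges (n + 3) h k).degree u := by
  classical
  -- generalizing `G` lets the `Fintype` instance follow the rewrite along `polyGraph_eq_sup`
  suffices ∀ G, G = (⊥ □ cycleGraph (n + 3)) ⊔ polyBridges (n + 3) h k →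
      ∀ [Fintype (G.neighborSet u)], G.degree u = 2 + (polyBridges (n + 3) h k).degree u from
    this _ polyGraph_eq_sup
  rintro G rfl _
  rw [degree_sup_of_disjoint disjoint_boxProd_bot_polyBridges, degree_boxProd, bot_degree,
    cycleGraph_degree_three_le, zero_add]

theorem degree_polyGraph_eq_two_or {n h k : ℕ} (hh₁ : 2 ≤ h) (hh₂ : h ≤ n + 1)
    {u v : Fin k × Fin (n + 3)} [Fintype ((polyGraph (n + 3) h k).neighborSet u)]
    [Fintype ((polyGraph (n + 3) h k).neighborSet v)]
    (huv : ((⊥ : SimpleGraph (Fin k)) □ cycleGraph (n + 3)).Adj u v) :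
    (polyGraph (n + 3) h k).degree u = 2 ∨ (polyGraph (n + 3) h k).degree v = 2 := by
  classical
  have is_contact (w : Fin k × Fin (n + 3)) (hw : (polyBridges (n + 3) h k).degree w ≠ 0) :
      w.2.1 = 0 ∨ w.2.1 = h := by
    by_contra! hw'
    exact hw (degree_polyBridges_eq_zero hw'.1 hw'.2)
  rw [degree_polyGraph, degree_polyGraph, add_eq_left, add_eq_left]
  rw [boxProd_adj, bot_adj, false_and, false_or] at huv
  by_contra! hne
  exact cycleGraph_not_adj_of_val_mem hh₁ hh₂ (is_contact u hne.1) (is_contact v hne.2) huv.1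

theorem degree_polyGraph_eq_three {n h k : ℕ} (hh : h ≠ 0) {u v : Fin k × Fin (n + 3)}
    [Fintype ((polyGraph (n + 3) h k).neighborSet u)] (huv : (polyBridges (n + 3) h k).Adj u v) :
    (polyGraph (n + 3) h k).degree u = 3 := by
  classical
  rw [degree_polyGraph, degree_polyBridges_eq_one hh huv]

theorem abc_polyGraph (q h k : ℕ) (hq : 4 ≤ q) (hk : 1 ≤ k) (hh₁ : 2 ≤ h) (hh₂ : h ≤ q - 2) :
    abcIndex (polyGraph q h k) =
      2 * ((k : ℝ) - 1) / 3 + (q : ℝ) * (k : ℝ) / Real.sqrt 2 := by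
  classical
  obtain ⟨n, rfl⟩ : ∃ n, q = n + 3 := ⟨q - 3, by omega⟩
  obtain ⟨m, rfl⟩ : ∃ m, k = m + 1 := ⟨k - 1, by omega⟩
  rw [abcIndex_eq_of_eq_sup polyGraph_eq_sup disjoint_boxProd_bot_polyBridges
      (fun u v huv => degree_polyGraph_eq_two_or hh₁ (by omega) huv)
      (fun u v huv => ⟨degree_polyGraph_eq_three (by omega) huv,
        degree_polyGraph_eq_three (by omega) huv.symm⟩),
    card_edgeFinset_boxProd_bot_cycleGraph, card_edgeFinset_polyBridges (by omega)]
  push_cast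
  ring
end

section
/- For integers q ≥ 3 and k ≥ 2, the polyphenylene chain L_{q,1,k} satisfies ABC(L_{q,1,k}) = (4k − 6)/3 + (qk − k + 2)/√2. -/
open Finset

lemma succ_mod_ne {q a : ℕ} (hq : 2 ≤ q) (ha : a < q) : (a + 1) % q ≠ a := by
  rcases Nat.lt_or_ge (a + 1) q with h | h
  · rw [Nat.mod_eq_of_lt h]; omega
  · have h2 : a + 1 = q := by omega
    rw [h2, Nat.mod_self]; omega


section polyAux
variable {q k : ℕ} [NeZero q]

lemma val_add_one (hq : 2 ≤ q) (a : Fin q) : (a + 1).1 = (a.1 + 1) % q := by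
  rw [Fin.add_def]
  simp [Fin.val_one', Nat.mod_eq_of_lt (show 1 < q by omega)]


lemma poly_adj (hq : 3 ≤ q) (p r : Fin k × Fin q) :
    (polyGraph q 1 k).Adj p r ↔
      ((p.1 = r.1 ∧ (r.2 = p.2 + 1 ∨ p.2 = r.2 + 1)) ∨
      (p.2.1 = 1 ∧ r.2.1 = 0 ∧ r.1.1 = p.1.1 + 1) ∨
      (r.2.1 = 1 ∧ p.2.1 = 0 ∧ p.1.1 = r.1.1 + 1)) := by
  rw [polyGraph, SimpleGraph.fromRel_adj]
  have hv : ∀ a b : Fin q, (b.1 = (a.1 + 1) % q) ↔ b = a + 1 := by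
    intro a b
    rw [Fin.ext_iff, val_add_one (by omega)]
  constructor
  · rintro ⟨hne, h | h⟩
    · rcases h with ⟨h1, h2⟩ | h
      · exact Or.inl ⟨h1, Or.inl ((hv _ _).1 h2)⟩
      · exact Or.inr (Or.inl h)
    · rcases h with ⟨h1, h2⟩ | h
      · exact Or.inl ⟨h1.symm, Or.inr ((hv _ _).1 h2)⟩
      · exact Or.inr (Or.inr h)
  · intro h
    constructor
    · rintro rfl
      rcases h with ⟨-, h | h⟩ | ⟨h1, h2, h3⟩ | ⟨h1, h2, h3⟩
      · have := congrArg Fin.val h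
        rw [val_add_one (by omega)] at this
        exact succ_mod_ne (by omega) p.2.2 this.symm
      · have := congrArg Fin.val h
        rw [val_add_one (by omega)] at this
        exact succ_mod_ne (by omega) p.2.2 this.symm
      all_goals omega
    · rcases h with ⟨h1, h2 | h2⟩ | h | h
      · exact Or.inl (Or.inl ⟨h1, (hv _ _).2 h2⟩)
      · exact Or.inr (Or.inl ⟨h1.symm, (hv _ _).2 h2⟩)
      · exact Or.inl (Or.inr h)
      · exact Or.inr (Or.inr h)


lemma val_add_one' (hq : 2 ≤ q) (a : Fin q) :
    (a + 1).1 = if a.1 = q - 1 then 0 else a.1 + 1 := by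
  rw [val_add_one hq]
  have := a.2
  split_ifs with h
  · have : a.1 + 1 = q := by omega
    rw [this, Nat.mod_self]
  · rw [Nat.mod_eq_of_lt (by omega)]

lemma val_sub_one (hq : 2 ≤ q) (a : Fin q) :
    (a - 1).1 = if a.1 = 0 then q - 1 else a.1 - 1 := by
  have h1 : (1 : Fin q).1 = 1 := by
    rw [Fin.val_one']; exact Nat.mod_eq_of_lt (by omega)
  rw [Fin.sub_def]
  show (q - (1 : Fin q).1 + a.1) % q = _
  rw [h1]
  have := a.2
  split_ifs with h
  · simp only [h, Nat.add_zero]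
    exact Nat.mod_eq_of_lt (by omega)
  · have h2 : q - 1 + a.1 = q + (a.1 - 1) := by omega
    rw [h2, Nat.add_mod_left, Nat.mod_eq_of_lt (by omega)]

lemma add_one_ne_sub_one (hq : 3 ≤ q) (a : Fin q) : a + 1 ≠ a - 1 := by
  intro h
  have h2 := congrArg Fin.val h
  have := a.2
  rw [val_add_one' (by omega), val_sub_one (by omega)] at h2
  split_ifs at h2 <;> omega

lemma add_one_ne_self (hq : 2 ≤ q) (a : Fin q) : a + 1 ≠ a := by
  intro h
  have h2 := congrArg Fin.val h
  rw [val_add_one hq] at h2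
  exact succ_mod_ne hq a.2 h2


lemma val_one_q (hq : 2 ≤ q) : (1 : Fin q).1 = 1 := by
  rw [Fin.val_one']; exact Nat.mod_eq_of_lt (by omega)


lemma poly_adj' (hq : 3 ≤ q) (i j : Fin k) (a b : Fin q) :
    (polyGraph q 1 k).Adj (i, a) (j, b) ↔
      ((j = i ∧ (b = a + 1 ∨ b = a - 1)) ∨
      (a.1 = 1 ∧ b.1 = 0 ∧ j.1 = i.1 + 1) ∨
      (b.1 = 1 ∧ a.1 = 0 ∧ i.1 = j.1 + 1)) := by
  rw [poly_adj hq]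
  have h : a = b + 1 ↔ b = a - 1 := by
    constructor
    · rintro rfl; exact (add_sub_cancel_right b 1).symm
    · rintro rfl; exact (sub_add_cancel a 1).symm
  constructor
  · rintro (⟨h1, h2 | h2⟩ | h1 | h1)
    · exact Or.inl ⟨h1.symm, Or.inl h2⟩
    · exact Or.inl ⟨h1.symm, Or.inr (h.1 h2)⟩
    · exact Or.inr (Or.inl h1)
    · exact Or.inr (Or.inr h1)
  · rintro (⟨h1, h2 | h2⟩ | h1 | h1)
    · exact Or.inl ⟨h1.symm, Or.inl h2⟩
    · exact Or.inl ⟨h1.symm, Or.inr (h.2 h2)⟩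
    · exact Or.inr (Or.inl h1)
    · exact Or.inr (Or.inr h1)


lemma poly_deg [NeZero k] (hq : 3 ≤ q) (i : Fin k) (a : Fin q)
    (inst : Fintype ((polyGraph q 1 k).neighborSet (i, a))) :
    @SimpleGraph.degree _ (polyGraph q 1 k) (i, a) inst =
      2 + (if a.1 = 1 ∧ i.1 + 1 < k then 1 else 0)
        + (if a.1 = 0 ∧ 0 < i.1 then 1 else 0) := by
  classical
  rw [← SimpleGraph.card_neighborFinset_eq_degree]
  have hane : (i, a + 1) ≠ (i, a - 1) := by
    intro h
    exact add_one_ne_sub_one hq a (congrArg Prod.snd h)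
  by_cases h1 : a.1 = 1 ∧ i.1 + 1 < k
  · have hk2 : 2 ≤ k := by omega
    have hiv : (i + 1).1 = i.1 + 1 := by
      rw [val_add_one hk2 i]; exact Nat.mod_eq_of_lt h1.2
    have hset : (polyGraph q 1 k).neighborFinset (i, a) =
        {(i, a + 1), (i, a - 1), (i + 1, (0 : Fin q))} := by
      ext ⟨j, b⟩
      rw [SimpleGraph.mem_neighborFinset, poly_adj' hq]
      simp only [mem_insert, mem_singleton, Prod.mk.injEq]
      constructor
      · rintro (⟨rfl, rfl | rfl⟩ | ⟨ha, hb, hj⟩ | ⟨hb, ha, hi⟩)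
        · exact Or.inl ⟨rfl, rfl⟩
        · exact Or.inr (Or.inl ⟨rfl, rfl⟩)
        · exact Or.inr (Or.inr ⟨Fin.ext (by omega), Fin.ext (by simpa using hb)⟩)
        · omega
      · rintro (⟨rfl, rfl⟩ | ⟨rfl, rfl⟩ | ⟨rfl, rfl⟩)
        · exact Or.inl ⟨rfl, Or.inl rfl⟩
        · exact Or.inl ⟨rfl, Or.inr rfl⟩
        · exact Or.inr (Or.inl ⟨h1.1, by simp, by omega⟩)
    rw [hset, card_insert_of_notMem, card_insert_of_notMem, card_singleton]
    · rw [if_pos h1, if_neg (by omega)]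
    · simp only [mem_singleton, Prod.mk.injEq]
      rintro ⟨h, -⟩; exact absurd (congrArg Fin.val h) (by omega)
    · simp only [mem_insert, mem_singleton, Prod.mk.injEq, not_or]
      refine ⟨?_, ?_⟩
      · rintro ⟨-, h⟩; exact add_one_ne_sub_one hq a h
      · rintro ⟨h, -⟩; exact absurd (congrArg Fin.val h) (by omega)
  · by_cases h2 : a.1 = 0 ∧ 0 < i.1
    · have hk2 : 2 ≤ k := by have := i.2; omega
      have hiv : (i - 1).1 = i.1 - 1 := by
        rw [val_sub_one hk2 i, if_neg (by omega)]
      have hq1 : (1 : Fin q).1 = 1 := val_one_q (by omega)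
      have hset : (polyGraph q 1 k).neighborFinset (i, a) =
          {(i, a + 1), (i, a - 1), (i - 1, (1 : Fin q))} := by
        ext ⟨j, b⟩
        rw [SimpleGraph.mem_neighborFinset, poly_adj' hq]
        simp only [mem_insert, mem_singleton, Prod.mk.injEq]
        constructor
        · rintro (⟨rfl, rfl | rfl⟩ | ⟨ha, hb, hj⟩ | ⟨hb, ha, hi⟩)
          · exact Or.inl ⟨rfl, rfl⟩
          · exact Or.inr (Or.inl ⟨rfl, rfl⟩)
          · omega
          · exact Or.inr (Or.inr ⟨Fin.ext (by omega), Fin.ext (by omega)⟩)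
        · rintro (⟨rfl, rfl⟩ | ⟨rfl, rfl⟩ | ⟨rfl, rfl⟩)
          · exact Or.inl ⟨rfl, Or.inl rfl⟩
          · exact Or.inl ⟨rfl, Or.inr rfl⟩
          · exact Or.inr (Or.inr ⟨by omega, h2.1, by omega⟩)
      rw [hset, card_insert_of_notMem, card_insert_of_notMem, card_singleton]
      · rw [if_neg (by omega), if_pos h2]
      · simp only [mem_singleton, Prod.mk.injEq]
        rintro ⟨h, -⟩; exact absurd (congrArg Fin.val h) (by omega)
      · simp only [mem_insert, mem_singleton, Prod.mk.injEq, not_or]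
        refine ⟨?_, ?_⟩
        · rintro ⟨-, h⟩; exact add_one_ne_sub_one hq a h
        · rintro ⟨h, -⟩; exact absurd (congrArg Fin.val h) (by omega)
    · have hset : (polyGraph q 1 k).neighborFinset (i, a) =
          {(i, a + 1), (i, a - 1)} := by
        ext ⟨j, b⟩
        rw [SimpleGraph.mem_neighborFinset, poly_adj' hq]
        simp only [mem_insert, mem_singleton, Prod.mk.injEq]
        constructor
        · rintro (⟨rfl, rfl | rfl⟩ | ⟨ha, hb, hj⟩ | ⟨hb, ha, hi⟩)
          · exact Or.inl ⟨rfl, rfl⟩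
          · exact Or.inr ⟨rfl, rfl⟩
          · exact absurd ⟨ha, by have := j.2; omega⟩ h1
          · exact absurd ⟨ha, by omega⟩ h2
        · rintro (⟨rfl, rfl⟩ | ⟨rfl, rfl⟩)
          · exact Or.inl ⟨rfl, Or.inl rfl⟩
          · exact Or.inl ⟨rfl, Or.inr rfl⟩
      rw [hset, card_insert_of_notMem, card_singleton, if_neg h1, if_neg h2]
      simp only [mem_singleton, Prod.mk.injEq, not_and]
      intro; exact add_one_ne_sub_one hq a

/-- The edge enumeration. -/
def eps (q k : ℕ) [NeZero q] : (Fin k × Fin q) ⊕ (Fin (k - 1)) → Sym2 (Fin k × Fin q)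
  | .inl (i, a) => s((i, a), (i, a + 1))
  | .inr m => s(((⟨m.1, by omega⟩ : Fin k), (1 : Fin q)),
               ((⟨m.1 + 1, by omega⟩ : Fin k), (0 : Fin q)))


lemma add_two_ne (hq : 3 ≤ q) (a : Fin q) : a + 1 + 1 ≠ a := by
  intro h
  have h2 := congrArg Fin.val h
  have ha := a.2
  rw [val_add_one' (by omega) (a + 1), val_add_one' (by omega) a] at h2
  have h3 := val_add_one' (show 2 ≤ q by omega) a
  split_ifs at h2 <;> split_ifs at h3 <;> omega


lemma eps_inj (hq : 3 ≤ q) : Function.Injective (eps q k) := by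
  rintro (⟨i, a⟩ | m) (⟨j, b⟩ | m') h <;> simp only [eps, Sym2.eq_iff, Prod.mk.injEq] at h
  · rcases h with ⟨⟨rfl, rfl⟩, -⟩ | ⟨⟨rfl, rfl⟩, ⟨-, h2⟩⟩
    · rfl
    · exact absurd h2 (add_two_ne hq b)
  · rcases h with ⟨⟨h1, -⟩, ⟨h2, -⟩⟩ | ⟨⟨h1, -⟩, ⟨h2, -⟩⟩ <;>
      (have e1 := congrArg Fin.val h1; have e2 := congrArg Fin.val h2; simp at e1 e2; omega)
  · rcases h with ⟨⟨h1, -⟩, ⟨h2, -⟩⟩ | ⟨⟨h1, -⟩, ⟨h2, -⟩⟩ <;>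
      (have e1 := congrArg Fin.val h1; have e2 := congrArg Fin.val h2; simp at e1 e2; omega)
  · rcases h with ⟨⟨h1, -⟩, -⟩ | ⟨⟨-, h1⟩, -⟩
    · have e1 := congrArg Fin.val h1
      simp only at e1
      exact congrArg Sum.inr (Fin.ext e1)
    · have := congrArg Fin.val h1
      rw [val_one_q (by omega)] at this
      simp at this

lemma val_zero_q : (0 : Fin q).1 = 0 := rfl


lemma eps_image (hq : 3 ≤ q) [DecidableEq (Sym2 (Fin k × Fin q))]
    [Fintype ((polyGraph q 1 k).edgeSet)] :
    (polyGraph q 1 k).edgeFinset = Finset.image (eps q k) univ := by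
  ext e
  rw [SimpleGraph.mem_edgeFinset, Finset.mem_image]
  constructor
  · induction e with
  | _ u v =>
    intro h
    rw [SimpleGraph.mem_edgeSet] at h
    obtain ⟨i, a⟩ := u
    obtain ⟨j, b⟩ := v
    rw [poly_adj' hq] at h
    rcases h with ⟨hji, hb | hb⟩ | ⟨ha, hb, hj⟩ | ⟨hb, ha, hi⟩
    · exact ⟨.inl (i, a), mem_univ _, by rw [hji, hb]; rfl⟩
    · refine ⟨.inl (i, a - 1), mem_univ _, ?_⟩
      show s((i, a - 1), (i, a - 1 + 1)) = _
      rw [hji, hb, sub_add_cancel]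
      exact Sym2.eq_swap
    · refine ⟨.inr ⟨i.1, by have := j.2; omega⟩, mem_univ _, ?_⟩
      show s(((⟨i.1, _⟩ : Fin k), (1 : Fin q)), ((⟨i.1 + 1, _⟩ : Fin k), (0 : Fin q))) = _
      rw [Sym2.eq_iff]
      refine Or.inl ⟨Prod.ext (Fin.ext rfl) (Fin.ext ?_), Prod.ext (Fin.ext ?_) (Fin.ext ?_)⟩
      · rw [val_one_q (show 2 ≤ q by omega)]; show 1 = a.1; omega
      · show i.1 + 1 = j.1; omega
      · show (0 : Fin q).1 = b.1; rw [val_zero_q]; omega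
    · refine ⟨.inr ⟨j.1, by have := i.2; omega⟩, mem_univ _, ?_⟩
      show s(((⟨j.1, _⟩ : Fin k), (1 : Fin q)), ((⟨j.1 + 1, _⟩ : Fin k), (0 : Fin q))) = _
      rw [Sym2.eq_iff]
      refine Or.inr ⟨Prod.ext (Fin.ext rfl) (Fin.ext ?_), Prod.ext (Fin.ext ?_) (Fin.ext ?_)⟩
      · rw [val_one_q (show 2 ≤ q by omega)]; show 1 = b.1; omega
      · show j.1 + 1 = i.1; omega
      · show (0 : Fin q).1 = a.1; rw [val_zero_q]; omega
  · rintro ⟨x, -, rfl⟩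
    match x with
    | .inl (i, a) =>
      show s((i, a), (i, a + 1)) ∈ _
      rw [SimpleGraph.mem_edgeSet, poly_adj' hq]
      exact Or.inl ⟨rfl, Or.inl rfl⟩
    | .inr m =>
      show s(((⟨m.1, _⟩ : Fin k), (1 : Fin q)), ((⟨m.1 + 1, _⟩ : Fin k), (0 : Fin q))) ∈ _
      rw [SimpleGraph.mem_edgeSet, poly_adj' hq]
      exact Or.inr (Or.inl ⟨val_one_q (by omega), rfl, rfl⟩)

lemma term_eq (m n : ℕ) (hm : m = 2 ∨ m = 3) (hn : n = 2 ∨ n = 3) :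
    Real.sqrt (((m : ℝ) + (n : ℝ) - 2) / ((m : ℝ) * (n : ℝ))) =
      if m = 3 ∧ n = 3 then 2 / 3 else (Real.sqrt 2)⁻¹ := by
  have h2 : Real.sqrt 2⁻¹ = (Real.sqrt 2)⁻¹ := Real.sqrt_inv 2
  rcases hm with rfl | rfl <;> rcases hn with rfl | rfl
  · rw [if_neg (by omega), ← h2]; norm_num
  · rw [if_neg (by omega), ← h2]; norm_num
  · rw [if_neg (by omega), ← h2]; norm_num
  · rw [if_pos ⟨rfl, rfl⟩]
    have : ((3 : ℕ) : ℝ) = 3 := by norm_num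
    rw [this]
    rw [show ((3:ℝ) + 3 - 2) / (3 * 3) = (2/3)^2 by norm_num]
    exact Real.sqrt_sq (by norm_num)


end polyAux

theorem abc_polyGraph_one (q k : ℕ) (hq : 3 ≤ q) (hk : 2 ≤ k) :
    abcIndex (polyGraph q 1 k) =
      (4 * (k : ℝ) - 6) / 3 + ((q : ℝ) * (k : ℝ) - (k : ℝ) + 2) / Real.sqrt 2 := by
  classical
  haveI : NeZero q := ⟨by omega⟩
  haveI : NeZero k := ⟨by omega⟩
  unfold abcIndex
  rw [eps_image hq, Finset.sum_image (fun x _ y _ h => eps_inj hq h),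
    Fintype.sum_sum_type, Fintype.sum_prod_type]
  simp only [eps, Sym2.lift_mk]
  simp only [poly_deg hq]
  have key : ∀ (i : Fin k) (a : Fin q),
      Real.sqrt ((((2 + if a.1 = 1 ∧ i.1 + 1 < k then 1 else 0) + if a.1 = 0 ∧ 0 < i.1 then 1 else 0 : ℕ) +
            ((2 + if (a+1).1 = 1 ∧ i.1 + 1 < k then 1 else 0) + if (a+1).1 = 0 ∧ 0 < i.1 then 1 else 0 : ℕ) - 2) /
          (((2 + if a.1 = 1 ∧ i.1 + 1 < k then 1 else 0) + if a.1 = 0 ∧ 0 < i.1 then 1 else 0 : ℕ) *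
            ((2 + if (a+1).1 = 1 ∧ i.1 + 1 < k then 1 else 0) + if (a+1).1 = 0 ∧ 0 < i.1 then 1 else 0 : ℕ))) =
        if a.1 = 0 ∧ 0 < i.1 ∧ i.1 + 1 < k then 2/3 else (Real.sqrt 2)⁻¹ := by
    intro i a
    have hv := val_add_one' (show 2 ≤ q by omega) a
    have ha2 := a.2
    rw [term_eq _ _ (by split_ifs <;> omega) (by split_ifs <;> omega)]
    refine if_congr ?_ rfl rfl
    rcases eq_or_ne a.1 (q - 1) with h | h
    · rw [if_pos h] at hv
      constructor
      · rintro ⟨h1, h2⟩; split_ifs at h1 h2 <;> omega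
      · intro hx; omega
    · rw [if_neg h] at hv
      constructor
      · rintro ⟨h1, h2⟩; split_ifs at h1 h2 <;> omega
      · intro hx; constructor <;> (split_ifs <;> omega)
  have h1q : (1 : Fin q).1 = 1 := val_one_q (by omega)
  have h0q : (0 : Fin q).1 = 0 := rfl
  have key2 : ∀ (m : Fin (k-1)),
      Real.sqrt ((((2 + if (1 : Fin q).1 = 1 ∧ m.1 + 1 < k then 1 else 0) + if (1 : Fin q).1 = 0 ∧ 0 < m.1 then 1 else 0 : ℕ) +
            ((2 + if (0 : Fin q).1 = 1 ∧ m.1 + 1 + 1 < k then 1 else 0) + if (0 : Fin q).1 = 0 ∧ 0 < m.1 + 1 then 1 else 0 : ℕ) - 2) /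
          (((2 + if (1 : Fin q).1 = 1 ∧ m.1 + 1 < k then 1 else 0) + if (1 : Fin q).1 = 0 ∧ 0 < m.1 then 1 else 0 : ℕ) *
            ((2 + if (0 : Fin q).1 = 1 ∧ m.1 + 1 + 1 < k then 1 else 0) + if (0 : Fin q).1 = 0 ∧ 0 < m.1 + 1 then 1 else 0 : ℕ))) = 2/3 := by
    intro m
    have hm2 := m.2
    rw [term_eq _ _ (by split_ifs <;> omega) (by split_ifs <;> omega), if_pos]
    constructor <;> (split_ifs <;> omega)
  simp only [key, key2]
  have split : ∀ (i : Fin k) (a : Fin q),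
      (if a.1 = 0 ∧ 0 < i.1 ∧ i.1 + 1 < k then (2/3 : ℝ) else (Real.sqrt 2)⁻¹) =
        (Real.sqrt 2)⁻¹ + (if a = 0 then
          ((if 0 < i.1 ∧ i.1 + 1 < k then (2/3 : ℝ) else (Real.sqrt 2)⁻¹) - (Real.sqrt 2)⁻¹) else 0) := by
    intro i a
    by_cases h2 : a = 0
    · subst h2
      rw [if_pos rfl]
      simp only [h0q, eq_self_iff_true, true_and]
      split_ifs <;> ring
    · have hne : a.1 ≠ 0 := fun h => h2 (Fin.ext h)
      rw [if_neg h2, if_neg (fun hc => hne hc.1)]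
      ring
  simp only [split]
  simp only [Finset.sum_add_distrib, Finset.sum_const, card_univ, Fintype.card_fin,
    Finset.sum_ite_eq', mem_univ, if_true]
  rw [Fin.sum_univ_eq_sum_range
    (fun n => (if 0 < n ∧ n + 1 < k then (2/3 : ℝ) else (Real.sqrt 2)⁻¹) - (Real.sqrt 2)⁻¹) k]
  rw [Finset.sum_sub_distrib, Finset.sum_ite, Finset.sum_const, Finset.sum_const,
    Finset.sum_const, Finset.card_range]
  have c1 : ((Finset.range k).filter fun n => 0 < n ∧ n + 1 < k).card = k - 2 := by
    have he : ((Finset.range k).filter fun n => 0 < n ∧ n + 1 < k) = Finset.Ioo 0 (k-1) := by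
      ext n
      simp only [Finset.mem_filter, Finset.mem_range, Finset.mem_Ioo]
      omega
    rw [he, Nat.card_Ioo]
    omega
  have c2 : ((Finset.range k).filter fun n => ¬(0 < n ∧ n + 1 < k)).card = 2 := by
    have := Finset.card_filter_add_card_filter_not
      (s := Finset.range k) (p := fun n => 0 < n ∧ n + 1 < k)
    rw [Finset.card_range, c1] at this
    omega
  rw [c1, c2]
  simp only [nsmul_eq_mul, smul_eq_mul]
  rw [Nat.cast_sub (show 2 ≤ k by omega), Nat.cast_sub (show 1 ≤ k by omega)]
  push_cast
  ring
end

section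
/- Let T_n be the chain triangular cactus of order n. (i) For every k ≥ 1: if n = 2k then ABC_GG(T_n) = 2·Σ_{i=1}^{k} ( √((2i−2)/(2i−1)) + √((4k−2i)/(4k−2i+1)) + √((4k−2)/((4k−2i+1)(2i−1))) ), and if n = 2k+1 then ABC_GG(T_n) = 2·Σ_{i=1}^{k} ( √((2i−2)/(2i−1)) + √((4k−2i+2)/(4k−2i+3)) + √(4k/((4k−2i+3)(2i−1))) ) + 2√(2k/(2k+1)) + 2√k/(2k+1). (ii) For every n ≥ 2, ABC(T_n) = (2n+2)/√2 + (n−2)·√6/4. -/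
open Finset

/-- The chain triangular cactus `T n`: vertices `c 0, …, c n` (the `Sum.inl` part) and
`u 1, …, u n` (the `Sum.inr` part), the `i`-th triangle having edges
`c (i-1) — c i`, `c (i-1) — u i` and `c i — u i`. -/
def chainTriangular (n : ℕ) : SimpleGraph (Fin (n + 1) ⊕ Fin n) :=
  SimpleGraph.fromRel (fun p q =>
    ∃ j : Fin n,
      (p = Sum.inl j.castSucc ∧ q = Sum.inl j.succ) ∨
      (p = Sum.inl j.castSucc ∧ q = Sum.inr j) ∨
      (p = Sum.inl j.succ ∧ q = Sum.inr j))

open Sum SimpleGraph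

namespace CT

variable {n : ℕ}

abbrev V (n : ℕ) := Fin (n + 1) ⊕ Fin n

/-- explicit distance function -/
def D : V n → V n → ℕ
  | .inl i, .inl j => max ((i:ℕ) - (j:ℕ)) ((j:ℕ) - (i:ℕ))
  | .inl i, .inr j => if (i:ℕ) ≤ (j:ℕ) then (j:ℕ) + 1 - (i:ℕ) else (i:ℕ) - (j:ℕ)
  | .inr j, .inl i => if (i:ℕ) ≤ (j:ℕ) then (j:ℕ) + 1 - (i:ℕ) else (i:ℕ) - (j:ℕ)
  | .inr i, .inr j => if i = j then 0 else max ((i:ℕ) - (j:ℕ)) ((j:ℕ) - (i:ℕ)) + 1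

lemma adj_iff {p q : V n} : (chainTriangular n).Adj p q ↔ p ≠ q ∧
    (∃ j : Fin n,
      (p = Sum.inl j.castSucc ∧ q = Sum.inl j.succ) ∨
      (p = Sum.inl j.castSucc ∧ q = Sum.inr j) ∨
      (p = Sum.inl j.succ ∧ q = Sum.inr j) ∨
      (q = Sum.inl j.castSucc ∧ p = Sum.inl j.succ) ∨
      (q = Sum.inl j.castSucc ∧ p = Sum.inr j) ∨
      (q = Sum.inl j.succ ∧ p = Sum.inr j)) := by
  rw [chainTriangular, SimpleGraph.fromRel_adj]
  constructor
  · rintro ⟨hne, h | h⟩ <;> obtain ⟨j, hj⟩ := h <;> exact ⟨hne, j, by tauto⟩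
  · rintro ⟨hne, j, hj⟩
    refine ⟨hne, ?_⟩
    rcases hj with h | h | h | h | h | h
    · exact Or.inl ⟨j, by tauto⟩
    · exact Or.inl ⟨j, by tauto⟩
    · exact Or.inl ⟨j, by tauto⟩
    · exact Or.inr ⟨j, by tauto⟩
    · exact Or.inr ⟨j, by tauto⟩
    · exact Or.inr ⟨j, by tauto⟩

lemma adj_cc (j : Fin n) : (chainTriangular n).Adj (inl j.castSucc) (inl j.succ) := by
  rw [adj_iff]
  refine ⟨by simp only [ne_eq, Sum.inl.injEq, Fin.ext_iff, Fin.coe_castSucc, Fin.val_succ]; omega, j, by tauto⟩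

lemma adj_cu (j : Fin n) : (chainTriangular n).Adj (inl j.castSucc) (inr j) := by
  rw [adj_iff]; exact ⟨by simp, j, by tauto⟩

lemma adj_cu' (j : Fin n) : (chainTriangular n).Adj (inl j.succ) (inr j) := by
  rw [adj_iff]; exact ⟨by simp, j, by tauto⟩

lemma lipschitz {p q : V n} (h : (chainTriangular n).Adj p q) (t : V n) :
    D p t ≤ D q t + 1 := by
  rw [adj_iff] at h
  obtain ⟨-, j, hj⟩ := h
  have hjn : (j : ℕ) < n := j.isLt
  rcases t with i | i <;> have hi := i.isLt <;>
    rcases hj with ⟨h1, h2⟩ | ⟨h1, h2⟩ | ⟨h1, h2⟩ | ⟨h1, h2⟩ | ⟨h1, h2⟩ | ⟨h1, h2⟩ <;>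
    subst h1 h2 <;>
    simp only [D, Fin.coe_castSucc, Fin.val_succ, Fin.ext_iff] <;>
    (try split_ifs) <;> simp_all [Fin.ext_iff] <;> omega

end CT

namespace CT
variable {n : ℕ}

lemma adj_cc_n (a : ℕ) (h : a < n) :
    (chainTriangular n).Adj (inl ⟨a, by omega⟩) (inl ⟨a + 1, by omega⟩) := adj_cc ⟨a, h⟩

lemma adj_cu_n (a : ℕ) (h : a < n) :
    (chainTriangular n).Adj (inl ⟨a, by omega⟩) (inr ⟨a, h⟩) := adj_cu ⟨a, h⟩

lemma adj_cu'_n (a : ℕ) (h : a < n) :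
    (chainTriangular n).Adj (inl ⟨a + 1, by omega⟩) (inr ⟨a, h⟩) := adj_cu' ⟨a, h⟩

lemma D_comm (p q : V n) : D p q = D q p := by
  rcases p with i | a <;> rcases q with j | b <;> simp only [D] <;>
    (try split_ifs) <;> (try simp_all [Fin.ext_iff]) <;> omega

lemma reachable_c0_c (a : ℕ) (ha : a ≤ n) :
    (chainTriangular n).Reachable (inl 0) (inl ⟨a, by omega⟩) := by
  induction a with
  | zero => exact Reachable.refl _
  | succ a ih => exact (ih (by omega)).trans (adj_cc_n a (by omega)).reachable

lemma connected (hn : 1 ≤ n) : (chainTriangular n).Connected := by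
  rw [SimpleGraph.connected_iff_exists_forall_reachable]
  refine ⟨inl 0, fun v => ?_⟩
  rcases v with i | j
  · have := reachable_c0_c (n := n) (i : ℕ) (by omega)
    simpa [Fin.eta] using this
  · exact (reachable_c0_c (n := n) (j : ℕ) (by omega)).trans
      (adj_cu_n (j : ℕ) j.isLt).reachable

lemma dist_adj {p q : V n} (h : (chainTriangular n).Adj p q) :
    (chainTriangular n).dist p q ≤ 1 :=
  le_of_eq (SimpleGraph.dist_eq_one_iff_adj.mpr h)

lemma dist_c_add (hn : 1 ≤ n) (a d : ℕ) (h : a + d ≤ n) :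
    (chainTriangular n).dist (inl ⟨a, by omega⟩) (inl ⟨a + d, by omega⟩) ≤ d := by
  induction d with
  | zero => simp
  | succ d ih =>
      have h1 := ih (by omega)
      have h2 : (chainTriangular n).dist (inl (⟨a + d, by omega⟩ : Fin (n+1)))
          (inl ⟨a + d + 1, by omega⟩) ≤ 1 := dist_adj (adj_cc_n (a + d) (by omega))
      have h3 := (connected hn).dist_triangle (u := (inl ⟨a, by omega⟩ : V n))
        (v := inl ⟨a + d, by omega⟩) (w := inl ⟨a + d + 1, by omega⟩)
      have : a + (d + 1) = a + d + 1 := by omega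
      simp only [this]
      omega

lemma dist_cc_le (hn : 1 ≤ n) (a b : ℕ) (ha : a ≤ n) (hb : b ≤ n) :
    (chainTriangular n).dist (inl ⟨a, by omega⟩) (inl ⟨b, by omega⟩) ≤ max (a - b) (b - a) := by
  rcases le_total a b with h | h
  · have h1 := dist_c_add hn a (b - a) (by omega)
    have e : a + (b - a) = b := by omega
    simp only [e] at h1
    exact le_trans h1 (by omega)
  · have h1 := dist_c_add hn b (a - b) (by omega)
    have e : b + (a - b) = a := by omega
    simp only [e] at h1
    rw [SimpleGraph.dist_comm]
    exact le_trans h1 (by omega)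

lemma dist_cu_le (hn : 1 ≤ n) (a b : ℕ) (ha : a ≤ n) (hb : b < n) :
    (chainTriangular n).dist (inl ⟨a, by omega⟩) (inr ⟨b, hb⟩) ≤
      if a ≤ b then b + 1 - a else a - b := by
  rcases le_or_gt a b with h | h
  · have h1 := dist_cc_le hn a b (by omega) (by omega)
    have h2 : (chainTriangular n).dist (inl (⟨b, by omega⟩ : Fin (n+1))) (inr ⟨b, hb⟩) ≤ 1 :=
      dist_adj (adj_cu_n b hb)
    have h3 := (connected hn).dist_triangle (u := (inl ⟨a, by omega⟩ : V n))
      (v := inl ⟨b, by omega⟩) (w := inr ⟨b, hb⟩)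
    rw [if_pos h]
    omega
  · have h1 := dist_cc_le hn a (b + 1) (by omega) (by omega)
    have h2 : (chainTriangular n).dist (inl (⟨b + 1, by omega⟩ : Fin (n+1))) (inr ⟨b, hb⟩) ≤ 1 :=
      dist_adj (adj_cu'_n b hb)
    have h3 := (connected hn).dist_triangle (u := (inl ⟨a, by omega⟩ : V n))
      (v := inl ⟨b + 1, by omega⟩) (w := inr ⟨b, hb⟩)
    rw [if_neg (by omega)]
    omega

lemma dist_uu_le (hn : 1 ≤ n) (a b : ℕ) (ha : a < n) (hb : b < n) (hab : a < b) :
    (chainTriangular n).dist (inr ⟨a, ha⟩) (inr ⟨b, hb⟩) ≤ b - a + 1 := by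
  have h1 : (chainTriangular n).dist (inr ⟨a, ha⟩) (inl (⟨a + 1, by omega⟩ : Fin (n+1))) ≤ 1 := by
    rw [SimpleGraph.dist_comm]; exact dist_adj (adj_cu'_n a ha)
  have h2 := dist_cu_le hn (a + 1) b (by omega) hb
  rw [if_pos (by omega)] at h2
  have h3 := (connected hn).dist_triangle (u := (inr ⟨a, ha⟩ : V n))
    (v := inl ⟨a + 1, by omega⟩) (w := inr ⟨b, hb⟩)
  omega

lemma dist_le_D (hn : 1 ≤ n) (p q : V n) :
    (chainTriangular n).dist p q ≤ D p q := by
  rcases p with i | a <;> rcases q with j | b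
  · have := dist_cc_le hn (i : ℕ) (j : ℕ) (by omega) (by omega)
    simpa [Fin.eta, D] using this
  · have := dist_cu_le hn (i : ℕ) (b : ℕ) (by omega) b.isLt
    simpa [Fin.eta, D] using this
  · have := dist_cu_le hn (j : ℕ) (a : ℕ) (by omega) a.isLt
    rw [SimpleGraph.dist_comm]
    rw [D_comm]
    simpa [Fin.eta, D] using this
  · rcases lt_trichotomy (a : ℕ) (b : ℕ) with h | h | h
    · have := dist_uu_le hn (a : ℕ) (b : ℕ) a.isLt b.isLt h
      have hne : a ≠ b := by intro e; rw [e] at h; omega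
      simp only [Fin.eta] at this
      simp only [D, hne, if_false]
      omega
    · have : a = b := Fin.ext h
      subst this
      simp [D, SimpleGraph.dist_self]
    · have := dist_uu_le hn (b : ℕ) (a : ℕ) b.isLt a.isLt h
      have hne : a ≠ b := by intro e; rw [e] at h; omega
      simp only [Fin.eta] at this
      rw [SimpleGraph.dist_comm]
      simp only [D, hne, if_false]
      omega

lemma walk_le {f : V n → ℕ} {t : V n} (h0 : f t = 0)
    (h1 : ∀ ⦃p q : V n⦄, (chainTriangular n).Adj p q → f p ≤ f q + 1) :
    ∀ {s : V n} (w : (chainTriangular n).Walk s t), f s ≤ w.length := by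
  intro s w
  induction w with
  | nil => simp [h0]
  | cons h p ih =>
      rw [SimpleGraph.Walk.length_cons]
      exact le_trans (h1 h) (by omega)

lemma D_le_dist (hn : 1 ≤ n) (p q : V n) : D p q ≤ (chainTriangular n).dist p q := by
  obtain ⟨w, hw⟩ := (connected hn).exists_walk_length_eq_dist p q
  rw [← hw]
  refine walk_le (f := fun x => D x q) ?_ ?_ w
  · rcases q with j | b <;> simp [D]
  · intro x y hxy
    exact lipschitz hxy q

lemma dist_eq (hn : 1 ≤ n) (p q : V n) : (chainTriangular n).dist p q = D p q :=
  le_antisymm (dist_le_D hn p q) (D_le_dist hn p q)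

end CT

namespace CT
variable {n : ℕ}

open Finset in
lemma card_filter_sum (P : V n → Prop) [DecidablePred P] :
    (univ.filter P).card =
      (univ.filter fun i : Fin (n+1) => P (inl i)).card +
      (univ.filter fun j : Fin n => P (inr j)).card := by
  rw [← Finset.card_toLeft_add_card_toRight]
  congr 1 <;> [skip; skip] <;> (first
    | (congr 1; ext x; simp [Finset.mem_toLeft, Finset.mem_toRight]))

open Finset in
lemma nat_card_eq (P : V n → Prop) [DecidablePred P] :
    Nat.card {w : V n | P w} = (univ.filter P).card := by
  rw [Nat.card_coe_set_eq, Set.ncard_eq_toFinset_card', Set.toFinset_setOf]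

open Finset in
lemma card_fin_filter {m : ℕ} (Q : Fin m → Prop) [DecidablePred Q] (s : Finset ℕ)
    (h : ∀ i : Fin m, Q i ↔ (i : ℕ) ∈ s) (hs : ∀ x ∈ s, x < m) :
    (univ.filter Q).card = s.card := by
  refine Finset.card_bij' (fun i _ => (i : ℕ)) (fun x hx => ⟨x, hs x hx⟩) ?_ ?_ ?_ ?_
  · intro a ha; exact (h a).mp (by simpa using ha)
  · intro x hx; simp [(h ⟨x, hs x hx⟩).mpr hx]
  · intro a ha; simp
  · intro x hx; simp

end CT

namespace CT
variable {n : ℕ}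

lemma nClose_eq_count (hn : 1 ≤ n) (u v : V n) (s t : Finset ℕ)
    (h1 : ∀ i : Fin (n+1), (D (inl i) u < D (inl i) v) ↔ (i : ℕ) ∈ s)
    (h2 : ∀ j : Fin n, (D (inr j) u < D (inr j) v) ↔ (j : ℕ) ∈ t)
    (hs : ∀ x ∈ s, x < n + 1) (ht : ∀ x ∈ t, x < n) :
    nClose (chainTriangular n) u v = s.card + t.card := by
  classical
  rw [nClose]
  have hset : {w : V n | (chainTriangular n).Reachable u w ∧
      (chainTriangular n).dist w u < (chainTriangular n).dist w v} =
      {w : V n | D w u < D w v} := by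
    ext w
    simp only [Set.mem_setOf_eq, dist_eq hn]
    exact ⟨fun h => h.2, fun h => ⟨(connected hn).preconnected u w, h⟩⟩
  rw [hset, nat_card_eq, card_filter_sum]
  rw [card_fin_filter _ s h1 hs, card_fin_filter _ t h2 ht]

lemma nClose_cc_left (hn : 1 ≤ n) (j : Fin n) :
    nClose (chainTriangular n) (inl j.castSucc) (inl j.succ) = 2 * (j : ℕ) + 1 := by
  have hj := j.isLt
  rw [nClose_eq_count hn _ _ (Finset.range ((j:ℕ)+1)) (Finset.range (j:ℕ)) ?_ ?_ ?_ ?_]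
  · rw [Finset.card_range, Finset.card_range]; omega
  · intro i
    simp only [D, Fin.coe_castSucc, Fin.val_succ, Finset.mem_range]
    omega
  · intro i
    have hi := i.isLt
    simp only [D, Fin.coe_castSucc, Fin.val_succ, Finset.mem_range]
    split_ifs <;> simp_all [Fin.ext_iff] <;> omega
  · intro x hx; simp at hx; omega
  · intro x hx; simp at hx; omega

lemma nClose_cc_right (hn : 1 ≤ n) (j : Fin n) :
    nClose (chainTriangular n) (inl j.succ) (inl j.castSucc) = 2 * n - 2 * (j : ℕ) - 1 := by
  have hj := j.isLt
  rw [nClose_eq_count hn _ _ (Finset.Ico ((j:ℕ)+1) (n+1)) (Finset.Ico ((j:ℕ)+1) n) ?_ ?_ ?_ ?_]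
  · rw [Nat.card_Ico, Nat.card_Ico]; omega
  · intro i
    simp only [D, Fin.coe_castSucc, Fin.val_succ, Finset.mem_Ico]
    have hi := i.isLt
    omega
  · intro i
    have hi := i.isLt
    simp only [D, Fin.coe_castSucc, Fin.val_succ, Finset.mem_Ico]
    split_ifs <;> simp_all [Fin.ext_iff] <;> omega
  · intro x hx; simp at hx; omega
  · intro x hx; simp at hx; omega

lemma nClose_cu_c (hn : 1 ≤ n) (j : Fin n) :
    nClose (chainTriangular n) (inl j.castSucc) (inr j) = 2 * (j : ℕ) + 1 := by
  have hj := j.isLt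
  rw [nClose_eq_count hn _ _ (Finset.range ((j:ℕ)+1)) (Finset.range (j:ℕ)) ?_ ?_ ?_ ?_]
  · rw [Finset.card_range, Finset.card_range]; omega
  · intro i
    have hi := i.isLt
    simp only [D, Fin.coe_castSucc, Finset.mem_range]
    split_ifs <;> omega
  · intro i
    have hi := i.isLt
    simp only [D, Fin.coe_castSucc, Finset.mem_range]
    split_ifs <;> simp_all [Fin.ext_iff] <;> omega
  · intro x hx; simp at hx; omega
  · intro x hx; simp at hx; omega

lemma nClose_cu_u (hn : 1 ≤ n) (j : Fin n) :
    nClose (chainTriangular n) (inr j) (inl j.castSucc) = 1 := by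
  have hj := j.isLt
  rw [nClose_eq_count hn _ _ (∅ : Finset ℕ) ({(j:ℕ)} : Finset ℕ) ?_ ?_ ?_ ?_]
  · simp
  · intro i
    have hi := i.isLt
    simp only [D, Fin.coe_castSucc, Finset.notMem_empty, iff_false, not_lt]
    split_ifs <;> omega
  · intro i
    have hi := i.isLt
    simp only [D, Fin.coe_castSucc, Finset.mem_singleton]
    split_ifs <;> simp_all [Fin.ext_iff] <;> omega
  · intro x hx; simp at hx
  · intro x hx; simp at hx; omega

lemma nClose_c'u_c (hn : 1 ≤ n) (j : Fin n) :
    nClose (chainTriangular n) (inl j.succ) (inr j) = 2 * n - 2 * (j : ℕ) - 1 := by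
  have hj := j.isLt
  rw [nClose_eq_count hn _ _ (Finset.Ico ((j:ℕ)+1) (n+1)) (Finset.Ico ((j:ℕ)+1) n) ?_ ?_ ?_ ?_]
  · rw [Nat.card_Ico, Nat.card_Ico]; omega
  · intro i
    have hi := i.isLt
    simp only [D, Fin.val_succ, Finset.mem_Ico]
    split_ifs <;> omega
  · intro i
    have hi := i.isLt
    simp only [D, Fin.val_succ, Finset.mem_Ico]
    split_ifs <;> simp_all [Fin.ext_iff] <;> omega
  · intro x hx; simp at hx; omega
  · intro x hx; simp at hx; omega

lemma nClose_c'u_u (hn : 1 ≤ n) (j : Fin n) :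
    nClose (chainTriangular n) (inr j) (inl j.succ) = 1 := by
  have hj := j.isLt
  rw [nClose_eq_count hn _ _ (∅ : Finset ℕ) ({(j:ℕ)} : Finset ℕ) ?_ ?_ ?_ ?_]
  · simp
  · intro i
    have hi := i.isLt
    simp only [D, Fin.val_succ, Finset.notMem_empty, iff_false, not_lt]
    split_ifs <;> omega
  · intro i
    have hi := i.isLt
    simp only [D, Fin.val_succ, Finset.mem_singleton]
    split_ifs <;> simp_all [Fin.ext_iff] <;> omega
  · intro x hx; simp at hx
  · intro x hx; simp at hx; omega

end CT

namespace CT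
variable {n : ℕ}

noncomputable instance : Fintype (chainTriangular n).edgeSet :=
  Set.Finite.fintype (Set.toFinite _)

def F (n : ℕ) : Fin n × Fin 3 → Sym2 (V n) := fun x =>
  if x.2 = 0 then s(inl x.1.castSucc, inl x.1.succ)
  else if x.2 = 1 then s(inl x.1.castSucc, inr x.1)
  else s(inl x.1.succ, inr x.1)

lemma edgeFinset_eq (inst : Fintype (chainTriangular n).edgeSet) :
    @SimpleGraph.edgeFinset (V n) (chainTriangular n) inst = Finset.univ.image (F n) := by
  ext e
  refine Sym2.ind (fun p q => ?_) e
  rw [SimpleGraph.mem_edgeFinset, SimpleGraph.mem_edgeSet, adj_iff, Finset.mem_image]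
  constructor
  · rintro ⟨hne, j, h | h | h | h | h | h⟩ <;> obtain ⟨h1, h2⟩ := h <;> subst h1 h2
    · exact ⟨(j, 0), Finset.mem_univ _, by simp [F]⟩
    · exact ⟨(j, 1), Finset.mem_univ _, by simp [F]⟩
    · exact ⟨(j, 2), Finset.mem_univ _, by simp [F]⟩
    · exact ⟨(j, 0), Finset.mem_univ _, by simp [F, Sym2.eq_swap]⟩
    · exact ⟨(j, 1), Finset.mem_univ _, by simp [F, Sym2.eq_swap]⟩
    · exact ⟨(j, 2), Finset.mem_univ _, by simp [F, Sym2.eq_swap]⟩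
  · rintro ⟨⟨j, k⟩, -, hF⟩
    have hadj : (chainTriangular n).Adj p q ∨ (chainTriangular n).Adj q p := by
      fin_cases k <;> simp only [F] at hF <;>
        first
        | (rcases (Sym2.eq_iff.mp hF) with ⟨h1, h2⟩ | ⟨h1, h2⟩ <;> subst h1 h2 <;>
            [left; right] <;>
            first
              | exact adj_cc j
              | exact adj_cu j
              | exact adj_cu' j)
    rcases hadj with h | h
    · exact adj_iff.mp h
    · obtain ⟨hne, j', hj⟩ := adj_iff.mp h
      exact ⟨hne.symm, j', by tauto⟩

lemma F_inj : Function.Injective (F n) := by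
  rintro ⟨j, k⟩ ⟨j', k'⟩ h
  have hj := j.isLt
  have hj' := j'.isLt
  fin_cases k <;> fin_cases k' <;>
    simp only [F, Fin.isValue, show ((⟨0, by omega⟩ : Fin 3) = 0) from rfl,
      show ((⟨1, by omega⟩ : Fin 3) = 1) from rfl,
      show ((⟨2, by omega⟩ : Fin 3) = 2) from rfl] at h <;>
    simp only [show ((0:Fin 3) = 0) = True by simp, show ((1:Fin 3) = 0) = False by simp,
      show ((1:Fin 3) = 1) = True by simp, show ((2:Fin 3) = 0) = False by simp,
      show ((2:Fin 3) = 1) = False by simp, if_true, if_false] at h <;>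
    rw [Sym2.eq_iff] at h <;>
    rcases h with ⟨h1, h2⟩ | ⟨h1, h2⟩ <;>
    simp_all [Fin.ext_iff] <;> (try omega) <;> exact Fin.ext (by omega)

lemma sum_edges (inst : Fintype (chainTriangular n).edgeSet) (f : Sym2 (V n) → ℝ) :
    ∑ e ∈ @SimpleGraph.edgeFinset (V n) (chainTriangular n) inst, f e =
      ∑ j : Fin n, (f s(inl j.castSucc, inl j.succ) +
        f s(inl j.castSucc, inr j) + f s(inl j.succ, inr j)) := by
  rw [edgeFinset_eq inst, Finset.sum_image (fun a _ b _ h => F_inj h)]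
  rw [Fintype.sum_prod_type]
  refine Finset.sum_congr rfl fun j _ => ?_
  rw [Fin.sum_univ_three]
  simp only [F]
  norm_num [show ((2:Fin 3) = 0) = False by decide, show ((2:Fin 3) = 1) = False by decide]

end CT

namespace CT
variable {n : ℕ}

lemma adj_inl_inl {x y : Fin (n+1)} :
    (chainTriangular n).Adj (inl x) (inl y) ↔ ((x:ℕ) + 1 = y ∨ (y:ℕ) + 1 = x) := by
  rw [adj_iff]
  constructor
  · rintro ⟨hne, j, hj⟩
    have hjn := j.isLt
    rcases hj with ⟨h1, h2⟩ | ⟨h1, h2⟩ | ⟨h1, h2⟩ | ⟨h1, h2⟩ | ⟨h1, h2⟩ | ⟨h1, h2⟩ <;>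
      simp_all [Fin.ext_iff] <;> omega
  · intro h
    have hy := y.isLt
    have hx := x.isLt
    rcases h with h | h
    · refine ⟨?_, ⟨(x:ℕ), by omega⟩, Or.inl ⟨?_, ?_⟩⟩
      · intro e
        rw [Sum.inl.injEq, Fin.ext_iff] at e
        omega
      · exact congrArg inl (Fin.ext (by simp))
      · exact congrArg inl (Fin.ext (by simp [Fin.val_succ]; omega))
    · refine ⟨?_, ⟨(y:ℕ), by omega⟩, Or.inr (Or.inr (Or.inr (Or.inl ⟨?_, ?_⟩)))⟩
      · intro e
        rw [Sum.inl.injEq, Fin.ext_iff] at e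
        omega
      · exact congrArg inl (Fin.ext (by simp))
      · exact congrArg inl (Fin.ext (by simp [Fin.val_succ]; omega))

lemma adj_inl_inr {x : Fin (n+1)} {b : Fin n} :
    (chainTriangular n).Adj (inl x) (inr b) ↔ ((x:ℕ) = b ∨ (x:ℕ) = (b:ℕ) + 1) := by
  rw [adj_iff]
  constructor
  · rintro ⟨hne, j, hj⟩
    have hjn := j.isLt
    rcases hj with ⟨h1, h2⟩ | ⟨h1, h2⟩ | ⟨h1, h2⟩ | ⟨h1, h2⟩ | ⟨h1, h2⟩ | ⟨h1, h2⟩ <;>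
      simp_all [Fin.ext_iff] <;> omega
  · intro h
    rcases h with h | h
    · exact ⟨by simp, b, Or.inr (Or.inl ⟨congrArg inl (Fin.ext (by simp [h])), rfl⟩)⟩
    · exact ⟨by simp, b, Or.inr (Or.inr (Or.inl
        ⟨congrArg inl (Fin.ext (by simp [Fin.val_succ, h])), rfl⟩))⟩

lemma not_adj_inr_inr {a b : Fin n} : ¬ (chainTriangular n).Adj (inr a) (inr b) := by
  rw [adj_iff]
  rintro ⟨hne, j, hj⟩
  rcases hj with ⟨h1, h2⟩ | ⟨h1, h2⟩ | ⟨h1, h2⟩ | ⟨h1, h2⟩ | ⟨h1, h2⟩ | ⟨h1, h2⟩ <;> simp_all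

lemma degree_eq_count (v : V n) (inst : Fintype ((chainTriangular n).neighborSet v))
    (s t : Finset ℕ)
    (h1 : ∀ i : Fin (n+1), (chainTriangular n).Adj v (inl i) ↔ (i : ℕ) ∈ s)
    (h2 : ∀ j : Fin n, (chainTriangular n).Adj v (inr j) ↔ (j : ℕ) ∈ t)
    (hs : ∀ x ∈ s, x < n + 1) (ht : ∀ x ∈ t, x < n) :
    @SimpleGraph.degree (V n) (chainTriangular n) v inst = s.card + t.card := by
  classical
  rw [← SimpleGraph.card_neighborSet_eq_degree, ← Nat.card_eq_fintype_card]
  have : (chainTriangular n).neighborSet v = {w : V n | (chainTriangular n).Adj v w} := rfl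
  rw [this, nat_card_eq, card_filter_sum]
  rw [card_fin_filter _ s h1 hs, card_fin_filter _ t h2 ht]

lemma degree_castSucc (hn : 1 ≤ n) (j : Fin n)
    (inst : Fintype ((chainTriangular n).neighborSet (inl j.castSucc))) :
    @SimpleGraph.degree (V n) (chainTriangular n) (inl j.castSucc) inst =
      if (j:ℕ) = 0 then 2 else 4 := by
  have hj := j.isLt
  rcases Nat.eq_zero_or_pos (j : ℕ) with h0 | h0
  · rw [degree_eq_count _ inst ({1} : Finset ℕ) ({0} : Finset ℕ) ?_ ?_ ?_ ?_, if_pos h0]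
    · simp
    · intro i; rw [adj_inl_inl]; simp [Fin.coe_castSucc, h0]; omega
    · intro b; rw [adj_inl_inr]; simp [Fin.coe_castSucc, h0]; omega
    · intro x hx; simp at hx; omega
    · intro x hx; simp at hx; omega
  · rw [degree_eq_count _ inst ({(j:ℕ) - 1, (j:ℕ) + 1} : Finset ℕ)
      ({(j:ℕ) - 1, (j:ℕ)} : Finset ℕ) ?_ ?_ ?_ ?_, if_neg (by omega)]
    · rw [Finset.card_insert_of_notMem (by simp +arith),
        Finset.card_insert_of_notMem (by simp; omega)]
      simp
    · intro i; rw [adj_inl_inl]; simp [Fin.coe_castSucc]; omega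
    · intro b; rw [adj_inl_inr]; simp [Fin.coe_castSucc]; omega
    · intro x hx; simp at hx; omega
    · intro x hx; simp at hx; omega

lemma degree_succ (hn : 1 ≤ n) (j : Fin n)
    (inst : Fintype ((chainTriangular n).neighborSet (inl j.succ))) :
    @SimpleGraph.degree (V n) (chainTriangular n) (inl j.succ) inst =
      if (j:ℕ) = n - 1 then 2 else 4 := by
  have hj := j.isLt
  rcases eq_or_ne (j : ℕ) (n - 1) with h0 | h0
  · rw [degree_eq_count _ inst ({(j:ℕ)} : Finset ℕ) ({(j:ℕ)} : Finset ℕ) ?_ ?_ ?_ ?_, if_pos h0]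
    · simp
    · intro i; rw [adj_inl_inl]; simp [Fin.val_succ]; omega
    · intro b; rw [adj_inl_inr]; simp [Fin.val_succ]; omega
    · intro x hx; simp at hx; omega
    · intro x hx; simp at hx; omega
  · rw [degree_eq_count _ inst ({(j:ℕ), (j:ℕ) + 2} : Finset ℕ)
      ({(j:ℕ), (j:ℕ) + 1} : Finset ℕ) ?_ ?_ ?_ ?_, if_neg h0]
    · rw [Finset.card_insert_of_notMem (by simp), Finset.card_insert_of_notMem (by simp)]
      simp
    · intro i; rw [adj_inl_inl]; simp [Fin.val_succ]; omega
    · intro b; rw [adj_inl_inr]; simp [Fin.val_succ]; omega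
    · intro x hx; simp at hx; omega
    · intro x hx; simp at hx; omega

lemma degree_inr (j : Fin n)
    (inst : Fintype ((chainTriangular n).neighborSet (inr j))) :
    @SimpleGraph.degree (V n) (chainTriangular n) (inr j) inst = 2 := by
  have hj := j.isLt
  rw [degree_eq_count _ inst ({(j:ℕ), (j:ℕ) + 1} : Finset ℕ) (∅ : Finset ℕ) ?_ ?_ ?_ ?_]
  · rw [Finset.card_insert_of_notMem (by simp)]; simp
  · intro i
    constructor
    · intro h
      have := (adj_inl_inr (x := i) (b := j)).mp h.symm
      simp; omega
    · intro h
      refine ((adj_inl_inr (x := i) (b := j)).mpr ?_).symm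
      simp at h; omega
  · intro b
    constructor
    · intro h; exact absurd h not_adj_inr_inr
    · intro h; simp at h
  · intro x hx; simp at hx; omega
  · intro x hx; simp at hx

end CT

namespace CT
variable {n : ℕ}

noncomputable def gterm (n i : ℕ) : ℝ :=
  Real.sqrt ((2*(i:ℝ) - 2)/(2*(i:ℝ) - 1)) +
  Real.sqrt ((2*(n:ℝ) - 2*(i:ℝ))/(2*(n:ℝ) - 2*(i:ℝ) + 1)) +
  Real.sqrt ((2*(n:ℝ) - 2)/((2*(i:ℝ) - 1)*(2*(n:ℝ) - 2*(i:ℝ) + 1)))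

lemma abcgg_sum (hn : 1 ≤ n) :
    abcggIndex (chainTriangular n) = ∑ i ∈ Finset.Icc 1 n, gterm n i := by
  rw [abcggIndex]
  rw [sum_edges _]
  have step : ∀ j : Fin n,
      (Sym2.lift ⟨fun u v =>
        Real.sqrt (((nClose (chainTriangular n) u v : ℝ) + (nClose (chainTriangular n) v u : ℝ) - 2) /
          ((nClose (chainTriangular n) u v : ℝ) * (nClose (chainTriangular n) v u : ℝ))),
        fun u v => congrArg Real.sqrt (by ring)⟩ s(inl j.castSucc, inl j.succ) +
       Sym2.lift ⟨fun u v =>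
        Real.sqrt (((nClose (chainTriangular n) u v : ℝ) + (nClose (chainTriangular n) v u : ℝ) - 2) /
          ((nClose (chainTriangular n) u v : ℝ) * (nClose (chainTriangular n) v u : ℝ))),
        fun u v => congrArg Real.sqrt (by ring)⟩ s(inl j.castSucc, inr j) +
       Sym2.lift ⟨fun u v =>
        Real.sqrt (((nClose (chainTriangular n) u v : ℝ) + (nClose (chainTriangular n) v u : ℝ) - 2) /
          ((nClose (chainTriangular n) u v : ℝ) * (nClose (chainTriangular n) v u : ℝ))),
        fun u v => congrArg Real.sqrt (by ring)⟩ s(inl j.succ, inr j)) = gterm n ((j:ℕ) + 1) := by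
    intro j
    have hj := j.isLt
    simp only [Sym2.lift_mk]
    simp only [nClose_cc_left hn j, nClose_cc_right hn j, nClose_cu_c hn j, nClose_cu_u hn j,
      nClose_c'u_c hn j, nClose_c'u_u hn j]
    have c1 : ((2 * n - 2 * (j:ℕ) - 1 : ℕ) : ℝ) = 2 * (n:ℝ) - 2 * (j:ℝ) - 1 := by
      have e : (2 * n - 2 * (j:ℕ) - 1 : ℕ) = 2 * n - (2 * (j:ℕ) + 1) := by omega
      rw [e, Nat.cast_sub (by omega)]
      push_cast; ring
    rw [c1, gterm]
    push_cast
    ring_nf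
  rw [Finset.sum_congr rfl (fun j _ => step j)]
  rw [Fin.sum_univ_eq_sum_range (fun m => gterm n (m + 1)) n]
  refine Finset.sum_bij' (i := fun m (_ : m ∈ Finset.range n) => m + 1)
    (j := fun i (_ : i ∈ Finset.Icc 1 n) => i - 1) ?_ ?_ ?_ ?_ ?_
  · intro a ha; simp at ha ⊢; omega
  · intro a ha; simp at ha ⊢; omega
  · intro a ha; simp
  · intro a ha; simp at ha ⊢; omega
  · intro a ha; rfl

end CT

namespace CT
variable {n : ℕ}

lemma sqrt_half : Real.sqrt ((4:ℝ)/8) = Real.sqrt (1/2) := by norm_num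

lemma sqrt_616 : Real.sqrt ((6:ℝ)/16) = Real.sqrt 6 / 4 := by
  rw [show (6:ℝ)/16 = 6 * (1/4)^2 by norm_num, Real.sqrt_mul (by norm_num),
    Real.sqrt_sq (by norm_num)]
  ring

lemma abc_sum (hn : 2 ≤ n) :
    abcIndex (chainTriangular n) =
      (2 * (n : ℝ) + 2) / Real.sqrt 2 + ((n : ℝ) - 2) * Real.sqrt 6 / 4 := by
  have hn1 : 1 ≤ n := by omega
  rw [abcIndex]
  rw [sum_edges _]
  trans (∑ j : Fin n, ((if (j:ℕ) = 0 ∨ (j:ℕ) = n - 1 then Real.sqrt (1/2)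
      else Real.sqrt 6 / 4) + Real.sqrt (1/2) + Real.sqrt (1/2)))
  · refine Finset.sum_congr rfl fun j _ => ?_
    have hj := j.isLt
    simp only [Sym2.lift_mk]
    rw [degree_castSucc hn1 j, degree_succ hn1 j, degree_inr j]
    rcases eq_or_ne (j:ℕ) 0 with h0 | h0 <;> rcases eq_or_ne (j:ℕ) (n-1) with h1 | h1
    · omega
    · rw [if_pos h0, if_neg h1, if_pos (Or.inl h0)]
      push_cast
      norm_num
    · rw [if_neg h0, if_pos h1, if_pos (Or.inr h1)]
      push_cast
      norm_num [mul_comm]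
    · rw [if_neg h0, if_neg h1, if_neg (by tauto)]
      push_cast
      rw [show ((4:ℝ) + 4 - 2) / (4 * 4) = 6/16 by norm_num, sqrt_616]
      norm_num
  rw [Finset.sum_add_distrib, Finset.sum_add_distrib, Finset.sum_const]
  have hcard : (Finset.univ : Finset (Fin n)).card = n := by simp
  rw [hcard]
  have hsplit : ∑ j : Fin n,
      (if (j:ℕ) = 0 ∨ (j:ℕ) = n - 1 then Real.sqrt (1/2) else Real.sqrt 6 / 4) =
      2 * Real.sqrt (1/2) + ((n:ℝ) - 2) * (Real.sqrt 6 / 4) := by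
    rw [Fin.sum_univ_eq_sum_range (fun m => if m = 0 ∨ m = n - 1 then Real.sqrt (1/2)
      else Real.sqrt 6 / 4) n]
    rw [Finset.sum_ite]
    have hfil : (Finset.range n).filter (fun m => m = 0 ∨ m = n - 1) = {0, n-1} := by
      ext x; simp; omega
    have hfilcard : ((Finset.range n).filter (fun m => m = 0 ∨ m = n - 1)).card = 2 := by
      rw [hfil, Finset.card_insert_of_notMem (by simp; omega)]; simp
    have hfilcard2 : ((Finset.range n).filter (fun m => ¬(m = 0 ∨ m = n - 1))).card = n - 2 := by
      have := Finset.card_filter_add_card_filter_not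
        (s := Finset.range n) (p := fun m => m = 0 ∨ m = n - 1)
      rw [Finset.card_range] at this
      omega
    rw [Finset.sum_const, Finset.sum_const, hfilcard, hfilcard2]
    rw [nsmul_eq_mul, nsmul_eq_mul]
    rw [Nat.cast_sub hn]
    push_cast
    ring
  have h12 : Real.sqrt (1/2) = 1 / Real.sqrt 2 := by
    rw [one_div, one_div, Real.sqrt_inv]
  rw [hsplit, nsmul_eq_mul, h12]
  ring

lemma refl_cast {k i : ℕ} (h1 : 1 ≤ i) (hik : i ≤ 2 * k) :
    ((2 * k + 1 - i : ℕ) : ℝ) = 2 * (k:ℝ) + 1 - (i:ℝ) := by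
  rw [Nat.cast_sub (by omega)]
  push_cast; ring

lemma abcgg_even (k : ℕ) (hk : 1 ≤ k) :
    abcggIndex (chainTriangular (2 * k)) =
      2 * ∑ i ∈ Finset.Icc 1 k,
        (Real.sqrt ((2 * (i : ℝ) - 2) / (2 * (i : ℝ) - 1)) +
         Real.sqrt ((4 * (k : ℝ) - 2 * (i : ℝ)) / (4 * (k : ℝ) - 2 * (i : ℝ) + 1)) +
         Real.sqrt ((4 * (k : ℝ) - 2) /
           ((4 * (k : ℝ) - 2 * (i : ℝ) + 1) * (2 * (i : ℝ) - 1)))) := by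
  rw [abcgg_sum (by omega)]
  have hsplit : ∑ i ∈ Finset.Icc 1 (2 * k), gterm (2 * k) i =
      (∑ i ∈ Finset.Icc 1 k, gterm (2 * k) i) +
      ∑ i ∈ Finset.Ioc k (2 * k), gterm (2 * k) i := by
    rw [show Finset.Icc 1 (2*k) = Finset.Ioc 0 (2*k) from Finset.Icc_add_one_left_eq_Ioc 0 (2*k),
      show Finset.Icc 1 k = Finset.Ioc 0 k from Finset.Icc_add_one_left_eq_Ioc 0 k]
    rw [Finset.sum_Ioc_consecutive _ (by omega) (by omega)]
  rw [hsplit]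
  have hrefl : ∑ i ∈ Finset.Ioc k (2 * k), gterm (2 * k) i =
      ∑ i ∈ Finset.Icc 1 k, gterm (2 * k) (2 * k + 1 - i) := by
    refine Finset.sum_bij' (i := fun a (_ : a ∈ Finset.Ioc k (2*k)) => 2 * k + 1 - a)
      (j := fun a (_ : a ∈ Finset.Icc 1 k) => 2 * k + 1 - a) ?_ ?_ ?_ ?_ ?_
    · intro a ha; simp at ha ⊢; omega
    · intro a ha; simp at ha ⊢; omega
    · intro a ha; simp at ha ⊢; omega
    · intro a ha; simp at ha ⊢; omega
    · intro a ha
      congr 1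
      simp at ha; omega
  rw [hrefl, ← Finset.sum_add_distrib, Finset.mul_sum]
  refine Finset.sum_congr rfl fun i hi => ?_
  simp only [Finset.mem_Icc] at hi
  rw [gterm, gterm, refl_cast hi.1 (by omega)]
  push_cast
  ring_nf

lemma abcgg_odd (k : ℕ) (hk : 1 ≤ k) :
    abcggIndex (chainTriangular (2 * k + 1)) =
      2 * ∑ i ∈ Finset.Icc 1 k,
        (Real.sqrt ((2 * (i : ℝ) - 2) / (2 * (i : ℝ) - 1)) +
         Real.sqrt ((4 * (k : ℝ) - 2 * (i : ℝ) + 2) / (4 * (k : ℝ) - 2 * (i : ℝ) + 3)) +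
         Real.sqrt ((4 * (k : ℝ)) /
           ((4 * (k : ℝ) - 2 * (i : ℝ) + 3) * (2 * (i : ℝ) - 1)))) +
      2 * Real.sqrt (2 * (k : ℝ) / (2 * (k : ℝ) + 1)) +
      2 * Real.sqrt (k : ℝ) / (2 * (k : ℝ) + 1) := by
  rw [abcgg_sum (by omega)]
  have hsplit : ∑ i ∈ Finset.Icc 1 (2 * k + 1), gterm (2 * k + 1) i =
      ((∑ i ∈ Finset.Icc 1 k, gterm (2 * k + 1) i) + gterm (2 * k + 1) (k + 1)) +
      ∑ i ∈ Finset.Ioc (k + 1) (2 * k + 1), gterm (2 * k + 1) i := by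
    rw [show Finset.Icc 1 (2*k+1) = Finset.Ioc 0 (2*k+1) from Finset.Icc_add_one_left_eq_Ioc 0 (2*k+1),
      show Finset.Icc 1 k = Finset.Ioc 0 k from Finset.Icc_add_one_left_eq_Ioc 0 k]
    rw [← Finset.sum_Ioc_consecutive (fun i => gterm (2*k+1) i) (show 0 ≤ k+1 by omega)
      (show k+1 ≤ 2*k+1 by omega)]
    rw [← Finset.sum_Ioc_consecutive (fun i => gterm (2*k+1) i) (show 0 ≤ k by omega)
      (show k ≤ k+1 by omega)]
    rw [Nat.Ioc_succ_singleton, Finset.sum_singleton]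
  rw [hsplit]
  have hrefl : ∑ i ∈ Finset.Ioc (k + 1) (2 * k + 1), gterm (2 * k + 1) i =
      ∑ i ∈ Finset.Icc 1 k, gterm (2 * k + 1) (2 * k + 2 - i) := by
    refine Finset.sum_bij' (i := fun a (_ : a ∈ Finset.Ioc (k+1) (2*k+1)) => 2 * k + 2 - a)
      (j := fun a (_ : a ∈ Finset.Icc 1 k) => 2 * k + 2 - a) ?_ ?_ ?_ ?_ ?_
    · intro a ha; simp at ha ⊢; omega
    · intro a ha; simp at ha ⊢; omega
    · intro a ha; simp at ha ⊢; omega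
    · intro a ha; simp at ha ⊢; omega
    · intro a ha
      congr 1
      simp at ha; omega
  rw [hrefl]
  have hmid : gterm (2 * k + 1) (k + 1) =
      2 * Real.sqrt (2 * (k : ℝ) / (2 * (k : ℝ) + 1)) +
      2 * Real.sqrt (k : ℝ) / (2 * (k : ℝ) + 1) := by
    rw [gterm]
    push_cast
    have e1 : (2 * ((k:ℝ) + 1) - 2) / (2 * ((k:ℝ) + 1) - 1) = 2 * (k:ℝ) / (2 * (k:ℝ) + 1) := by
      ring
    have e2 : (2 * ((2*(k:ℝ) + 1)) - 2 * ((k:ℝ) + 1)) / (2 * ((2*(k:ℝ)+1)) - 2 * ((k:ℝ)+1) + 1) =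
        2 * (k:ℝ) / (2 * (k:ℝ) + 1) := by ring
    have e3 : (2 * ((2*(k:ℝ) + 1)) - 2) /
        ((2 * ((k:ℝ) + 1) - 1) * (2 * ((2*(k:ℝ)+1)) - 2 * ((k:ℝ)+1) + 1)) =
        4 * (k:ℝ) / ((2 * (k:ℝ) + 1)^2) := by ring
    rw [e1, e2, e3]
    have h4 : Real.sqrt (4 * (k:ℝ) / ((2 * (k:ℝ) + 1)^2)) = 2 * Real.sqrt (k:ℝ) / (2*(k:ℝ)+1) := by
      rw [show (4*(k:ℝ))/((2*(k:ℝ)+1)^2) = (2/(2*(k:ℝ)+1))^2 * k by field_simp; norm_num,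
        Real.sqrt_mul (by positivity), Real.sqrt_sq (by positivity)]
      ring
    rw [h4]
    ring
  rw [hmid]
  have hsum : (∑ i ∈ Finset.Icc 1 k, gterm (2*k+1) i) +
      (∑ i ∈ Finset.Icc 1 k, gterm (2*k+1) (2 * k + 2 - i)) =
      ∑ i ∈ Finset.Icc 1 k, 2 *
        (Real.sqrt ((2 * (i : ℝ) - 2) / (2 * (i : ℝ) - 1)) +
         Real.sqrt ((4 * (k : ℝ) - 2 * (i : ℝ) + 2) / (4 * (k : ℝ) - 2 * (i : ℝ) + 3)) +
         Real.sqrt ((4 * (k : ℝ)) /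
           ((4 * (k : ℝ) - 2 * (i : ℝ) + 3) * (2 * (i : ℝ) - 1)))) := by
    rw [← Finset.sum_add_distrib]
    refine Finset.sum_congr rfl fun i hi => ?_
    simp only [Finset.mem_Icc] at hi
    have hc : ((2 * k + 2 - i : ℕ) : ℝ) = 2 * (k:ℝ) + 2 - (i:ℝ) := by
      rw [Nat.cast_sub (by omega)]
      push_cast; ring
    rw [gterm, gterm, hc]
    push_cast
    ring_nf
  rw [← Finset.mul_sum] at hsum
  linarith [hsum]

end CT

theorem chainTriangular_indices (n : ℕ) :
    (∀ k : ℕ, 1 ≤ k →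
      (n = 2 * k →
        abcggIndex (chainTriangular n) =
          2 * ∑ i ∈ Finset.Icc 1 k,
            (Real.sqrt ((2 * (i : ℝ) - 2) / (2 * (i : ℝ) - 1)) +
             Real.sqrt ((4 * (k : ℝ) - 2 * (i : ℝ)) / (4 * (k : ℝ) - 2 * (i : ℝ) + 1)) +
             Real.sqrt ((4 * (k : ℝ) - 2) /
               ((4 * (k : ℝ) - 2 * (i : ℝ) + 1) * (2 * (i : ℝ) - 1))))) ∧
      (n = 2 * k + 1 →
        abcggIndex (chainTriangular n) =
          2 * ∑ i ∈ Finset.Icc 1 k,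
            (Real.sqrt ((2 * (i : ℝ) - 2) / (2 * (i : ℝ) - 1)) +
             Real.sqrt ((4 * (k : ℝ) - 2 * (i : ℝ) + 2) / (4 * (k : ℝ) - 2 * (i : ℝ) + 3)) +
             Real.sqrt ((4 * (k : ℝ)) /
               ((4 * (k : ℝ) - 2 * (i : ℝ) + 3) * (2 * (i : ℝ) - 1)))) +
          2 * Real.sqrt (2 * (k : ℝ) / (2 * (k : ℝ) + 1)) +
          2 * Real.sqrt (k : ℝ) / (2 * (k : ℝ) + 1))) ∧
    (2 ≤ n →
      abcIndex (chainTriangular n) =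
        (2 * (n : ℝ) + 2) / Real.sqrt 2 + ((n : ℝ) - 2) * Real.sqrt 6 / 4) := by
  refine ⟨fun k hk => ⟨fun hn => ?_, fun hn => ?_⟩, fun hn => ?_⟩
  · subst hn; exact CT.abcgg_even k hk
  · subst hn; exact CT.abcgg_odd k hk
  · exact CT.abc_sum hn
end
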